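/- arXiv:2209.13247 — 10 statements merged into one kernel-verified Lean document; each statement's English description precedes it below -/
import Mathlib

section
/- Let r be a positive integer and let a, b be positive real numbers. For any coloring c of the points of the Euclidean space E^(13r+4) with r colors (i.e., c maps points to Fin r), there exist four points p₁, p₂, p₃, p₄ forming a rectangle with side lengths a and b (that is, dist(p₁,p₂) = dist(p₃,p₄) = a, dist(p₂,p₃) = dist(p₄,p₁) = b, and dist(p₁,p₃) = dist(p₂,p₄) = √(a² + b²)) such that either c(p₁) = c(p₂) = c(p₃) = c(p₄) (a monochromatic rectangle) or c(p₁), c(p₂), c(p₃), c(p₄) are pairwise distinct (a rainbow rectangle). -/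
/-!
Embed the grid `Fin (6r+2) × Fin (7r+2)` in `E^(13r+4)` by `(u, v) ↦ (a/√2) e_u + (b/√2) e_v`:
two distinct rows and two distinct columns then span an `a × b` rectangle, so it suffices to find
a monochromatic or rainbow `2 × 2` subgrid in every `r`-colouring `χ` of the grid.

Suppose there is none. For two rows `u, u'`, the columns where they agree carry distinct colours
(no monochromatic rectangle), so there are at most `r` of them; on the other columns the pairs
`{χ u v, χ u' v}` pairwise meet (no rainbow rectangle), so they form a star or lie in a triangle.
Hence if no colour occurs more than `2r` times in `u` or in `u'`, there are at most
`r + 3 · 2r < 7r + 2` columns. So all rows but one have a colour occurring more than `2r` times,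
and by pigeonhole seven rows share such a colour `x`. Two rows have colour `x` in a common column
at most once, and double counting gives `7 (2r + 1) ≤ (7r + 2) + 21`, impossible for `r ≥ 3`.
For `r ≤ 2`, pigeonhole on the first `r + 1` rows already yields a monochromatic rectangle.
-/

open Finset Function

theorem Finset.exists_star_or_triangle {ι α : Type*} [DecidableEq α] {D : Finset ι}
    {p q : ι → α} (hpq : ∀ i ∈ D, p i ≠ q i)
    (hint : ∀ i ∈ D, ∀ j ∈ D, p i = p j ∨ p i = q j ∨ q i = p j ∨ q i = q j) :
    (∃ x, ∀ i ∈ D, p i = x ∨ q i = x) ∨ ∃ s : Finset α, #s ≤ 3 ∧ ∀ i ∈ D, p i ∈ s ∧ q i ∈ s := by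
  by_cases hstar : ∃ x, ∀ i ∈ D, p i = x ∨ q i = x
  · exact Or.inl hstar
  right
  push Not at hstar
  obtain rfl | ⟨i₀, hi₀⟩ := D.eq_empty_or_nonempty
  · exact ⟨∅, by simp, by simp⟩
  obtain ⟨i₁, hi₁, hp₁, hq₁⟩ := hstar (p i₀)
  obtain ⟨i₂, hi₂, hp₂, hq₂⟩ := hstar (q i₀)
  -- `i₁` avoids `p i₀`, so meets `i₀` in `q i₀`; `i₂` avoids `q i₀`, so it joins `p i₀` to the
  -- other end of `i₁`. An edge leaving this triangle would need its other end in all three.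
  refine ⟨{p i₀, p i₁, q i₁}, card_le_three, fun i hi => ?_⟩
  have := hint i hi i₀ hi₀
  have := hint i hi i₁ hi₁
  have := hint i hi i₂ hi₂
  have := hint i₁ hi₁ i₀ hi₀
  have := hint i₂ hi₂ i₀ hi₀
  have := hint i₂ hi₂ i₁ hi₁
  have := hpq i hi
  have := hpq i₂ hi₂
  simp only [mem_insert, mem_singleton]
  grind

theorem Nat.le_choose_two_add_one (n : ℕ) : n ≤ n.choose 2 + 1 := by
  induction n with
  | zero => simp
  | succ n ih => rw [Nat.choose_succ_succ', Nat.choose_one_right]; omega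

theorem Finset.sum_card_le_card_add_choose_two {ι κ : Type*} [Fintype κ] [DecidableEq ι]
    [DecidableEq κ] (U : Finset ι) (S : ι → Finset κ)
    (hS : ∀ u ∈ U, ∀ u' ∈ U, u ≠ u' → #(S u ∩ S u') ≤ 1) :
    ∑ u ∈ U, #(S u) ≤ Fintype.card κ + (#U).choose 2 := by
  set T : κ → Finset ι := fun v => {u ∈ U | v ∈ S u}
  have double_count : ∑ u ∈ U, #(S u) = ∑ v, #(T v) := by
    simpa [bipartiteAbove, bipartiteBelow, T] using
      sum_card_bipartiteAbove_eq_sum_card_bipartiteBelow (s := U) (t := univ) (fun u v => v ∈ S u)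
  -- Two columns share no pair of rows, since such rows would have two common columns.
  have disjoint : ((univ : Finset κ) : Set κ).PairwiseDisjoint fun v => (T v).powersetCard 2 := by
    intro v _ v' _ hv
    rw [Function.onFun, disjoint_left]
    intro P hP hP'
    obtain ⟨hPT, hP2⟩ := mem_powersetCard.mp hP
    obtain ⟨u, u', hu, rfl⟩ := card_eq_two.mp hP2
    have hPT' := (mem_powersetCard.mp hP').1
    simp only [insert_subset_iff, singleton_subset_iff, T, mem_filter] at hPT hPT'
    have : #({v, v'} : Finset κ) ≤ 1 :=
      (card_le_card fun w hw => by
        simp only [mem_insert, mem_singleton] at hw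
        rcases hw with rfl | rfl <;> simp [*]).trans (hS u hPT.1.1 u' hPT.2.1 hu)
    simp [card_pair hv] at this
  have pairs : ∑ v, (#(T v)).choose 2 ≤ (#U).choose 2 := by
    simp_rw [← card_powersetCard]
    rw [← card_biUnion disjoint]
    refine card_le_card fun P hP => ?_
    obtain ⟨v, -, hv⟩ := mem_biUnion.mp hP
    exact powersetCard_mono (filter_subset _ _) hv
  calc ∑ u ∈ U, #(S u) = ∑ v, #(T v) := double_count
    _ ≤ ∑ v, ((#(T v)).choose 2 + 1) := sum_le_sum fun v _ => Nat.le_choose_two_add_one _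
    _ ≤ Fintype.card κ + (#U).choose 2 := by
      rw [sum_add_distrib, sum_const, card_univ, smul_eq_mul, mul_one]; omega

def IsMonoOrRainbow {α : Type*} (w x y z : α) : Prop :=
  (w = x ∧ x = y ∧ y = z) ∨ (w ≠ x ∧ w ≠ y ∧ w ≠ z ∧ x ≠ y ∧ x ≠ z ∧ y ≠ z)

def NoMonoOrRainbowRect {ι κ α : Type*} (χ : ι → κ → α) : Prop :=
  ∀ u u' v v', u ≠ u' → v ≠ v' → ¬IsMonoOrRainbow (χ u v) (χ u' v) (χ u' v') (χ u v')

namespace NoMonoOrRainbowRect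

variable {ι ι' κ α : Type*} {χ : ι → κ → α} {u u' : ι} {v v' : κ}

theorem comp_left (h : NoMonoOrRainbowRect χ) {f : ι' → ι} (hf : Injective f) :
    NoMonoOrRainbowRect fun u v => χ (f u) v :=
  fun _ _ _ _ hu hv => h _ _ _ _ (hf.ne hu) hv

theorem ne_of_eq_of_eq (h : NoMonoOrRainbowRect χ) (hu : u ≠ u') (hv : v ≠ v')
    (h₁ : χ u v = χ u' v) (h₂ : χ u v' = χ u' v') : χ u v ≠ χ u v' :=
  fun h₃ => h u u' v v' hu hv (Or.inl ⟨h₁, by rw [← h₁, h₃, h₂], h₂.symm⟩)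

theorem eq_or_eq_of_ne_of_ne (h : NoMonoOrRainbowRect χ) (hu : u ≠ u') (hv : v ≠ v')
    (h₁ : χ u v ≠ χ u' v) (h₂ : χ u v' ≠ χ u' v') :
    χ u v = χ u v' ∨ χ u v = χ u' v' ∨ χ u' v = χ u v' ∨ χ u' v = χ u' v' := by
  by_contra! h₃
  exact h u u' v v' hu hv (Or.inr ⟨h₁, h₃.2.1, h₃.1, h₃.2.2.2, h₃.2.2.1, h₂.symm⟩)

theorem card_inter_le_one [Fintype κ] [DecidableEq κ] [DecidableEq α]
    (h : NoMonoOrRainbowRect χ) (hu : u ≠ u') (x : α) :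
    #(({v | χ u v = x} : Finset κ) ∩ ({v | χ u' v = x} : Finset κ)) ≤ 1 := by
  refine card_le_one.mpr fun v hv v' hv' => ?_
  simp only [mem_inter, mem_filter_univ] at hv hv'
  by_contra hvv
  exact h.ne_of_eq_of_eq hu hvv (hv.1.trans hv.2.symm) (hv'.1.trans hv'.2.symm)
    (hv.1.trans hv'.1.symm)

theorem card_le [Fintype ι] [Fintype κ] [Fintype α] [DecidableEq ι]
    (h : NoMonoOrRainbowRect χ) (hα : Fintype.card α < Fintype.card ι) :
    Fintype.card κ ≤ Fintype.card ι * (Fintype.card ι - 1) * Fintype.card α := by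
  have hpair (v : κ) : ∃ u u', u ≠ u' ∧ χ u v = χ u' v :=
    Fintype.exists_ne_map_eq_of_card_lt (χ · v) hα
  choose u u' huu' hχ using hpair
  calc Fintype.card κ ≤ #((univ : Finset ι).offDiag ×ˢ (univ : Finset α)) :=
        card_le_card_of_injOn (fun v => ((u v, u' v), χ (u v) v))
          (fun v _ => by simp [huu' v]) fun v _ v' _ hvv' => by
            simp only [Prod.mk.injEq] at hvv'
            obtain ⟨⟨hu, hu'⟩, hc⟩ := hvv'
            by_contra hv
            refine h.ne_of_eq_of_eq (huu' v) hv (hχ v) ?_ (hc.trans (by rw [hu]))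
            rw [hu, hu']; exact hχ v'
    _ = Fintype.card ι * (Fintype.card ι - 1) * Fintype.card α := by
      rw [card_product, offDiag_card, card_univ, card_univ, Nat.mul_sub_one]

section Counting

variable [Fintype κ] [DecidableEq α]

theorem card_agree_le [Fintype α] (h : NoMonoOrRainbowRect χ) (hu : u ≠ u') :
    #{v | χ u v = χ u' v} ≤ Fintype.card α :=
  card_le_card_of_injOn (χ u) (fun _ _ => mem_univ _) fun v hv v' hv' hvv' => by
    by_contra hne
    exact h.ne_of_eq_of_eq hu hne (mem_filter.mp hv).2 (mem_filter.mp hv').2 hvv'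

theorem card_disagree_le (h : NoMonoOrRainbowRect χ) (hu : u ≠ u') {m : ℕ}
    (hm : ∀ x, #{v | χ u v = x} ≤ m) (hm' : ∀ x, #{v | χ u' v = x} ≤ m) :
    #{v | χ u v ≠ χ u' v} ≤ 3 * m := by
  set D : Finset κ := {v | χ u v ≠ χ u' v}
  have hD (v) : v ∈ D ↔ χ u v ≠ χ u' v := by simp [D]
  have hint : ∀ v ∈ D, ∀ v' ∈ D,
      χ u v = χ u v' ∨ χ u v = χ u' v' ∨ χ u' v = χ u v' ∨ χ u' v = χ u' v' := by
    intro v hv v' hv'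
    obtain rfl | hvv' := eq_or_ne v v'
    · exact Or.inl rfl
    · exact h.eq_or_eq_of_ne_of_ne hu hvv' ((hD v).mp hv) ((hD v').mp hv')
  obtain ⟨x, hstar⟩ | ⟨s, hs, htri⟩ := exists_star_or_triangle (fun v hv => (hD v).mp hv) hint
  · classical
    calc #D ≤ #(({v | χ u v = x} : Finset κ) ∪ ({v | χ u' v = x} : Finset κ)) :=
          card_le_card fun v hv => by simpa using hstar v hv
      _ ≤ m + m := (card_union_le _ _).trans (add_le_add (hm x) (hm' x))
      _ ≤ 3 * m := by omega
  · calc #D ≤ m * #s := card_le_mul_card_image_of_maps_to (fun v hv => (htri v hv).1) m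
          fun x _ => (card_le_card (monotone_filter_left _ (subset_univ D))).trans (hm x)
      _ ≤ 3 * m := by rw [mul_comm]; exact Nat.mul_le_mul_right m hs

theorem exists_heavy_color [Fintype α] (h : NoMonoOrRainbowRect χ) (hu : u ≠ u') {m : ℕ}
    (hκ : Fintype.card α + 3 * m < Fintype.card κ) :
    (∃ x, m < #{v | χ u v = x}) ∨ ∃ x, m < #{v | χ u' v = x} := by
  by_contra! hle
  have := card_filter_add_card_filter_not (s := univ) fun v => χ u v = χ u' v
  have := h.card_agree_le hu
  have := h.card_disagree_le hu hle.1 hle.2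
  simp only [card_univ, ne_eq] at *
  omega

theorem exists_rows_heavy_same_color [Fintype ι] [Fintype α] (h : NoMonoOrRainbowRect χ)
    {m k : ℕ} (hκ : Fintype.card α + 3 * m < Fintype.card κ)
    (hι : Fintype.card α * k + 1 < Fintype.card ι) :
    ∃ x, ∃ U : Finset ι, #U = k + 1 ∧ ∀ u ∈ U, m < #{v | χ u v = x} := by
  classical
  set G : Finset ι := {u | ∃ x, m < #{v | χ u v = x}}
  have hGc : #Gᶜ ≤ 1 := card_le_one.mpr fun u hu u' hu' => by
    by_contra hne
    simp only [G, compl_filter, mem_filter_univ, not_exists, not_lt] at hu hu'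
    obtain ⟨x, hx⟩ | ⟨x, hx⟩ := h.exists_heavy_color hne hκ
    · exact (hu x).not_gt hx
    · exact (hu' x).not_gt hx
  have hG : Fintype.card α * k < #G := by
    have := card_compl G
    omega
  have : Nonempty α := by
    obtain ⟨u, hu⟩ := card_pos.mp (by omega : 0 < #G)
    exact ⟨(mem_filter.mp hu).2.choose⟩
  choose! w hw using fun u (hu : u ∈ G) => (mem_filter.mp hu).2
  obtain ⟨x, -, hx⟩ := exists_lt_card_fiber_of_mul_lt_card_of_maps_to (f := w) (t := univ)
    (fun _ _ => mem_univ _) (by rwa [card_univ])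
  obtain ⟨U, hUG, hU⟩ := exists_subset_card_eq hx
  refine ⟨x, U, hU, fun u hu => ?_⟩
  obtain ⟨huG, rfl⟩ := mem_filter.mp (hUG hu)
  exact hw u huG

end Counting

end NoMonoOrRainbowRect

theorem exists_mono_or_rainbow_grid_rectangle (r : ℕ)
    (χ : Fin (6 * r + 2) → Fin (7 * r + 2) → Fin r) :
    ∃ u u' v v', u ≠ u' ∧ v ≠ v' ∧ IsMonoOrRainbow (χ u v) (χ u' v) (χ u' v') (χ u v') := by
  by_contra! h
  change NoMonoOrRainbowRect χ at h
  obtain hr | hr := le_or_gt r 2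
  · have := (h.comp_left (Fin.castLE_injective (by omega : r + 1 ≤ 6 * r + 2))).card_le (by simp)
    simp only [Fintype.card_fin] at this
    interval_cases r <;> omega
  · obtain ⟨x, U, hU, hheavy⟩ :=
      h.exists_rows_heavy_same_color (m := 2 * r) (k := 6) (by simp; omega) (by simp; omega)
    have hupper := sum_card_le_card_add_choose_two U _ fun u _ u' _ hne => h.card_inter_le_one hne x
    have hlower := card_nsmul_le_sum U (fun u => #{v | χ u v = x}) (2 * r + 1) hheavy
    simp only [hU, smul_eq_mul, Fintype.card_fin] at hupper hlower
    have : (6 + 1).choose 2 = 21 := rfl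
    omega

section GridEmbedding

variable {ι κ : Type*} [Fintype ι] [Fintype κ] [DecidableEq ι] [DecidableEq κ]

theorem sum_sq_ite_sub_ite (u u' : ι) (x : ℝ) :
    ∑ i, ((if i = u then x else 0) - if i = u' then x else 0) ^ 2 =
      if u = u' then 0 else 2 * x ^ 2 := by
  split_ifs with h
  · simp [h]
  · rw [Fintype.sum_eq_add u u' h fun i hi => by simp [hi.1, hi.2]]
    simp [h, Ne.symm h]
    ring

noncomputable def gridPoint (a b : ℝ) (u : ι) (v : κ) : EuclideanSpace ℝ (ι ⊕ κ) :=
  EuclideanSpace.single (Sum.inl u) (a / √2) + EuclideanSpace.single (Sum.inr v) (b / √2)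

theorem dist_gridPoint (a b : ℝ) (u u' : ι) (v v' : κ) :
    dist (gridPoint a b u v) (gridPoint a b u' v') =
      √((if u = u' then 0 else a ^ 2) + (if v = v' then 0 else b ^ 2)) := by
  have two_mul_sq_div_sqrt_two (x : ℝ) : 2 * (x / √2) ^ 2 = x ^ 2 := by
    rw [div_pow, Real.sq_sqrt zero_le_two]; ring
  rw [EuclideanSpace.dist_eq, Fintype.sum_sum_type]
  simp only [gridPoint, PiLp.add_apply, PiLp.single_apply, Real.dist_eq, sq_abs, Sum.inl.injEq,
    Sum.inr.injEq, reduceCtorEq, if_false, add_zero, zero_add, sum_sq_ite_sub_ite]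
  split_ifs <;> simp [two_mul_sq_div_sqrt_two]

end GridEmbedding

theorem mono_or_rainbow_rectangle_general
    (r : ℕ) (a b : ℝ) (ha : 0 < a) (hb : 0 < b)
    (c : EuclideanSpace ℝ (Fin (13 * r + 4)) → Fin r) :
    ∃ p₁ p₂ p₃ p₄ : EuclideanSpace ℝ (Fin (13 * r + 4)),
      dist p₁ p₂ = a ∧ dist p₃ p₄ = a ∧
      dist p₂ p₃ = b ∧ dist p₄ p₁ = b ∧
      dist p₁ p₃ = Real.sqrt (a ^ 2 + b ^ 2) ∧
      dist p₂ p₄ = Real.sqrt (a ^ 2 + b ^ 2) ∧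
      ((c p₁ = c p₂ ∧ c p₂ = c p₃ ∧ c p₃ = c p₄) ∨
       (c p₁ ≠ c p₂ ∧ c p₁ ≠ c p₃ ∧ c p₁ ≠ c p₄ ∧
        c p₂ ≠ c p₃ ∧ c p₂ ≠ c p₄ ∧ c p₃ ≠ c p₄)) := by
  let φ : EuclideanSpace ℝ (Fin (6 * r + 2) ⊕ Fin (7 * r + 2)) ≃ₗᵢ[ℝ]
      EuclideanSpace ℝ (Fin (13 * r + 4)) :=
    LinearIsometryEquiv.piLpCongrLeft 2 ℝ ℝ (finSumFinEquiv.trans (finCongr (by ring)))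
  let p u v := φ (gridPoint a b u v)
  obtain ⟨u, u', v, v', hu, hv, hχ⟩ :=
    exists_mono_or_rainbow_grid_rectangle r fun u v => c (p u v)
  refine ⟨p u v, p u' v, p u' v', p u v', ?_, ?_, ?_, ?_, ?_, ?_, hχ⟩ <;>
    simp [p, dist_gridPoint, hu, hv, hu.symm, hv.symm, Real.sqrt_sq, ha.le, hb.le]

theorem mono_or_rainbow_rectangle
    (r : ℕ) (hr : 0 < r) (a b : ℝ) (ha : 0 < a) (hb : 0 < b)
    (c : EuclideanSpace ℝ (Fin (13 * r + 4)) → Fin r) :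
    ∃ p₁ p₂ p₃ p₄ : EuclideanSpace ℝ (Fin (13 * r + 4)),
      dist p₁ p₂ = a ∧ dist p₃ p₄ = a ∧
      dist p₂ p₃ = b ∧ dist p₄ p₁ = b ∧
      dist p₁ p₃ = Real.sqrt (a ^ 2 + b ^ 2) ∧
      dist p₂ p₄ = Real.sqrt (a ^ 2 + b ^ 2) ∧
      ((c p₁ = c p₂ ∧ c p₂ = c p₃ ∧ c p₃ = c p₄) ∨
       (c p₁ ≠ c p₂ ∧ c p₁ ≠ c p₃ ∧ c p₁ ≠ c p₄ ∧
        c p₂ ≠ c p₃ ∧ c p₂ ≠ c p₄ ∧ c p₃ ≠ c p₄)) :=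
  mono_or_rainbow_rectangle_general r a b ha hb c
end

section
/- Let r ≥ 3 be an integer and let a, b be real numbers with 0 < a ≤ b ≤ √3 · a. Then there exists a coloring c of the points of the Euclidean plane E^2 with r colors (c mapping points to Fin r) such that there is no monochromatic rectangle with side lengths a and b and no rainbow rectangle with side lengths a and b; that is, there do not exist four points p₁, p₂, p₃, p₄ with dist(p₁,p₂) = dist(p₃,p₄) = a, dist(p₂,p₃) = dist(p₄,p₁) = b, dist(p₁,p₃) = dist(p₂,p₄) = √(a² + b²) whose colors are either all equal or pairwise distinct. -/
set_option maxHeartbeats 1000000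

/-- If two reals have the same stripe color (floor mod 3) and are within 2w,
they are within w. -/
lemma stripe_close (w y z : ℝ) (hw : 0 < w)
    (h : ⌊y / w⌋ % 3 = ⌊z / w⌋ % 3) (hyz : |y - z| ≤ 2 * w) : |y - z| < w := by
  obtain ⟨k, hk⟩ : (3 : ℤ) ∣ ⌊y / w⌋ - ⌊z / w⌋ := by omega
  have hy1 : (⌊y / w⌋ : ℝ) * w ≤ y := by
    have := Int.floor_le (y / w)
    calc (⌊y / w⌋ : ℝ) * w ≤ (y / w) * w := by nlinarith
    _ = y := by field_simp
  have hy2 : y < ((⌊y / w⌋ : ℝ) + 1) * w := by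
    have := Int.lt_floor_add_one (y / w)
    calc y = (y / w) * w := by field_simp
    _ < ((⌊y / w⌋ : ℝ) + 1) * w := by nlinarith
  have hz1 : (⌊z / w⌋ : ℝ) * w ≤ z := by
    have := Int.floor_le (z / w)
    calc (⌊z / w⌋ : ℝ) * w ≤ (z / w) * w := by nlinarith
    _ = z := by field_simp
  have hz2 : z < ((⌊z / w⌋ : ℝ) + 1) * w := by
    have := Int.lt_floor_add_one (z / w)
    calc z = (z / w) * w := by field_simp
    _ < ((⌊z / w⌋ : ℝ) + 1) * w := by nlinarith
  have hkr : ((⌊y / w⌋ : ℝ) - (⌊z / w⌋ : ℝ)) = 3 * (k : ℝ) := by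
    have h' : ((⌊y / w⌋ - ⌊z / w⌋ : ℤ) : ℝ) = ((3 * k : ℤ) : ℝ) :=
      congrArg (Int.cast : ℤ → ℝ) hk
    push_cast at h'
    linarith
  rcases lt_trichotomy k 0 with hk0 | hk0 | hk0
  · have hk1 : (k : ℝ) ≤ -1 := by
      have : k ≤ -1 := by omega
      exact_mod_cast this
    have : z - y > 2 * w := by nlinarith
    have habs : z - y ≤ |y - z| := by
      rw [abs_sub_comm]; exact le_abs_self _
    linarith
  · subst hk0
    have hflr : (⌊y / w⌋ : ℝ) = (⌊z / w⌋ : ℝ) := by linarith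
    rw [abs_sub_lt_iff]
    constructor <;> nlinarith
  · have hk1 : (1 : ℝ) ≤ (k : ℝ) := by exact_mod_cast hk0
    have : y - z > 2 * w := by nlinarith
    linarith [le_abs_self (y - z)]

theorem coloring_avoiding_mono_and_rainbow_rectangle
    (r : ℕ) (hr : 3 ≤ r) (a b : ℝ) (ha : 0 < a) (hab : a ≤ b)
    (hb : b ≤ Real.sqrt 3 * a) :
    ∃ c : EuclideanSpace ℝ (Fin 2) → Fin r,
      ¬ ∃ p₁ p₂ p₃ p₄ : EuclideanSpace ℝ (Fin 2),
          dist p₁ p₂ = a ∧ dist p₃ p₄ = a ∧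
          dist p₂ p₃ = b ∧ dist p₄ p₁ = b ∧
          dist p₁ p₃ = Real.sqrt (a ^ 2 + b ^ 2) ∧
          dist p₂ p₄ = Real.sqrt (a ^ 2 + b ^ 2) ∧
          ((c p₁ = c p₂ ∧ c p₂ = c p₃ ∧ c p₃ = c p₄) ∨
           (c p₁ ≠ c p₂ ∧ c p₁ ≠ c p₃ ∧ c p₁ ≠ c p₄ ∧
            c p₂ ≠ c p₃ ∧ c p₂ ≠ c p₄ ∧ c p₃ ≠ c p₄)) := by
  have hb0 : 0 < b := lt_of_lt_of_le ha hab
  have hb3 : b ^ 2 ≤ 3 * a ^ 2 := by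
    have h3 : Real.sqrt 3 * a ≥ 0 := by positivity
    have : b ^ 2 ≤ (Real.sqrt 3 * a) ^ 2 := by nlinarith
    have hs : (Real.sqrt 3) ^ 2 = 3 := Real.sq_sqrt (by norm_num)
    nlinarith
  obtain ⟨w, hw_def⟩ : ∃ w : ℝ, w = b / 2 := ⟨b / 2, rfl⟩
  have hw : 0 < w := by rw [hw_def]; positivity
  have key : ∀ t : ℤ, (t % 3).toNat < r := by
    intro t
    have h1 := Int.emod_nonneg t (by norm_num : (3:ℤ) ≠ 0)
    have h2 := Int.emod_lt_of_pos t (by norm_num : (0:ℤ) < 3)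
    omega
  refine ⟨fun p => ⟨(⌊p 0 / w⌋ % 3).toNat, key _⟩, ?_⟩
  rintro ⟨p₁, p₂, p₃, p₄, h12, h34, h23, h41, h13, h24, hcol⟩
  -- squared distance formula
  have sqd : ∀ p q : EuclideanSpace ℝ (Fin 2),
      dist p q ^ 2 = (p 0 - q 0) ^ 2 + (p 1 - q 1) ^ 2 := by
    intro p q
    rw [EuclideanSpace.dist_eq, Real.sq_sqrt (by positivity)]
    simp [Fin.sum_univ_two, Real.dist_eq, sq_abs]
  have e12 : (p₁ 0 - p₂ 0) ^ 2 + (p₁ 1 - p₂ 1) ^ 2 = a ^ 2 := by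
    rw [← sqd, h12]
  have e23 : (p₂ 0 - p₃ 0) ^ 2 + (p₂ 1 - p₃ 1) ^ 2 = b ^ 2 := by
    rw [← sqd, h23]
  have e13 : (p₁ 0 - p₃ 0) ^ 2 + (p₁ 1 - p₃ 1) ^ 2 = a ^ 2 + b ^ 2 := by
    rw [← sqd, h13, Real.sq_sqrt (by positivity)]
  rcases hcol with ⟨hc1, hc2, _⟩ | ⟨h1, h2, h3, h4, h5, h6⟩
  · -- monochromatic case
    obtain ⟨u₀, hu₀⟩ : ∃ x : ℝ, x = p₁ 0 - p₂ 0 := ⟨_, rfl⟩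
    obtain ⟨u₁, hu₁⟩ : ∃ x : ℝ, x = p₁ 1 - p₂ 1 := ⟨_, rfl⟩
    obtain ⟨v₀, hv₀⟩ : ∃ x : ℝ, x = p₂ 0 - p₃ 0 := ⟨_, rfl⟩
    obtain ⟨v₁, hv₁⟩ : ∃ x : ℝ, x = p₂ 1 - p₃ 1 := ⟨_, rfl⟩
    rw [← hu₀, ← hu₁] at e12
    rw [← hv₀, ← hv₁] at e23
    have e13' : (u₀ + v₀) ^ 2 + (u₁ + v₁) ^ 2 = a ^ 2 + b ^ 2 := by
      have g0 : p₁ 0 - p₃ 0 = u₀ + v₀ := by rw [hu₀, hv₀]; ring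
      have g1 : p₁ 1 - p₃ 1 = u₁ + v₁ := by rw [hu₁, hv₁]; ring
      rw [← g0, ← g1]; exact e13
    have ortho : u₀ * v₀ + u₁ * v₁ = 0 := by linear_combination (e13' - e12 - e23) / 2
    have em1 : ⌊p₁ 0 / w⌋ % 3 = ⌊p₂ 0 / w⌋ % 3 := by
      have h' : (⌊p₁ 0 / w⌋ % 3).toNat = (⌊p₂ 0 / w⌋ % 3).toNat := congrArg Fin.val hc1
      have n1 := Int.emod_nonneg ⌊p₁ 0 / w⌋ (by norm_num : (3:ℤ) ≠ 0)
      have n2 := Int.emod_nonneg ⌊p₂ 0 / w⌋ (by norm_num : (3:ℤ) ≠ 0)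
      have h'' := congrArg (Nat.cast : ℕ → ℤ) h'
      rwa [Int.toNat_of_nonneg n1, Int.toNat_of_nonneg n2] at h''
    have em2 : ⌊p₂ 0 / w⌋ % 3 = ⌊p₃ 0 / w⌋ % 3 := by
      have h' : (⌊p₂ 0 / w⌋ % 3).toNat = (⌊p₃ 0 / w⌋ % 3).toNat := congrArg Fin.val hc2
      have n1 := Int.emod_nonneg ⌊p₂ 0 / w⌋ (by norm_num : (3:ℤ) ≠ 0)
      have n2 := Int.emod_nonneg ⌊p₃ 0 / w⌋ (by norm_num : (3:ℤ) ≠ 0)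
      have h'' := congrArg (Nat.cast : ℕ → ℤ) h'
      rwa [Int.toNat_of_nonneg n1, Int.toNat_of_nonneg n2] at h''
    have h2w : 2 * w = b := by rw [hw_def]; ring
    have hab2 : a ^ 2 ≤ b ^ 2 := by nlinarith
    have hub : u₀ ^ 2 ≤ b ^ 2 := by nlinarith [sq_nonneg u₁]
    have hvb : v₀ ^ 2 ≤ b ^ 2 := by nlinarith [sq_nonneg v₁]
    have hua : |u₀| ≤ 2 * w := by
      rw [h2w, abs_le]
      constructor <;> nlinarith [sq_nonneg (u₀ + b), sq_nonneg (u₀ - b)]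
    have hva : |v₀| ≤ 2 * w := by
      rw [h2w, abs_le]
      constructor <;> nlinarith [sq_nonneg (v₀ + b), sq_nonneg (v₀ - b)]
    have hu_lt : |u₀| < w := by
      have := stripe_close w (p₁ 0) (p₂ 0) hw em1 (by rwa [← hu₀] at *)
      rwa [← hu₀] at this
    have hv_lt : |v₀| < w := by
      have := stripe_close w (p₂ 0) (p₃ 0) hw em2 (by rwa [← hv₀] at *)
      rwa [← hv₀] at this
    rw [abs_lt] at hu_lt hv_lt
    have hu2 : u₀ ^ 2 < w ^ 2 := sq_lt_sq' hu_lt.1 hu_lt.2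
    have hv2 : v₀ ^ 2 < w ^ 2 := sq_lt_sq' hv_lt.1 hv_lt.2
    have hsq : u₀ ^ 2 * v₀ ^ 2 = u₁ ^ 2 * v₁ ^ 2 := by
      have h' : u₀ * v₀ = -(u₁ * v₁) := by linarith
      calc u₀ ^ 2 * v₀ ^ 2 = (u₀ * v₀) ^ 2 := by ring
        _ = (-(u₁ * v₁)) ^ 2 := by rw [h']
        _ = u₁ ^ 2 * v₁ ^ 2 := by ring
    have ell : u₀ ^ 2 * b ^ 2 + v₀ ^ 2 * a ^ 2 = a ^ 2 * b ^ 2 := by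
      linear_combination hsq + v₁ ^ 2 * e12 + (a ^ 2 - u₀ ^ 2) * e23
    have hw2 : w ^ 2 = b ^ 2 / 4 := by rw [hw_def]; ring
    have hbsq : 0 < b ^ 2 := by positivity
    have hasq : 0 < a ^ 2 := by positivity
    rw [hw2] at hu2 hv2
    have t1 := mul_lt_mul_of_pos_right hu2 hbsq
    have t2 := mul_lt_mul_of_pos_right hv2 hasq
    have t3 := mul_le_mul_of_nonneg_right hb3 (le_of_lt hbsq)
    linarith [ell, t1, t2, t3]
  · -- rainbow case: only 3 colors exist
    have lt3 : ∀ t : ℤ, (t % 3).toNat < 3 := by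
      intro t
      have h1 := Int.emod_nonneg t (by norm_num : (3:ℤ) ≠ 0)
      have h2 := Int.emod_lt_of_pos t (by norm_num : (0:ℤ) < 3)
      omega
    have d12 : (⌊p₁ 0 / w⌋ % 3).toNat ≠ (⌊p₂ 0 / w⌋ % 3).toNat :=
      fun h => h1 (Fin.ext h)
    have d13 : (⌊p₁ 0 / w⌋ % 3).toNat ≠ (⌊p₃ 0 / w⌋ % 3).toNat :=
      fun h => h2 (Fin.ext h)
    have d14 : (⌊p₁ 0 / w⌋ % 3).toNat ≠ (⌊p₄ 0 / w⌋ % 3).toNat :=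
      fun h => h3 (Fin.ext h)
    have d23 : (⌊p₂ 0 / w⌋ % 3).toNat ≠ (⌊p₃ 0 / w⌋ % 3).toNat :=
      fun h => h4 (Fin.ext h)
    have d24 : (⌊p₂ 0 / w⌋ % 3).toNat ≠ (⌊p₄ 0 / w⌋ % 3).toNat :=
      fun h => h5 (Fin.ext h)
    have d34 : (⌊p₃ 0 / w⌋ % 3).toNat ≠ (⌊p₄ 0 / w⌋ % 3).toNat :=
      fun h => h6 (Fin.ext h)
    have l1 := lt3 ⌊p₁ 0 / w⌋
    have l2 := lt3 ⌊p₂ 0 / w⌋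
    have l3 := lt3 ⌊p₃ 0 / w⌋
    have l4 := lt3 ⌊p₄ 0 / w⌋
    omega
end

section
/- Let r be a positive integer. For any coloring c of the points of the Euclidean space E^(r+4) with r colors (c mapping points to Fin r), either there exist four points p₁, p₂, p₃, p₄ with dist(p₁,p₂) = dist(p₂,p₃) = dist(p₃,p₄) = dist(p₄,p₁) = 1 and dist(p₁,p₃) = dist(p₂,p₄) = √2 all receiving the same color (a monochromatic unit square), or there exist three pairwise equidistant points at some positive common distance receiving pairwise distinct colors (a rainbow equilateral triangle). -/
/-!
Take a regular simplex of side `1` with `r + 5` vertices in `E^(r+4)`. If its vertices carry three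
colours, three of them form a rainbow triangle. Otherwise, by pigeonhole, four vertices
`x₀, …, x₃` share one colour `a`, and a fifth vertex `o` remains.

The six points `yᵢⱼ = xᵢ + xⱼ - o` form a regular octahedron of edge `1` in which `yᵢⱼ` and `yᵢₖ`
are adjacent; they form a unit triangle with `xᵢ`, and `xⱼ, xₖ, yᵢₖ, yᵢⱼ` is a unit square.
So two adjacent vertices of colour `a` give a monochromatic square, and two adjacent vertices of
distinct colours other than `a` give a rainbow triangle. Otherwise the vertices of colour `a` are
pairwise opposite, hence one of the three equatorial squares of the octahedron avoids `a`, and all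
its vertices share one colour.
-/

open EuclideanSpace Finset
open scoped RealInnerProductSpace

section Colorings

variable {P α : Type*} [PseudoMetricSpace P]

def HasMonoUnitSquare (c : P → α) : Prop :=
  ∃ p₁ p₂ p₃ p₄ : P,
    dist p₁ p₂ = 1 ∧ dist p₂ p₃ = 1 ∧ dist p₃ p₄ = 1 ∧ dist p₄ p₁ = 1 ∧
    dist p₁ p₃ = √2 ∧ dist p₂ p₄ = √2 ∧
    c p₁ = c p₂ ∧ c p₂ = c p₃ ∧ c p₃ = c p₄

def HasRainbowEquilateral (c : P → α) : Prop :=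
  ∃ (A B C : P) (d : ℝ), 0 < d ∧
    dist A B = d ∧ dist B C = d ∧ dist A C = d ∧
    c A ≠ c B ∧ c A ≠ c C ∧ c B ≠ c C

lemma eq_of_not_hasRainbowEquilateral {c : P → α} (hr : ¬HasRainbowEquilateral c) {A B C : P}
    (hAB : dist A B = 1) (hBC : dist B C = 1) (hAC : dist A C = 1)
    (hB : c B ≠ c A) (hC : c C ≠ c A) : c B = c C :=
  by_contra fun h => hr ⟨A, B, C, 1, one_pos, hAB, hBC, hAC, hB.symm, hC.symm, h⟩

lemma hasRainbowEquilateral_or_card_image_le_two [DecidableEq α] {ι : Type*} [Fintype ι]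
    (c : P → α) {p : ι → P} (hp : Pairwise fun i j => dist (p i) (p j) = 1) :
    HasRainbowEquilateral c ∨ #(univ.image (c ∘ p)) ≤ 2 := by
  refine or_iff_not_imp_right.2 fun h => ?_
  obtain ⟨_, hA, _, hB, _, hC, hAB, hAC, hBC⟩ := two_lt_card.1 (not_le.1 h)
  simp only [mem_image, mem_univ, true_and] at hA hB hC
  obtain ⟨i, rfl⟩ := hA
  obtain ⟨j, rfl⟩ := hB
  obtain ⟨k, rfl⟩ := hC
  exact ⟨p i, p j, p k, 1, one_pos, hp (ne_of_apply_ne _ hAB), hp (ne_of_apply_ne _ hBC),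
    hp (ne_of_apply_ne _ hAC), hAB, hAC, hBC⟩

end Colorings

lemma Finset.exists_injective_fin_mem_ne {ι : Type*} [Fintype ι] [LinearOrder ι]
    {s : Finset ι} {k : ℕ} (hks : k ≤ #s) (hk : k < Fintype.card ι) :
    ∃ (σ : Fin k → ι) (m : ι), σ.Injective ∧ (∀ i, σ i ∈ s) ∧ ∀ i, σ i ≠ m := by
  obtain ⟨t, hts, rfl⟩ := exists_subset_card_eq hks
  obtain ⟨m, -, hm⟩ := exists_mem_notMem_of_card_lt_card (s := t) (t := univ) (by simpa)
  exact ⟨t.orderEmbOfFin rfl, m, (t.orderEmbOfFin rfl).injective,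
    fun i => hts (t.orderEmbOfFin_mem rfl i), fun i h => hm (h ▸ t.orderEmbOfFin_mem rfl i)⟩

lemma EuclideanSpace.dist_sq_single_single_of_ne {ι : Type*} [Fintype ι] [DecidableEq ι]
    {i j : ι} (h : i ≠ j) (a b : ℝ) :
    dist (single i a : EuclideanSpace ℝ ι) (single j b) ^ 2 = a ^ 2 + b ^ 2 := by
  rw [dist_eq_norm, norm_sub_sq_real, EuclideanSpace.inner_single_left, PiLp.single_apply, if_neg h]
  simp

lemma EuclideanSpace.dist_sq_toLp_const_single {n : ℕ} (i : Fin n) (t s : ℝ) :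
    dist (WithLp.toLp 2 fun _ : Fin n => t) (single i s) ^ 2 = n * t ^ 2 - 2 * t * s + s ^ 2 := by
  rw [EuclideanSpace.dist_eq, Real.sq_sqrt (by positivity)]
  simp only [PiLp.single_apply, Real.dist_eq, sq_abs]
  have hsummand (j : Fin n) :
      (t - if j = i then s else 0) ^ 2 = t ^ 2 + if j = i then s ^ 2 - 2 * t * s else 0 := by
    split_ifs <;> ring
  simp only [hsummand, sum_add_distrib, sum_ite_eq', mem_univ, if_true, sum_const, card_univ,
    Fintype.card_fin, nsmul_eq_mul]
  ring

theorem exists_pairwise_dist_eq_one (n : ℕ) :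
    ∃ p : Fin (n + 1) → EuclideanSpace ℝ (Fin n), Pairwise fun i j => dist (p i) (p j) = 1 := by
  set s : ℝ := √2 / 2
  set u : ℝ := √(2 * n + 2)
  -- the root of `n t² - √2 t - 1/2 = 0`: it puts `(t, …, t)` at distance `1` from each `single i s`
  set t : ℝ := (√2 + u) / (2 * n)
  have h2 : √2 ^ 2 = 2 := Real.sq_sqrt (by norm_num)
  have hu : u ^ 2 = 2 * n + 2 := Real.sq_sqrt (by positivity)
  have hface (i j : Fin n) (h : i ≠ j) : dist (single i s) (single j s) = 1 := by
    rw [← pow_left_inj₀ dist_nonneg zero_le_one two_ne_zero, dist_sq_single_single_of_ne h]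
    linear_combination h2 / 2
  have happex (i : Fin n) : dist (WithLp.toLp 2 fun _ : Fin n => t) (single i s) = 1 := by
    have hn : (n : ℝ) ≠ 0 := by exact_mod_cast i.pos.ne'
    have ht : 2 * n * t = √2 + u := by simp only [t]; field_simp
    rw [← pow_left_inj₀ dist_nonneg zero_le_one two_ne_zero, dist_sq_toLp_const_single]
    refine mul_left_cancel₀ (mul_ne_zero four_ne_zero hn) ?_
    linear_combination (2 * n * t + u - √2) * ht + hu + (n - 1) * h2
  refine ⟨Fin.snoc (fun i => single i s) (WithLp.toLp 2 fun _ => t), fun i j hij => ?_⟩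
  induction i using Fin.lastCases <;> induction j using Fin.lastCases
  · exact absurd rfl hij
  · simp only [Fin.snoc_last, Fin.snoc_castSucc]
    exact happex _
  · simp only [Fin.snoc_last, Fin.snoc_castSucc]
    rw [dist_comm]
    exact happex _
  · simp only [Fin.snoc_castSucc]
    exact hface _ _ fun h => hij (h ▸ rfl)

section Octahedron

variable {F α : Type*} [NormedAddCommGroup F] {c : F → α} {a : α} {o : F} {x : Fin 4 → F}

lemma dist_self_add_sub (p q r : F) : dist p (p + q - r) = dist q r := by
  rw [add_sub_assoc, dist_self_add_right, dist_eq_norm]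

lemma eq_of_not_hasRainbowEquilateral_of_reflections (ho : ∀ i, dist (x i) o = 1)
    (hx : Pairwise fun i j => dist (x i) (x j) = 1) (hc : ∀ i, c (x i) = a)
    (hr : ¬HasRainbowEquilateral c) {i j k : Fin 4} (hjk : j ≠ k)
    (hj : c (x i + x j - o) ≠ a) (hk : c (x i + x k - o) ≠ a) :
    c (x i + x j - o) = c (x i + x k - o) :=
  eq_of_not_hasRainbowEquilateral hr (by rw [dist_self_add_sub, ho])
    (by rw [dist_sub_right, dist_add_left, hx hjk]) (by rw [dist_self_add_sub, ho])
    (by rwa [hc]) (by rwa [hc])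

variable [InnerProductSpace ℝ F]

lemma hasMonoUnitSquare_of_parallelogram {p₁ p₂ p₃ p₄ : F} (hpar : p₁ + p₃ = p₂ + p₄)
    (h₁₂ : dist p₁ p₂ = 1) (h₁₄ : dist p₁ p₄ = 1) (hperp : ⟪p₂ - p₁, p₄ - p₁⟫ = 0)
    (hc₁₂ : c p₁ = c p₂) (hc₂₃ : c p₂ = c p₃) (hc₃₄ : c p₃ = c p₄) : HasMonoUnitSquare c := by
  obtain rfl : p₃ = p₂ + p₄ - p₁ := eq_sub_of_add_eq' hpar
  have hv : ‖p₂ - p₁‖ = 1 := by rw [← dist_eq_norm', h₁₂]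
  have hw : ‖p₄ - p₁‖ = 1 := by rw [← dist_eq_norm', h₁₄]
  have hdiag {u : F} (hu : ‖u‖ ^ 2 = 2) : ‖u‖ = √2 := by rw [← hu, Real.sqrt_sq (norm_nonneg u)]
  refine ⟨p₁, p₂, p₂ + p₄ - p₁, p₄, h₁₂, ?_, ?_, by rw [dist_comm, h₁₄], ?_, ?_, hc₁₂, hc₂₃, hc₃₄⟩
  · rw [dist_eq_norm', show p₂ + p₄ - p₁ - p₂ = p₄ - p₁ by abel, hw]
  · rw [dist_eq_norm, show p₂ + p₄ - p₁ - p₄ = p₂ - p₁ by abel, hv]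
  · rw [dist_eq_norm', show p₂ + p₄ - p₁ - p₁ = (p₂ - p₁) + (p₄ - p₁) by abel]
    exact hdiag (by rw [norm_add_sq_real, hv, hw, hperp]; norm_num)
  · rw [dist_eq_norm, show p₂ - p₄ = (p₂ - p₁) - (p₄ - p₁) by abel]
    exact hdiag (by rw [norm_sub_sq_real, hv, hw, hperp]; norm_num)

lemma hasMonoUnitSquare_of_reflections_eq (ho : ∀ i, dist (x i) o = 1)
    (hx : Pairwise fun i j => dist (x i) (x j) = 1) (hc : ∀ i, c (x i) = a)
    {i j k : Fin 4} (hij : i ≠ j) (hik : i ≠ k) (hjk : j ≠ k)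
    (hj : c (x i + x j - o) = a) (hk : c (x i + x k - o) = a) : HasMonoUnitSquare c := by
  refine hasMonoUnitSquare_of_parallelogram (p₁ := x j) (p₂ := x k) (by abel) (hx hjk)
    (by rw [add_comm (x i), dist_self_add_sub, ho]) ?_
    ((hc j).trans (hc k).symm) ((hc k).trans hk.symm) (hk.trans hj.symm)
  rw [show x i + x j - o - x j = x i - o by abel]
  exact EuclideanGeometry.inner_vsub_vsub_of_dist_eq_of_dist_eq
    ((dist_comm o _).trans ((ho j).trans (hx hij).symm))
    ((dist_comm o _).trans ((ho k).trans (hx hik).symm))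

lemma hasMonoUnitSquare_or_hasRainbowEquilateral_of_reflections_ne (ho : ∀ i, dist (x i) o = 1)
    (hx : Pairwise fun i j => dist (x i) (x j) = 1) (hc : ∀ i, c (x i) = a)
    (h₀₁ : c (x 0 + x 1 - o) ≠ a) (h₀₂ : c (x 0 + x 2 - o) ≠ a)
    (h₃₂ : c (x 3 + x 2 - o) ≠ a) (h₃₁ : c (x 3 + x 1 - o) ≠ a) :
    HasMonoUnitSquare c ∨ HasRainbowEquilateral c := by
  by_cases hr : HasRainbowEquilateral c
  · exact .inr hr
  have e₂ := eq_of_not_hasRainbowEquilateral_of_reflections ho hx hc hr (i := 2) (j := 0) (k := 3)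
    (by decide) (by rwa [add_comm]) (by rwa [add_comm])
  rw [add_comm (x 2), add_comm (x 2)] at e₂
  refine .inl (hasMonoUnitSquare_of_parallelogram (p₁ := x 0 + x 1 - o) (p₂ := x 0 + x 2 - o)
    (p₃ := x 3 + x 2 - o) (p₄ := x 3 + x 1 - o) (by abel)
    (by rw [dist_sub_right, dist_add_left, hx (by decide : (1 : Fin 4) ≠ 2)])
    (by rw [dist_sub_right, dist_add_right, hx (by decide : (0 : Fin 4) ≠ 3)]) ?_
    (eq_of_not_hasRainbowEquilateral_of_reflections ho hx hc hr (by decide) h₀₁ h₀₂) e₂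
    (eq_of_not_hasRainbowEquilateral_of_reflections ho hx hc hr (by decide) h₃₂ h₃₁))
  rw [show x 0 + x 2 - o - (x 0 + x 1 - o) = x 2 - x 1 by abel,
    show x 3 + x 1 - o - (x 0 + x 1 - o) = x 3 - x 0 by abel]
  exact EuclideanGeometry.inner_vsub_vsub_of_dist_eq_of_dist_eq
    ((hx (by decide : (0 : Fin 4) ≠ 1)).trans (hx (by decide : (3 : Fin 4) ≠ 1)).symm)
    ((hx (by decide : (0 : Fin 4) ≠ 2)).trans (hx (by decide : (3 : Fin 4) ≠ 2)).symm)

lemma hasMonoUnitSquare_or_hasRainbowEquilateral_of_reflection_eq (ho : ∀ i, dist (x i) o = 1)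
    (hx : Pairwise fun i j => dist (x i) (x j) = 1) (hc : ∀ i, c (x i) = a)
    (h₀₁ : c (x 0 + x 1 - o) = a) : HasMonoUnitSquare c ∨ HasRainbowEquilateral c := by
  by_cases h₀₂ : c (x 0 + x 2 - o) = a
  · exact .inl (hasMonoUnitSquare_of_reflections_eq ho hx hc (i := 0) (j := 1) (k := 2)
      (by decide) (by decide) (by decide) h₀₁ h₀₂)
  by_cases h₀₃ : c (x 0 + x 3 - o) = a
  · exact .inl (hasMonoUnitSquare_of_reflections_eq ho hx hc (i := 0) (j := 1) (k := 3)
      (by decide) (by decide) (by decide) h₀₁ h₀₃)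
  by_cases h₁₂ : c (x 1 + x 2 - o) = a
  · exact .inl (hasMonoUnitSquare_of_reflections_eq ho hx hc (i := 1) (j := 0) (k := 2)
      (by decide) (by decide) (by decide) (by rwa [add_comm]) h₁₂)
  by_cases h₁₃ : c (x 1 + x 3 - o) = a
  · exact .inl (hasMonoUnitSquare_of_reflections_eq ho hx hc (i := 1) (j := 0) (k := 3)
      (by decide) (by decide) (by decide) (by rwa [add_comm]) h₁₃)
  -- the four neighbours of `y₀₁` form the square `y₀₂ y₀₃ y₁₃ y₁₂`
  exact hasMonoUnitSquare_or_hasRainbowEquilateral_of_reflections_ne (x := x ∘ ![0, 2, 3, 1])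
    (fun _ => ho _) (hx.comp_of_injective (by decide)) (fun _ => hc _) h₀₂ h₀₃ h₁₃ h₁₂

lemma hasMonoUnitSquare_or_hasRainbowEquilateral_of_mono_face (ho : ∀ i, dist (x i) o = 1)
    (hx : Pairwise fun i j => dist (x i) (x j) = 1) (hc : ∀ i, c (x i) = a) :
    HasMonoUnitSquare c ∨ HasRainbowEquilateral c := by
  have of_eq (τ : Fin 4 → Fin 4) (hτ : τ.Injective) (h : c (x (τ 0) + x (τ 1) - o) = a) :=
    hasMonoUnitSquare_or_hasRainbowEquilateral_of_reflection_eq (x := x ∘ τ)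
      (fun _ => ho _) (hx.comp_of_injective hτ) (fun _ => hc _) h
  by_cases h₀₁ : c (x 0 + x 1 - o) = a
  · exact of_eq id Function.injective_id h₀₁
  by_cases h₀₂ : c (x 0 + x 2 - o) = a
  · exact of_eq ![0, 2, 1, 3] (by decide) h₀₂
  by_cases h₃₂ : c (x 3 + x 2 - o) = a
  · exact of_eq ![3, 2, 0, 1] (by decide) h₃₂
  by_cases h₃₁ : c (x 3 + x 1 - o) = a
  · exact of_eq ![3, 1, 0, 2] (by decide) h₃₁
  exact hasMonoUnitSquare_or_hasRainbowEquilateral_of_reflections_ne ho hx hc h₀₁ h₀₂ h₃₂ h₃₁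

theorem hasMonoUnitSquare_or_hasRainbowEquilateral_of_pairwise_dist_eq_one [Fintype α]
    (c : F → α) {n : ℕ} {p : Fin n → F} (hp : Pairwise fun i j => dist (p i) (p j) = 1)
    (hn₅ : 5 ≤ n) (hn : 3 * min 2 (Fintype.card α) < n) :
    HasMonoUnitSquare c ∨ HasRainbowEquilateral c := by
  classical
  rcases hasRainbowEquilateral_or_card_image_le_two c hp with hr | hcolors
  · exact .inr hr
  obtain ⟨a, -, ha⟩ := exists_lt_card_fiber_of_mul_lt_card_of_maps_to (s := univ) (n := 3)
    (fun i _ => mem_image_of_mem (c ∘ p) (mem_univ i))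
    (by have := card_le_univ (univ.image (c ∘ p)); simp only [card_univ, Fintype.card_fin]; omega)
  obtain ⟨σ, m, hσ, hσa, hσm⟩ := exists_injective_fin_mem_ne ha (by rw [Fintype.card_fin]; omega)
  exact hasMonoUnitSquare_or_hasRainbowEquilateral_of_mono_face (x := p ∘ σ) (o := p m)
    (fun i => hp (hσm i)) (hp.comp_of_injective hσ) (fun i => (mem_filter.1 (hσa i)).2)

end Octahedron

theorem mono_unit_square_or_rainbow_equilateral_general
    (r : ℕ)
    (c : EuclideanSpace ℝ (Fin (r + 4)) → Fin r) :
    (∃ p₁ p₂ p₃ p₄ : EuclideanSpace ℝ (Fin (r + 4)),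
      dist p₁ p₂ = 1 ∧ dist p₂ p₃ = 1 ∧ dist p₃ p₄ = 1 ∧ dist p₄ p₁ = 1 ∧
      dist p₁ p₃ = Real.sqrt 2 ∧ dist p₂ p₄ = Real.sqrt 2 ∧
      c p₁ = c p₂ ∧ c p₂ = c p₃ ∧ c p₃ = c p₄) ∨
    (∃ (A B C : EuclideanSpace ℝ (Fin (r + 4))) (d : ℝ), 0 < d ∧
      dist A B = d ∧ dist B C = d ∧ dist A C = d ∧
      c A ≠ c B ∧ c A ≠ c C ∧ c B ≠ c C) := by
  obtain ⟨p, hp⟩ := exists_pairwise_dist_eq_one (r + 4)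
  exact hasMonoUnitSquare_or_hasRainbowEquilateral_of_pairwise_dist_eq_one c hp (by omega)
    (by rw [Fintype.card_fin]; omega)

theorem mono_unit_square_or_rainbow_equilateral
    (r : ℕ) (hr : 0 < r)
    (c : EuclideanSpace ℝ (Fin (r + 4)) → Fin r) :
    (∃ p₁ p₂ p₃ p₄ : EuclideanSpace ℝ (Fin (r + 4)),
      dist p₁ p₂ = 1 ∧ dist p₂ p₃ = 1 ∧ dist p₃ p₄ = 1 ∧ dist p₄ p₁ = 1 ∧
      dist p₁ p₃ = Real.sqrt 2 ∧ dist p₂ p₄ = Real.sqrt 2 ∧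
      c p₁ = c p₂ ∧ c p₂ = c p₃ ∧ c p₃ = c p₄) ∨
    (∃ (A B C : EuclideanSpace ℝ (Fin (r + 4))) (d : ℝ), 0 < d ∧
      dist A B = d ∧ dist B C = d ∧ dist A C = d ∧
      c A ≠ c B ∧ c A ≠ c C ∧ c B ≠ c C) :=
  mono_unit_square_or_rainbow_equilateral_general r c
end

section
/- Let r be a positive integer. For any coloring c of the points of the Euclidean space E^(r+3) with r colors (c mapping points to Fin r), either there exist three points A, B, C with dist(A,B) = dist(B,C) = 1 and dist(A,C) = √2 all receiving the same color (a monochromatic (1,1,√2)-triangle), or there exist three pairwise equidistant points at some positive common distance receiving pairwise distinct colors (a rainbow equilateral triangle). -/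
open RealInnerProductSpace

private lemma aux_norm_sub {E : Type*} [NormedAddCommGroup E] [InnerProductSpace ℝ E] {x y : E}
    (h : ⟪x, y⟫ = 0) (hx : ‖x‖ ^ 2 = 2⁻¹) (hy : ‖y‖ ^ 2 = 2⁻¹) : ‖x - y‖ = 1 := by
  have h1 : ‖x - y‖ ^ 2 = 1 := by rw [norm_sub_sq_real, h, hx, hy]; ring
  calc ‖x - y‖ = Real.sqrt (‖x - y‖ ^ 2) := (Real.sqrt_sq (norm_nonneg _)).symm
  _ = 1 := by rw [h1, Real.sqrt_one]

private lemma aux_norm_add {E : Type*} [NormedAddCommGroup E] [InnerProductSpace ℝ E] {x y : E}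
    (h : ⟪x, y⟫ = 0) (hx : ‖x‖ ^ 2 = 2⁻¹) (hy : ‖y‖ ^ 2 = 2⁻¹) : ‖x + y‖ = 1 := by
  have h1 : ‖x + y‖ ^ 2 = 1 := by rw [norm_add_sq_real, h, hx, hy]; ring
  calc ‖x + y‖ = Real.sqrt (‖x + y‖ ^ 2) := (Real.sqrt_sq (norm_nonneg _)).symm
  _ = 1 := by rw [h1, Real.sqrt_one]

private lemma key_lemma {n : ℕ} {α : Type*} (c : EuclideanSpace ℝ (Fin n) → α)
    (hmono : ¬ ∃ A B C : EuclideanSpace ℝ (Fin n),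
      dist A B = 1 ∧ dist B C = 1 ∧ dist A C = Real.sqrt 2 ∧ c A = c B ∧ c B = c C)
    (hrain : ¬ ∃ (A B C : EuclideanSpace ℝ (Fin n)) (d : ℝ), 0 < d ∧
      dist A B = d ∧ dist B C = d ∧ dist A C = d ∧ c A ≠ c B ∧ c A ≠ c C ∧ c B ≠ c C)
    (P Q : EuclideanSpace ℝ (Fin n)) (i j : Fin n) (hij : i ≠ j)
    (hPQ : dist P Q = Real.sqrt 2) (hi : P i = Q i) (hj : P j = Q j) :
    c P ≠ c Q := by
  intro hc
  set v : EuclideanSpace ℝ (Fin n) := (2:ℝ)⁻¹ • (P - Q) with hv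
  set di : EuclideanSpace ℝ (Fin n) := (Real.sqrt 2)⁻¹ • (EuclideanSpace.single i (1:ℝ)) with hdi
  set dj : EuclideanSpace ℝ (Fin n) := (Real.sqrt 2)⁻¹ • (EuclideanSpace.single j (1:ℝ)) with hdj
  have hs2 : Real.sqrt 2 ^ 2 = 2 := Real.sq_sqrt (by norm_num)
  have hPQn : ‖P - Q‖ = Real.sqrt 2 := by rw [← dist_eq_norm]; exact hPQ
  have hnv : ‖v‖ ^ 2 = 2⁻¹ := by
    rw [hv, norm_smul, hPQn, Real.norm_eq_abs, abs_of_pos (by norm_num : (0:ℝ) < 2⁻¹),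
      mul_pow, hs2]
    norm_num
  have hndi : ‖di‖ ^ 2 = 2⁻¹ := by
    rw [hdi, norm_smul, EuclideanSpace.norm_single, Real.norm_eq_abs, Real.norm_eq_abs,
      abs_of_pos (by positivity : (0:ℝ) < (Real.sqrt 2)⁻¹), abs_one, mul_one, inv_pow, hs2]
  have hndj : ‖dj‖ ^ 2 = 2⁻¹ := by
    rw [hdj, norm_smul, EuclideanSpace.norm_single, Real.norm_eq_abs, Real.norm_eq_abs,
      abs_of_pos (by positivity : (0:ℝ) < (Real.sqrt 2)⁻¹), abs_one, mul_one, inv_pow, hs2]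
  have hsubi : (P - Q) i = 0 := by
    simp only [PiLp.sub_apply, hi, sub_self]
  have hsubj : (P - Q) j = 0 := by
    simp only [PiLp.sub_apply, hj, sub_self]
  have hvdi : ⟪v, di⟫ = 0 := by
    rw [hv, hdi, real_inner_smul_left, real_inner_smul_right,
      EuclideanSpace.inner_single_right, hsubi]
    simp
  have hvdj : ⟪v, dj⟫ = 0 := by
    rw [hv, hdj, real_inner_smul_left, real_inner_smul_right,
      EuclideanSpace.inner_single_right, hsubj]
    simp
  have hdivv : ⟪di, v⟫ = 0 := by rw [real_inner_comm]; exact hvdi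
  have hdjv : ⟪dj, v⟫ = 0 := by rw [real_inner_comm]; exact hvdj
  have hdidj : ⟪di, dj⟫ = 0 := by
    rw [hdi, hdj, real_inner_smul_left, real_inner_smul_right,
      EuclideanSpace.inner_single_right, EuclideanSpace.single_apply]
    simp [hij.symm]
  have hdjdi : ⟪dj, di⟫ = 0 := by rw [real_inner_comm]; exact hdidj
  have hQ' : Q = P - v - v := by rw [hv]; module
  set A1 : EuclideanSpace ℝ (Fin n) := P - v + di with hA1
  set A2 : EuclideanSpace ℝ (Fin n) := P - v - di with hA2
  set B : EuclideanSpace ℝ (Fin n) := P - v + dj with hB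
  have dPA1 : dist P A1 = 1 := by
    rw [dist_eq_norm]
    have : P - A1 = v - di := by rw [hA1]; module
    rw [this]; exact aux_norm_sub hvdi hnv hndi
  have dA1Q : dist A1 Q = 1 := by
    rw [dist_eq_norm, hQ']
    have : A1 - (P - v - v) = di + v := by rw [hA1]; module
    rw [this]; exact aux_norm_add hdivv hndi hnv
  have dPA2 : dist P A2 = 1 := by
    rw [dist_eq_norm]
    have : P - A2 = v + di := by rw [hA2]; module
    rw [this]; exact aux_norm_add hvdi hnv hndi
  have dA2Q : dist A2 Q = 1 := by
    rw [dist_eq_norm, hQ']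
    have : A2 - (P - v - v) = v - di := by rw [hA2]; module
    rw [this]; exact aux_norm_sub hvdi hnv hndi
  have dPB : dist P B = 1 := by
    rw [dist_eq_norm]
    have : P - B = v - dj := by rw [hB]; module
    rw [this]; exact aux_norm_sub hvdj hnv hndj
  have dBQ : dist B Q = 1 := by
    rw [dist_eq_norm, hQ']
    have : B - (P - v - v) = dj + v := by rw [hB]; module
    rw [this]; exact aux_norm_add hdjv hndj hnv
  have dA1B : dist A1 B = 1 := by
    rw [dist_eq_norm]
    have : A1 - B = di - dj := by rw [hA1, hB]; module
    rw [this]; exact aux_norm_sub hdidj hndi hndj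
  have dBA2 : dist B A2 = 1 := by
    rw [dist_eq_norm]
    have : B - A2 = dj + di := by rw [hB, hA2]; module
    rw [this]; exact aux_norm_add hdjdi hndj hndi
  have dA1A2 : dist A1 A2 = Real.sqrt 2 := by
    rw [dist_eq_norm]
    have h0 : A1 - A2 = di + di := by rw [hA1, hA2]; module
    rw [h0]
    have h1 : ‖di + di‖ ^ 2 = 2 := by
      rw [norm_add_sq_real, real_inner_self_eq_norm_sq, hndi]; norm_num
    calc ‖di + di‖ = Real.sqrt (‖di + di‖ ^ 2) := (Real.sqrt_sq (norm_nonneg _)).symm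
    _ = Real.sqrt 2 := by rw [h1]
  -- color facts
  have hcA1 : c A1 ≠ c P := by
    intro h
    exact hmono ⟨P, A1, Q, dPA1, dA1Q, hPQ, h.symm, h.trans hc⟩
  have hcA2 : c A2 ≠ c P := by
    intro h
    exact hmono ⟨P, A2, Q, dPA2, dA2Q, hPQ, h.symm, h.trans hc⟩
  have hcB : c B ≠ c P := by
    intro h
    exact hmono ⟨P, B, Q, dPB, dBQ, hPQ, h.symm, h.trans hc⟩
  have hA1B : c A1 = c B := by
    by_contra h
    exact hrain ⟨P, A1, B, 1, one_pos, dPA1, dA1B, dPB, hcA1.symm, hcB.symm, h⟩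
  have hA2B : c A2 = c B := by
    by_contra h
    have dA2B : dist A2 B = 1 := by rw [dist_comm]; exact dBA2
    exact hrain ⟨P, A2, B, 1, one_pos, dPA2, dA2B, dPB, hcA2.symm, hcB.symm, h⟩
  exact hmono ⟨A1, B, A2, dA1B, dBA2, dA1A2, hA1B, hA2B.symm⟩


private lemma final_contra {n : ℕ} {α : Type*} (c : EuclideanSpace ℝ (Fin n) → α)
    (hmono : ¬ ∃ A B C : EuclideanSpace ℝ (Fin n),
      dist A B = 1 ∧ dist B C = 1 ∧ dist A C = Real.sqrt 2 ∧ c A = c B ∧ c B = c C)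
    (hrain : ¬ ∃ (A B C : EuclideanSpace ℝ (Fin n)) (d : ℝ), 0 < d ∧
      dist A B = d ∧ dist B C = d ∧ dist A C = d ∧ c A ≠ c B ∧ c A ≠ c C ∧ c B ≠ c C)
    (i0 i1 i2 i3 : Fin n) (h01 : i0 ≠ i1) (h20 : i2 ≠ i0) (h21 : i2 ≠ i1)
    (h30 : i3 ≠ i0) (h31 : i3 ≠ i1) (h23 : i2 ≠ i3) : False := by
  have hs2 : Real.sqrt 2 ^ 2 = 2 := Real.sq_sqrt (by norm_num)
  have hs6 : Real.sqrt 6 ^ 2 = 6 := Real.sq_sqrt (by norm_num)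
  let T1 : EuclideanSpace ℝ (Fin n) := 0
  let T2 : EuclideanSpace ℝ (Fin n) := EuclideanSpace.single i0 (Real.sqrt 2)
  let T3 : EuclideanSpace ℝ (Fin n) :=
    EuclideanSpace.single i0 (Real.sqrt 2 / 2) + EuclideanSpace.single i1 (Real.sqrt 6 / 2)
  have hnormT3 : ‖T3‖ ^ 2 = 2 := by
    show ‖EuclideanSpace.single i0 (Real.sqrt 2 / 2) +
        EuclideanSpace.single i1 (Real.sqrt 6 / 2)‖ ^ 2 = 2
    rw [norm_add_sq_real, EuclideanSpace.inner_single_left, EuclideanSpace.single_apply]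
    simp only [EuclideanSpace.norm_single, if_neg h01, mul_zero, map_zero, starRingEnd_apply]
    rw [Real.norm_eq_abs, Real.norm_eq_abs,
      abs_of_nonneg (by positivity : (0:ℝ) ≤ Real.sqrt 2 / 2),
      abs_of_nonneg (by positivity : (0:ℝ) ≤ Real.sqrt 6 / 2)]
    nlinarith [hs2, hs6]
  have hinnerT2T3 : ⟪T2, T3⟫ = 1 := by
    show ⟪EuclideanSpace.single i0 (Real.sqrt 2),
        EuclideanSpace.single i0 (Real.sqrt 2 / 2) +
        EuclideanSpace.single i1 (Real.sqrt 6 / 2)⟫ = 1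
    rw [inner_add_right, EuclideanSpace.inner_single_left,
      EuclideanSpace.inner_single_left, EuclideanSpace.single_apply,
      EuclideanSpace.single_apply]
    simp only [if_pos rfl, if_neg h01, if_true, eq_self_iff_true, mul_zero, add_zero,
      RCLike.star_def, starRingEnd_apply, star_trivial]
    nlinarith [hs2]
  have hnormT2 : ‖T2‖ = Real.sqrt 2 := by
    show ‖EuclideanSpace.single i0 (Real.sqrt 2)‖ = Real.sqrt 2
    rw [EuclideanSpace.norm_single, Real.norm_eq_abs, abs_of_nonneg (Real.sqrt_nonneg 2)]
  have d12 : dist T1 T2 = Real.sqrt 2 := by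
    rw [dist_eq_norm, zero_sub, norm_neg, hnormT2]
  have d13 : dist T1 T3 = Real.sqrt 2 := by
    rw [dist_eq_norm, zero_sub, norm_neg]
    calc ‖T3‖ = Real.sqrt (‖T3‖ ^ 2) := (Real.sqrt_sq (norm_nonneg _)).symm
    _ = Real.sqrt 2 := by rw [hnormT3]
  have d23 : dist T2 T3 = Real.sqrt 2 := by
    rw [dist_eq_norm]
    have h1 : ‖T2 - T3‖ ^ 2 = 2 := by
      rw [norm_sub_sq_real, hinnerT2T3, hnormT2, hs2, hnormT3]; ring
    calc ‖T2 - T3‖ = Real.sqrt (‖T2 - T3‖ ^ 2) := (Real.sqrt_sq (norm_nonneg _)).symm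
    _ = Real.sqrt 2 := by rw [h1]
  have e12 : T1 i2 = T2 i2 := by
    show (0:ℝ) = EuclideanSpace.single i0 (Real.sqrt 2) i2
    simp [EuclideanSpace.single_apply, h20]
  have e13 : T1 i3 = T2 i3 := by
    show (0:ℝ) = EuclideanSpace.single i0 (Real.sqrt 2) i3
    simp [EuclideanSpace.single_apply, h30]
  have f12 : T1 i2 = T3 i2 := by
    show (0:ℝ) = (EuclideanSpace.single i0 (Real.sqrt 2 / 2) +
      EuclideanSpace.single i1 (Real.sqrt 6 / 2)) i2
    simp [PiLp.add_apply, EuclideanSpace.single_apply, h20, h21]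
  have f13 : T1 i3 = T3 i3 := by
    show (0:ℝ) = (EuclideanSpace.single i0 (Real.sqrt 2 / 2) +
      EuclideanSpace.single i1 (Real.sqrt 6 / 2)) i3
    simp [PiLp.add_apply, EuclideanSpace.single_apply, h30, h31]
  have g12 : T2 i2 = T3 i2 := by rw [← e12]; exact f12
  have g13 : T2 i3 = T3 i3 := by rw [← e13]; exact f13
  have hne12 : c T1 ≠ c T2 := key_lemma c hmono hrain T1 T2 i2 i3 h23 d12 e12 e13
  have hne13 : c T1 ≠ c T3 := key_lemma c hmono hrain T1 T3 i2 i3 h23 d13 f12 f13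
  have hne23 : c T2 ≠ c T3 := key_lemma c hmono hrain T2 T3 i2 i3 h23 d23 g12 g13
  exact hrain ⟨T1, T2, T3, Real.sqrt 2, Real.sqrt_pos.mpr (by norm_num),
    d12, d23, d13, hne12, hne13, hne23⟩

theorem mono_isoceles_right_triangle_or_rainbow_equilateral
    (r : ℕ) (hr : 0 < r)
    (c : EuclideanSpace ℝ (Fin (r + 3)) → Fin r) :
    (∃ A B C : EuclideanSpace ℝ (Fin (r + 3)),
      dist A B = 1 ∧ dist B C = 1 ∧ dist A C = Real.sqrt 2 ∧
      c A = c B ∧ c B = c C) ∨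
    (∃ (A B C : EuclideanSpace ℝ (Fin (r + 3))) (d : ℝ), 0 < d ∧
      dist A B = d ∧ dist B C = d ∧ dist A C = d ∧
      c A ≠ c B ∧ c A ≠ c C ∧ c B ≠ c C) := by
  by_cases hm : ∃ A B C : EuclideanSpace ℝ (Fin (r + 3)),
      dist A B = 1 ∧ dist B C = 1 ∧ dist A C = Real.sqrt 2 ∧ c A = c B ∧ c B = c C
  · exact Or.inl hm
  by_cases hrain : ∃ (A B C : EuclideanSpace ℝ (Fin (r + 3))) (d : ℝ), 0 < d ∧
      dist A B = d ∧ dist B C = d ∧ dist A C = d ∧ c A ≠ c B ∧ c A ≠ c C ∧ c B ≠ c C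
  · exact Or.inr hrain
  exact absurd (final_contra c hm hrain ⟨0, by omega⟩ ⟨1, by omega⟩ ⟨2, by omega⟩ ⟨3, by omega⟩
    (by simp [Fin.ext_iff]) (by simp [Fin.ext_iff]) (by simp [Fin.ext_iff])
    (by simp [Fin.ext_iff]) (by simp [Fin.ext_iff]) (by simp [Fin.ext_iff])) (not_false)
end

section
/- Let r be a positive integer. For any coloring c : Fin (2r+5) × Fin (11r+1) → Fin r of the ((2r+5) × (11r+1))-grid, there exist indices i ≠ i' in Fin (2r+5) and j ≠ j' in Fin (11r+1) such that the four grid points (i,j), (i',j), (i,j'), (i',j') either all receive the same color (a monochromatic grid rectangle) or receive four pairwise distinct colors (a rainbow grid rectangle). -/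
open Finset

namespace MonoRainbow

attribute [local instance] Classical.propDecidable

variable {r : ℕ}

/-- Bundled consequences of having no monochromatic and no rainbow rectangle. -/
structure Hyp (r : ℕ) (c : Fin (2*r+5) × Fin (11*r+1) → Fin r) : Prop where
  mono : ∀ {i i' : Fin (2*r+5)} {j j' : Fin (11*r+1)} (w : Fin r), i ≠ i' → j ≠ j' →
    c (i,j) = w → c (i',j) = w → c (i,j') = w → c (i',j') = w → False
  rain : ∀ {i i' : Fin (2*r+5)} {j j' : Fin (11*r+1)}, i ≠ i' → j ≠ j' →
    c (i,j) = c (i',j) ∨ c (i,j) = c (i,j') ∨ c (i,j) = c (i',j') ∨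
    c (i',j) = c (i,j') ∨ c (i',j) = c (i',j') ∨ c (i,j') = c (i',j')

/-- number of cells of colour `w` in column `j` -/
def cnt (c : Fin (2*r+5) × Fin (11*r+1) → Fin r) (j : Fin (11*r+1)) (w : Fin r) : ℕ :=
  (univ.filter fun i => c (i,j) = w).card

/-- the "heavy" threshold -/
def vth (r : ℕ) : ℕ := (r+7)/2

/-- a column is heavy if some colour appears at least `vth r` times in it -/
def IsV (c : Fin (2*r+5) × Fin (11*r+1) → Fin r) (j : Fin (11*r+1)) : Prop :=
  ∃ w, vth r ≤ cnt c j w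

/-- the set of colours appearing at least twice in column `j` -/
def Mset (c : Fin (2*r+5) × Fin (11*r+1) → Fin r) (j : Fin (11*r+1)) : Finset (Fin r) :=
  univ.filter fun w => 2 ≤ cnt c j w

section
variable {c : Fin (2*r+5) × Fin (11*r+1) → Fin r}

lemma sum_cnt (j : Fin (11*r+1)) : ∑ w, cnt c j w = 2*r+5 := by
  have h := Finset.card_eq_sum_card_fiberwise
      (f := fun i : Fin (2*r+5) => c (i, j)) (s := univ) (t := univ)
      (fun x _ => mem_univ _)
  have h2 : (univ : Finset (Fin (2*r+5))).card = 2*r+5 := by simp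
  rw [h2] at h
  exact h.symm

lemma mono_pair (H : Hyp r c) {j j' : Fin (11*r+1)} (hjj : j ≠ j') (w : Fin r) :
    (univ.filter fun i => c (i,j) = w ∧ c (i,j') = w).card ≤ 1 := by
  refine Finset.card_le_one.2 ?_
  intro i hi i' hi'
  simp only [mem_filter] at hi hi'
  by_contra hne
  exact H.mono w hne hjj hi.2.1 hi'.2.1 hi.2.2 hi'.2.2

lemma offdiag_card (H : Hyp r c) {j j' : Fin (11*r+1)} (hjj : j ≠ j') :
    r+5 ≤ (univ.filter fun i => c (i,j) ≠ c (i,j')).card := by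
  have hD : (univ.filter fun i => c (i,j) = c (i,j')).card ≤ r := by
    have hinj : Set.InjOn (fun i => c (i,j))
        ((univ.filter fun i => c (i,j) = c (i,j')) : Finset (Fin (2*r+5))) := by
      intro a ha b hb hab
      simp only [coe_filter, Set.mem_setOf_eq, mem_univ, true_and] at ha hb
      by_contra hne
      have hab' : c (a,j) = c (b,j) := hab
      exact H.mono (c (a,j)) hne hjj rfl hab'.symm ha.symm (hb.symm.trans hab'.symm)
    calc (univ.filter fun i => c (i,j) = c (i,j')).card
        ≤ (univ : Finset (Fin r)).card :=
          Finset.card_le_card_of_injOn _ (fun a _ => mem_univ _) hinj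
      _ = r := by simp
  have hsplit := Finset.card_filter_add_card_filter_not
      (s := (univ : Finset (Fin (2*r+5)))) (p := fun i => c (i,j) = c (i,j'))
  have h2 : (univ : Finset (Fin (2*r+5))).card = 2*r+5 := by simp
  simp only [ne_eq]
  omega

lemma star_V (H : Hyp r c) {j j' : Fin (11*r+1)} (hjj : j ≠ j') (p : Fin r)
    (hp : ∀ i, c (i,j) ≠ c (i,j') → c (i,j) = p ∨ c (i,j') = p) :
    IsV c j ∨ IsV c j' := by
  classical
  set used : Finset (Fin r) := univ.filter fun w => cnt c j w ≠ 0 with hused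
  have hsum_used : ∑ w ∈ used, cnt c j w = 2*r+5 := by
    rw [hused, Finset.sum_filter_ne_zero, sum_cnt]
  have hcard_used : used.card ≤ r := by
    calc used.card ≤ (univ : Finset (Fin r)).card := card_filter_le _ _
      _ = r := by simp
  set T : Finset (Fin (2*r+5)) := univ.filter fun i => c (i,j) ≠ p ∧ c (i,j') = p with hT
  have hTcard : T.card ≤ cnt c j' p := by
    apply card_le_card
    intro i hi
    rw [hT, mem_filter] at hi
    exact mem_filter.2 ⟨mem_univ _, hi.2.2⟩
  have hfib : ∀ w ∈ used.erase p, cnt c j w - 1 ≤ (T.filter fun i => c (i,j) = w).card := by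
    intro w hw
    have hwp : w ≠ p := (mem_erase.1 hw).1
    have hsub : ((univ.filter fun i => c (i,j) = w).filter fun i => ¬ (c (i,j') = w))
        ⊆ T.filter fun i => c (i,j) = w := by
      intro i hi
      rw [mem_filter, mem_filter] at hi
      obtain ⟨⟨-, hiw⟩, hine⟩ := hi
      have hoff : c (i,j) ≠ c (i,j') := by rw [hiw]; exact fun hcc => hine hcc.symm
      rcases hp i hoff with h | h
      · exact absurd (by rw [← hiw, h]) hwp.symm
      · refine mem_filter.2 ⟨?_, hiw⟩
        refine mem_filter.2 ⟨mem_univ _, ?_, h⟩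
        rw [hiw]; exact hwp
    have hone : ((univ.filter fun i => c (i,j) = w).filter fun i => c (i,j') = w).card ≤ 1 := by
      have : ((univ.filter fun i => c (i,j) = w).filter fun i => c (i,j') = w)
          = univ.filter fun i => c (i,j) = w ∧ c (i,j') = w := by
        rw [filter_filter]
      rw [this]
      exact mono_pair H hjj w
    have hsplit := Finset.card_filter_add_card_filter_not
        (s := univ.filter fun i => c (i,j) = w) (p := fun i => c (i,j') = w)
    have hle := card_le_card hsub
    have hcnt : (univ.filter fun i => c (i,j) = w).card = cnt c j w := rfl
    omega
  have hTfib : T.card = ∑ w, (T.filter fun i => c (i,j) = w).card :=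
    Finset.card_eq_sum_card_fiberwise (fun x _ => mem_univ _)
  have hge : ∑ w ∈ used.erase p, (cnt c j w - 1) ≤ T.card := by
    rw [hTfib]
    calc ∑ w ∈ used.erase p, (cnt c j w - 1)
        ≤ ∑ w ∈ used.erase p, (T.filter fun i => c (i,j) = w).card :=
          Finset.sum_le_sum hfib
      _ ≤ ∑ w, (T.filter fun i => c (i,j) = w).card :=
          Finset.sum_le_sum_of_subset (subset_univ _)
  have hsum2 : ∑ w ∈ used.erase p, (cnt c j w - 1) + (used.erase p).card
      = ∑ w ∈ used.erase p, cnt c j w := by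
    have hc : ∑ w ∈ used.erase p, cnt c j w
        = ∑ w ∈ used.erase p, ((cnt c j w - 1) + 1) := by
      apply Finset.sum_congr rfl
      intro w hw
      have : cnt c j w ≠ 0 := (mem_filter.1 (mem_of_mem_erase hw)).2
      omega
    rw [hc, Finset.sum_add_distrib, Finset.sum_const, smul_eq_mul, mul_one]
  have hv : vth r = (r+7)/2 := rfl
  by_cases hpu : p ∈ used
  · have e2 : ∑ w ∈ used.erase p, cnt c j w + cnt c j p = 2*r+5 := by
      rw [Finset.sum_erase_add _ _ hpu]; exact hsum_used
    have e3 : (used.erase p).card + 1 = used.card := Finset.card_erase_add_one hpu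
    by_cases hx : vth r ≤ cnt c j p
    · exact Or.inl ⟨p, hx⟩
    · refine Or.inr ⟨p, ?_⟩
      omega
  · have e2' : used.erase p = used := Finset.erase_eq_of_notMem hpu
    rw [e2'] at hge hsum2
    refine Or.inr ⟨p, ?_⟩
    omega

lemma pair_P (H : Hyp r c) {j j' : Fin (11*r+1)} (hjj : j ≠ j')
    (hj : ¬ IsV c j) (hj' : ¬ IsV c j') :
    ∃ P : Finset (Fin r), P.card = 3 ∧
      ∀ i, c (i,j) ≠ c (i,j') → c (i,j) ∈ P ∧ c (i,j') ∈ P := by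
  classical
  have hO := offdiag_card H hjj
  have hOne : (univ.filter fun i => c (i,j) ≠ c (i,j')).Nonempty := by
    apply card_pos.1
    omega
  have meet : ∀ i i' : Fin (2*r+5), c (i,j) ≠ c (i,j') → c (i',j) ≠ c (i',j') →
      (c (i,j) = c (i',j) ∨ c (i,j) = c (i',j') ∨ c (i,j') = c (i',j) ∨
       c (i,j') = c (i',j')) := by
    intro i i' hi hi'
    rcases eq_or_ne i i' with rfl | hne
    · exact Or.inl rfl
    · rcases H.rain hne hjj with h | h | h | h | h | h
      · exact Or.inl h
      · exact absurd h hi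
      · exact Or.inr (Or.inl h)
      · exact Or.inr (Or.inr (Or.inl h.symm))
      · exact absurd h hi'
      · exact Or.inr (Or.inr (Or.inr h))
  by_cases hstar : ∃ p, ∀ i, c (i,j) ≠ c (i,j') → c (i,j) = p ∨ c (i,j') = p
  · obtain ⟨p, hp⟩ := hstar
    rcases star_V H hjj p hp with h | h
    · exact absurd h hj
    · exact absurd h hj'
  · push_neg at hstar
    obtain ⟨i₀, hi₀mem⟩ := hOne
    have hi₀ : c (i₀,j) ≠ c (i₀,j') := (mem_filter.1 hi₀mem).2
    set a := c (i₀,j) with ha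
    set b := c (i₀,j') with hb
    have hab : a ≠ b := hi₀
    obtain ⟨ia, hiaO, hia1, hia2⟩ := hstar a
    obtain ⟨ib, hibO, hib1, hib2⟩ := hstar b
    -- the edge of ia contains b
    have h1 := meet i₀ ia hi₀ hiaO
    rw [← ha, ← hb] at h1
    have hEa : c (ia,j) = b ∨ c (ia,j') = b := by
      rcases h1 with h | h | h | h
      · exact absurd h.symm hia1
      · exact absurd h.symm hia2
      · exact Or.inl h.symm
      · exact Or.inr h.symm
    obtain ⟨x, hxa, hxb, hEa'⟩ : ∃ x, x ≠ a ∧ x ≠ b ∧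
        ((c (ia,j) = b ∧ c (ia,j') = x) ∨ (c (ia,j) = x ∧ c (ia,j') = b)) := by
      rcases hEa with h | h
      · refine ⟨c (ia,j'), hia2, ?_, Or.inl ⟨h, rfl⟩⟩
        rw [← h]; exact fun hcc => hiaO hcc.symm
      · refine ⟨c (ia,j), hia1, ?_, Or.inr ⟨rfl, h⟩⟩
        rw [← h]; exact hiaO
    -- the edge of ib contains a
    have h2 := meet i₀ ib hi₀ hibO
    rw [← ha, ← hb] at h2
    have hEb : c (ib,j) = a ∨ c (ib,j') = a := by
      rcases h2 with h | h | h | h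
      · exact Or.inl h.symm
      · exact Or.inr h.symm
      · exact absurd h.symm hib1
      · exact absurd h.symm hib2
    obtain ⟨y, hya, hyb, hEb'⟩ : ∃ y, y ≠ a ∧ y ≠ b ∧
        ((c (ib,j) = a ∧ c (ib,j') = y) ∨ (c (ib,j) = y ∧ c (ib,j') = a)) := by
      rcases hEb with h | h
      · refine ⟨c (ib,j'), ?_, hib2, Or.inl ⟨h, rfl⟩⟩
        rw [← h]; exact fun hcc => hibO hcc.symm
      · refine ⟨c (ib,j), ?_, hib1, Or.inr ⟨rfl, h⟩⟩
        rw [← h]; exact hibO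
    -- x = y
    have hxy : x = y := by
      have h3 := meet ia ib hiaO hibO
      rcases hEa' with ⟨e1, e2⟩ | ⟨e1, e2⟩ <;> rcases hEb' with ⟨f1, f2⟩ | ⟨f1, f2⟩ <;>
        rcases h3 with h | h | h | h <;> simp only [e1, e2, f1, f2] at h <;>
        first
          | exact h
          | exact absurd h.symm hab
          | exact absurd h.symm hyb
          | exact absurd h hxa
          | exact absurd h hab
          | exact absurd h hxb
          | exact absurd h.symm hya
          | exact h.symm
    subst hxy
    refine ⟨{a, b, x}, ?_, ?_⟩
    · rw [card_insert_of_notMem (by simp [hab, hxa.symm]),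
        card_insert_of_notMem (by simp [hxb.symm]), card_singleton]
    · intro i hioff
      have m0 := meet i i₀ hioff hi₀
      rw [← ha, ← hb] at m0
      have ma := meet i ia hioff hiaO
      have mb := meet i ib hioff hibO
      simp only [mem_insert, mem_singleton]
      constructor
      · by_contra hu
        push_neg at hu
        obtain ⟨hu1, hu2, hu3⟩ := hu
        have hw1 : c (i,j') = a ∨ c (i,j') = b := by
          rcases m0 with h | h | h | h
          · exact absurd h hu1
          · exact absurd h hu2
          · exact Or.inl h
          · exact Or.inr h
        have hw2 : c (i,j') = b ∨ c (i,j') = x := by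
          rcases hEa' with ⟨e1, e2⟩ | ⟨e1, e2⟩ <;> rw [e1, e2] at ma <;>
            rcases ma with h | h | h | h <;>
            first
              | exact absurd h hu2
              | exact absurd h hu3
              | exact Or.inl h
              | exact Or.inr h
        have hw3 : c (i,j') = a ∨ c (i,j') = x := by
          rcases hEb' with ⟨f1, f2⟩ | ⟨f1, f2⟩ <;> rw [f1, f2] at mb <;>
            rcases mb with h | h | h | h <;>
            first
              | exact absurd h hu1
              | exact absurd h hu3
              | exact Or.inl h
              | exact Or.inr h
        rcases hw1 with h | h
        · rcases hw2 with h2 | h2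
          · exact hab (h.symm.trans h2)
          · exact hxa (h.symm.trans h2).symm
        · rcases hw3 with h2 | h2
          · exact hab (h2.symm.trans h)
          · exact hxb (h.symm.trans h2).symm
      · by_contra hw
        push_neg at hw
        obtain ⟨hw1, hw2, hw3⟩ := hw
        have hu1 : c (i,j) = a ∨ c (i,j) = b := by
          rcases m0 with h | h | h | h
          · exact Or.inl h
          · exact Or.inr h
          · exact absurd h hw1
          · exact absurd h hw2
        have hu2 : c (i,j) = b ∨ c (i,j) = x := by
          rcases hEa' with ⟨e1, e2⟩ | ⟨e1, e2⟩ <;> rw [e1, e2] at ma <;>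
            rcases ma with h | h | h | h <;>
            first
              | exact absurd h hw2
              | exact absurd h hw3
              | exact Or.inl h
              | exact Or.inr h
        have hu3 : c (i,j) = a ∨ c (i,j) = x := by
          rcases hEb' with ⟨f1, f2⟩ | ⟨f1, f2⟩ <;> rw [f1, f2] at mb <;>
            rcases mb with h | h | h | h <;>
            first
              | exact absurd h hw1
              | exact absurd h hw3
              | exact Or.inl h
              | exact Or.inr h
        rcases hu1 with h | h
        · rcases hu2 with h2 | h2
          · exact hab (h.symm.trans h2)
          · exact hxa (h.symm.trans h2).symm
        · rcases hu3 with h2 | h2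
          · exact hab (h2.symm.trans h)
          · exact hxb (h.symm.trans h2).symm

lemma M_in_P (H : Hyp r c) {j j' : Fin (11*r+1)} (hjj : j ≠ j') {P : Finset (Fin r)}
    (hP : ∀ i, c (i,j) ≠ c (i,j') → c (i,j) ∈ P ∧ c (i,j') ∈ P) :
    Mset c j ⊆ P ∧ Mset c j' ⊆ P := by
  constructor
  · intro w hw
    rw [Mset, mem_filter] at hw
    by_contra hwP
    have hsub : (univ.filter fun i => c (i,j) = w)
        ⊆ univ.filter fun i => c (i,j) = w ∧ c (i,j') = w := by
      intro i hi
      rw [mem_filter] at hi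
      refine mem_filter.2 ⟨mem_univ _, hi.2, ?_⟩
      by_contra hne
      have hoff : c (i,j) ≠ c (i,j') := by
        rw [hi.2]; exact fun hcc => hne hcc.symm
      exact hwP (hi.2 ▸ (hP i hoff).1)
    have h1 := card_le_card hsub
    have h2 := mono_pair H hjj w
    have h3 : (univ.filter fun i => c (i,j) = w).card = cnt c j w := rfl
    omega
  · intro w hw
    rw [Mset, mem_filter] at hw
    by_contra hwP
    have hsub : (univ.filter fun i => c (i,j') = w)
        ⊆ univ.filter fun i => c (i,j) = w ∧ c (i,j') = w := by
      intro i hi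
      rw [mem_filter] at hi
      have : c (i,j) = w := by
        by_contra hne
        have hoff : c (i,j) ≠ c (i,j') := by
          rw [hi.2]; exact hne
        exact hwP (hi.2 ▸ (hP i hoff).2)
      exact mem_filter.2 ⟨mem_univ _, this, hi.2⟩
    have h1 := card_le_card hsub
    have h2 := mono_pair H hjj w
    have h3 : (univ.filter fun i => c (i,j') = w).card = cnt c j' w := rfl
    omega

lemma Mcard_ge3 {j : Fin (11*r+1)} (hj : ¬ IsV c j) : 3 ≤ (Mset c j).card := by
  classical
  set used : Finset (Fin r) := univ.filter fun w => cnt c j w ≠ 0 with hused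
  have hsum_used : ∑ w ∈ used, cnt c j w = 2*r+5 := by
    rw [hused, Finset.sum_filter_ne_zero, sum_cnt]
  have hcard_used : used.card ≤ r := by
    calc used.card ≤ (univ : Finset (Fin r)).card := card_filter_le _ _
      _ = r := by simp
  have hMsub : Mset c j ⊆ used := by
    intro w hw
    rw [Mset, mem_filter] at hw
    rw [hused, mem_filter]
    exact ⟨mem_univ _, by omega⟩
  have hsum_eq : ∑ w ∈ used, (cnt c j w - 1) = ∑ w ∈ Mset c j, (cnt c j w - 1) := by
    refine (Finset.sum_subset hMsub ?_).symm
    intro w hw hnw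
    rw [Mset, mem_filter] at hnw
    have h1 : cnt c j w ≠ 0 := (mem_filter.1 hw).2
    have : ¬ 2 ≤ cnt c j w := fun h => hnw ⟨mem_univ _, h⟩
    omega
  have hsum2 : ∑ w ∈ used, (cnt c j w - 1) + used.card = 2*r+5 := by
    have hc : ∑ w ∈ used, cnt c j w = ∑ w ∈ used, ((cnt c j w - 1) + 1) := by
      apply Finset.sum_congr rfl
      intro w hw
      have : cnt c j w ≠ 0 := (mem_filter.1 hw).2
      omega
    rw [hc, Finset.sum_add_distrib, Finset.sum_const, smul_eq_mul, mul_one] at hsum_used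
    exact hsum_used
  have hbound : ∀ w ∈ Mset c j, cnt c j w - 1 ≤ vth r - 2 := by
    intro w hw
    rw [Mset, mem_filter] at hw
    have hlt : ¬ vth r ≤ cnt c j w := fun h => hj ⟨w, h⟩
    have hv : vth r = (r+7)/2 := rfl
    omega
  have hsle : ∑ w ∈ Mset c j, (cnt c j w - 1) ≤ (Mset c j).card * (vth r - 2) := by
    calc ∑ w ∈ Mset c j, (cnt c j w - 1) ≤ ∑ _w ∈ Mset c j, (vth r - 2) :=
        Finset.sum_le_sum hbound
      _ = (Mset c j).card * (vth r - 2) := by rw [Finset.sum_const, smul_eq_mul]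
  by_contra hcard
  have hc2 : (Mset c j).card ≤ 2 := by omega
  have : (Mset c j).card * (vth r - 2) ≤ 2 * (vth r - 2) :=
    Nat.mul_le_mul_right _ hc2
  have hv : vth r = (r+7)/2 := rfl
  omega

/-- extraction of four distinct elements -/
lemma four_elems {α : Type*} {s : Finset α} (h : 4 ≤ s.card) :
    ∃ a ∈ s, ∃ b ∈ s, ∃ d ∈ s, ∃ e ∈ s,
      a ≠ b ∧ a ≠ d ∧ a ≠ e ∧ b ≠ d ∧ b ≠ e ∧ d ≠ e := by
  classical
  obtain ⟨a, ha⟩ := Finset.card_pos.1 (show 0 < s.card by omega)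
  have h1 : 3 ≤ (s.erase a).card := by
    have := Finset.card_erase_add_one ha
    omega
  obtain ⟨b, hb⟩ := Finset.card_pos.1 (show 0 < (s.erase a).card by omega)
  have h2 : 2 ≤ ((s.erase a).erase b).card := by
    have := Finset.card_erase_add_one hb
    omega
  obtain ⟨d, hd⟩ := Finset.card_pos.1 (show 0 < ((s.erase a).erase b).card by omega)
  have h3 : 1 ≤ (((s.erase a).erase b).erase d).card := by
    have := Finset.card_erase_add_one hd
    omega
  obtain ⟨e, he⟩ := Finset.card_pos.1 (show 0 < (((s.erase a).erase b).erase d).card by omega)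
  have hbmem := Finset.mem_erase.1 hb
  have hdmem := Finset.mem_erase.1 hd
  have hdmem2 := Finset.mem_erase.1 hdmem.2
  have hemem := Finset.mem_erase.1 he
  have hemem2 := Finset.mem_erase.1 hemem.2
  have hemem3 := Finset.mem_erase.1 hemem2.2
  exact ⟨a, ha, b, hbmem.2, d, hdmem2.2, e, hemem3.2,
    fun hc => hbmem.1 hc.symm, fun hc => hdmem2.1 hc.symm, fun hc => hemem3.1 hc.symm,
    fun hc => hdmem.1 hc.symm, fun hc => hemem2.1 hc.symm, fun hc => hemem.1 hc.symm⟩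

lemma class3 (H : Hyp r c) (p : Fin r) :
    (univ.filter fun j => vth r ≤ cnt c j p).card ≤ 3 := by
  classical
  by_contra hcon
  have h4 : 4 ≤ (univ.filter fun j => vth r ≤ cnt c j p).card := by omega
  obtain ⟨j1, hj1, j2, hj2, j3, hj3, j4, hj4, h12, h13, h14, h23, h24, h34⟩ := four_elems h4
  have hc1 := (mem_filter.1 hj1).2
  have hc2 := (mem_filter.1 hj2).2
  have hc3 := (mem_filter.1 hj3).2
  have hc4 := (mem_filter.1 hj4).2
  set S1 : Finset (Fin (2*r+5)) := univ.filter fun i => c (i,j1) = p with hS1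
  set S2 : Finset (Fin (2*r+5)) := univ.filter fun i => c (i,j2) = p with hS2
  set S3 : Finset (Fin (2*r+5)) := univ.filter fun i => c (i,j3) = p with hS3
  set S4 : Finset (Fin (2*r+5)) := univ.filter fun i => c (i,j4) = p with hS4
  have hint : ∀ (ja jb : Fin (11*r+1)), ja ≠ jb →
      ((univ.filter fun i => c (i,ja) = p) ∩ (univ.filter fun i => c (i,jb) = p)).card ≤ 1 := by
    intro ja jb hne
    have : (univ.filter fun i => c (i,ja) = p) ∩ (univ.filter fun i => c (i,jb) = p)
        = univ.filter fun i => c (i,ja) = p ∧ c (i,jb) = p := by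
      rw [← Finset.filter_and]
    rw [this]
    exact mono_pair H hne p
  have hq1 : S1.card = cnt c j1 p := rfl
  have hq2 : S2.card = cnt c j2 p := rfl
  have hq3 : S3.card = cnt c j3 p := rfl
  have hq4 : S4.card = cnt c j4 p := rfl
  have hu12 : 2 * vth r ≤ (S1 ∪ S2).card + 1 := by
    have := Finset.card_union_add_card_inter S1 S2
    have hi : (S1 ∩ S2).card ≤ 1 := hint j1 j2 h12
    omega
  have hi3 : ((S1 ∪ S2) ∩ S3).card ≤ 2 := by
    have hdist : (S1 ∪ S2) ∩ S3 = (S1 ∩ S3) ∪ (S2 ∩ S3) := Finset.union_inter_distrib_right _ _ _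
    have := Finset.card_union_le (S1 ∩ S3) (S2 ∩ S3)
    have h13' : (S1 ∩ S3).card ≤ 1 := hint j1 j3 h13
    have h23' : (S2 ∩ S3).card ≤ 1 := hint j2 j3 h23
    rw [hdist]
    omega
  have hu123 : 3 * vth r ≤ (S1 ∪ S2 ∪ S3).card + 3 := by
    have := Finset.card_union_add_card_inter (S1 ∪ S2) S3
    omega
  have hi4 : ((S1 ∪ S2 ∪ S3) ∩ S4).card ≤ 3 := by
    have hdist : (S1 ∪ S2 ∪ S3) ∩ S4 = (S1 ∩ S4) ∪ (S2 ∩ S4) ∪ (S3 ∩ S4) := by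
      rw [Finset.union_inter_distrib_right, Finset.union_inter_distrib_right]
    have hle1 := Finset.card_union_le (S1 ∩ S4) (S2 ∩ S4)
    have hle2 := Finset.card_union_le ((S1 ∩ S4) ∪ (S2 ∩ S4)) (S3 ∩ S4)
    have h14' : (S1 ∩ S4).card ≤ 1 := hint j1 j4 h14
    have h24' : (S2 ∩ S4).card ≤ 1 := hint j2 j4 h24
    have h34' : (S3 ∩ S4).card ≤ 1 := hint j3 j4 h34
    rw [hdist]
    omega
  have hu1234 : 4 * vth r ≤ (S1 ∪ S2 ∪ S3 ∪ S4).card + 6 := by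
    have := Finset.card_union_add_card_inter (S1 ∪ S2 ∪ S3) S4
    omega
  have htot : (S1 ∪ S2 ∪ S3 ∪ S4).card ≤ 2*r+5 := by
    calc (S1 ∪ S2 ∪ S3 ∪ S4).card ≤ (univ : Finset (Fin (2*r+5))).card :=
        card_le_card (subset_univ _)
      _ = 2*r+5 := by simp
  have hv2 : 2*r + 12 ≤ 4 * vth r := by unfold vth; omega
  omega

lemma cardV (H : Hyp r c) : (univ.filter fun j => IsV c j).card ≤ 3*r := by
  classical
  have hsub : (univ.filter fun j => IsV c j)
      ⊆ univ.biUnion (fun p : Fin r => univ.filter fun j => vth r ≤ cnt c j p) := by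
    intro j hj
    obtain ⟨p, hp⟩ := (mem_filter.1 hj).2
    exact Finset.mem_biUnion.2 ⟨p, mem_univ _, mem_filter.2 ⟨mem_univ _, hp⟩⟩
  calc (univ.filter fun j => IsV c j).card
      ≤ (univ.biUnion (fun p : Fin r => univ.filter fun j => vth r ≤ cnt c j p)).card :=
        card_le_card hsub
    _ ≤ ∑ p, (univ.filter fun j => vth r ≤ cnt c j p).card := Finset.card_biUnion_le
    _ ≤ ∑ _p : Fin r, 3 := Finset.sum_le_sum (fun p _ => class3 H p)
    _ = 3*r := by simp [mul_comm]

lemma main (H : Hyp r c) : False := by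
  classical
  rcases Nat.eq_zero_or_pos r with rfl | hrpos
  · exact (c (⟨0, by omega⟩, ⟨0, by omega⟩)).elim0
  set NV : Finset (Fin (11*r+1)) := univ.filter fun j => ¬ IsV c j with hNVdef
  have hsplitV : (univ.filter fun j => IsV c j).card + (univ.filter fun j => ¬ IsV c j).card
      = (univ : Finset (Fin (11*r+1))).card :=
    Finset.card_filter_add_card_filter_not (p := fun j => IsV c j)
  have hcolcard : (univ : Finset (Fin (11*r+1))).card = 11*r+1 := by simp
  have hV := cardV H
  have hNVcard : 8*r+1 ≤ NV.card := by
    rw [hNVdef]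
    omega
  have h2card : 1 < NV.card := by
    refine lt_of_lt_of_le ?_ hNVcard
    omega
  obtain ⟨ja, hja, jb, hjb, hjab⟩ := Finset.one_lt_card.1 h2card
  have hjaNV : ¬ IsV c ja := (mem_filter.1 hja).2
  have hjbNV : ¬ IsV c jb := (mem_filter.1 hjb).2
  have hr3 : 3 ≤ r := by
    have h1 := Mcard_ge3 (c := c) hjaNV
    have h2 : (Mset c ja).card ≤ r := by
      calc (Mset c ja).card ≤ (univ : Finset (Fin r)).card := card_le_card (subset_univ _)
        _ = r := by simp
    omega
  obtain ⟨P0, hP0card, hP0⟩ := pair_P H hjab hjaNV hjbNV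
  have hMa := M_in_P H hjab hP0
  have hPstar_eq : Mset c ja = P0 :=
    Finset.eq_of_subset_of_card_le hMa.1 (by rw [hP0card]; exact Mcard_ge3 hjaNV)
  have hPcard : P0.card = 3 := hP0card
  have M_all : ∀ j ∈ NV, Mset c j = P0 := by
    intro j hj
    have hjNV : ¬ IsV c j := (mem_filter.1 hj).2
    rcases eq_or_ne j ja with rfl | hne
    · exact hPstar_eq
    · obtain ⟨P, hPc, hP⟩ := pair_P H (Ne.symm hne) hjaNV hjNV
      have hM := M_in_P H (Ne.symm hne) hP
      have h1 : Mset c ja = P :=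
        Finset.eq_of_subset_of_card_le hM.1 (by rw [hPc]; exact Mcard_ge3 hjaNV)
      have h2 : Mset c j ⊆ P0 := by rw [← hPstar_eq, h1]; exact hM.2
      exact Finset.eq_of_subset_of_card_le h2 (by rw [hPcard]; exact Mcard_ge3 hjNV)
  have offdiagP : ∀ j ∈ NV, ∀ j' ∈ NV, j ≠ j' → ∀ i, c (i,j) ≠ c (i,j') →
      c (i,j) ∈ P0 ∧ c (i,j') ∈ P0 := by
    intro j hj j' hj' hne i hoff
    obtain ⟨P, hPc, hP⟩ := pair_P H hne ((mem_filter.1 hj).2) ((mem_filter.1 hj').2)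
    have hM := M_in_P H hne hP
    have h1 : Mset c j = P :=
      Finset.eq_of_subset_of_card_le hM.1 (by rw [hPc]; exact Mcard_ge3 ((mem_filter.1 hj).2))
    have h2 : P = P0 := by rw [← h1, M_all j hj]
    rw [← h2]
    exact hP i hoff
  set B : Finset (Fin (2*r+5)) := univ.filter (fun i => ∃ j ∈ NV, c (i,j) ∉ P0) with hBdef
  have base_const : ∀ i ∈ B, ∀ j ∈ NV, ∀ j' ∈ NV, c (i,j) = c (i,j') := by
    intro i hi j hj j' hj'
    obtain ⟨j0, hj0, hj0P⟩ := (mem_filter.1 hi).2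
    have key : ∀ jj ∈ NV, c (i,jj) = c (i,j0) := by
      intro jj hjj
      rcases eq_or_ne jj j0 with rfl | hne
      · rfl
      · by_contra hcc
        exact hj0P (offdiagP jj hjj j0 hj0 hne i hcc).2
    rw [key j hj, key j' hj']
  have hBval : ∀ i ∈ B, c (i,ja) ∉ P0 := by
    intro i hi
    obtain ⟨j0, hj0, hj0P⟩ := (mem_filter.1 hi).2
    rw [base_const i hi ja hja j0 hj0]
    exact hj0P
  have hBcard : B.card ≤ r - 3 := by
    have hmaps : ∀ i ∈ B, c (i,ja) ∈ (univ : Finset (Fin r)) \ P0 := by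
      intro i hi; rw [mem_sdiff]; exact ⟨mem_univ _, hBval i hi⟩
    have hinj : Set.InjOn (fun i => c (i,ja)) (B : Set (Fin (2*r+5))) := by
      intro i hi i' hi' heq
      simp only [Finset.mem_coe] at hi hi'
      have heq' : c (i,ja) = c (i',ja) := heq
      by_contra hne
      have e1 : c (i,jb) = c (i,ja) := base_const i hi jb hjb ja hja
      have e2 : c (i',jb) = c (i',ja) := base_const i' hi' jb hjb ja hja
      exact H.mono (c (i,ja)) hne hjab rfl heq'.symm e1 (e2.trans heq'.symm)
    have hle := Finset.card_le_card_of_injOn _ hmaps hinj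
    have hcards : ((univ : Finset (Fin r)) \ P0).card = r - 3 := by
      rw [Finset.card_sdiff_of_subset (subset_univ _), hPcard]
      simp
    omega
  set W : Finset (Fin (2*r+5)) := univ \ B with hWdef
  have hWcard : W.card + B.card = 2*r+5 := by
    rw [hWdef, Finset.card_sdiff_of_subset (subset_univ _)]
    have h1 : (univ : Finset (Fin (2*r+5))).card = 2*r+5 := by simp
    have h2 : B.card ≤ (univ : Finset (Fin (2*r+5))).card := card_le_card (subset_univ _)
    omega
  have hWcard1 : r+8 ≤ W.card := by omega
  have hWcard2 : W.card ≤ 2*r+5 := by omega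
  have hWcolors : ∀ i ∈ W, ∀ j ∈ NV, c (i,j) ∈ P0 := by
    intro i hi j hj
    rw [hWdef, mem_sdiff] at hi
    by_contra hcc
    exact hi.2 (mem_filter.2 ⟨mem_univ _, j, hj, hcc⟩)
  set k := NV.card with hk
  have hkpos : 0 < k := by omega
  have agr3 : ∀ j ∈ NV, ∀ j' ∈ NV, j ≠ j' →
      (W.filter fun i => c (i,j) = c (i,j')).card ≤ 3 := by
    intro j hj j' hj' hne
    have hmaps : ∀ i ∈ (W.filter fun i => c (i,j) = c (i,j')), c (i,j) ∈ P0 :=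
      fun i hi => hWcolors i (mem_filter.1 hi).1 j hj
    have hinj : Set.InjOn (fun i => c (i,j))
        ((W.filter fun i => c (i,j) = c (i,j')) : Set (Fin (2*r+5))) := by
      intro i hi i' hi' heq
      simp only [Finset.mem_coe] at hi hi'
      have hp1 : c (i,j) = c (i,j') := (mem_filter.1 hi).2
      have hp2 : c (i',j) = c (i',j') := (mem_filter.1 hi').2
      have heq' : c (i,j) = c (i',j) := heq
      by_contra hne2
      exact H.mono (c (i,j)) hne2 hne rfl heq'.symm hp1.symm (hp2.symm.trans heq'.symm)
    calc (W.filter fun i => c (i,j) = c (i,j')).card ≤ P0.card :=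
        Finset.card_le_card_of_injOn _ hmaps hinj
      _ = 3 := hPcard
  have hrow : ∀ i ∈ W, k^2 ≤ 3 * ((NV.offDiag.filter fun q => c (i,q.1) = c (i,q.2)).card + k) := by
    intro i hiW
    have hfib : ∀ w ∈ P0, (((NV ×ˢ NV).filter fun q => c (i,q.1) = c (i,q.2)).filter
        fun q => c (i,q.1) = w)
        = (NV.filter fun j => c (i,j) = w) ×ˢ (NV.filter fun j => c (i,j) = w) := by
      intro w hw
      ext q
      simp only [mem_filter, mem_product]
      constructor
      · rintro ⟨⟨⟨hq1, hq2⟩, heq⟩, hw1⟩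
        exact ⟨⟨hq1, hw1⟩, hq2, heq.symm.trans hw1⟩
      · rintro ⟨⟨hq1, hw1⟩, hq2, hw2⟩
        exact ⟨⟨⟨hq1, hq2⟩, hw1.trans hw2.symm⟩, hw1⟩
    have hu : ((NV ×ˢ NV).filter fun q => c (i,q.1) = c (i,q.2)).card
        = ∑ w ∈ P0, ((NV.filter fun j => c (i,j) = w).card)^2 := by
      rw [Finset.card_eq_sum_card_fiberwise (f := fun q => c (i,q.1)) (t := P0)
        (fun q hq => hWcolors i hiW q.1 ((mem_product.1 (mem_filter.1 hq).1).1))]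
      refine Finset.sum_congr rfl fun w hw => ?_
      rw [hfib w hw, Finset.card_product, sq]
    have hsum_m : ∑ w ∈ P0, (NV.filter fun j => c (i,j) = w).card = k := by
      rw [hk]
      exact (Finset.card_eq_sum_card_fiberwise (f := fun j => c (i,j)) (s := NV) (t := P0)
        (fun j hj => hWcolors i hiW j hj)).symm
    have hCS := sq_sum_le_card_mul_sum_sq (s := P0)
      (f := fun w => ((NV.filter fun j => c (i,j) = w).card : ℕ))
    rw [hsum_m, hPcard] at hCS
    rw [← hu] at hCS
    have hsplit2 : ((NV ×ˢ NV).filter fun q => c (i,q.1) = c (i,q.2)).card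
        = (NV.offDiag.filter fun q => c (i,q.1) = c (i,q.2)).card + k := by
      have hdisj : Disjoint (NV.offDiag.filter fun q => c (i,q.1) = c (i,q.2)) NV.diag := by
        rw [Finset.disjoint_left]
        intro q hq hq2
        have h1 := (Finset.mem_offDiag.1 (mem_filter.1 hq).1).2.2
        have h2 := (Finset.mem_diag.1 hq2).2
        exact h1 h2
      have hun : (NV ×ˢ NV).filter (fun q => c (i,q.1) = c (i,q.2))
          = (NV.offDiag.filter fun q => c (i,q.1) = c (i,q.2)) ∪ NV.diag := by
        ext q
        simp only [mem_filter, mem_product, mem_union, Finset.mem_offDiag, Finset.mem_diag]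
        constructor
        · rintro ⟨⟨h1, h2⟩, he⟩
          rcases eq_or_ne q.1 q.2 with heq | hne
          · exact Or.inr ⟨h1, heq⟩
          · exact Or.inl ⟨⟨h1, h2, hne⟩, he⟩
        · rintro (⟨⟨h1, h2, hne⟩, he⟩ | ⟨h1, heq⟩)
          · exact ⟨⟨h1, h2⟩, he⟩
          · exact ⟨⟨h1, heq ▸ h1⟩, by rw [heq]⟩
      rw [hun, Finset.card_union_of_disjoint hdisj, Finset.diag_card]
    rw [hsplit2] at hCS
    exact hCS
  set TT := ∑ q ∈ NV.offDiag, (W.filter fun i => c (i,q.1) = c (i,q.2)).card with hTTdef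
  set D := NV.offDiag.card with hDdef
  have hTTle : TT ≤ 3 * D := by
    rw [hTTdef]
    calc ∑ q ∈ NV.offDiag, (W.filter fun i => c (i,q.1) = c (i,q.2)).card
        ≤ ∑ _q ∈ NV.offDiag, 3 := Finset.sum_le_sum (fun q hq => by
          obtain ⟨h1, h2, hne⟩ := Finset.mem_offDiag.1 hq
          exact agr3 q.1 h1 q.2 h2 hne)
      _ = 3 * D := by rw [Finset.sum_const, smul_eq_mul, mul_comm]
  have hle1 : k ≤ k * k := Nat.le_mul_of_pos_left k hkpos
  have hD : D + k = k * k := by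
    rw [hDdef, Finset.offDiag_card]
    exact Nat.sub_add_cancel hle1
  have hswap : ∑ i ∈ W, (NV.offDiag.filter fun q => c (i,q.1) = c (i,q.2)).card = TT := by
    rw [hTTdef]
    simp only [Finset.card_filter]
    exact Finset.sum_comm
  have hsumrow : W.card * k^2
      ≤ ∑ i ∈ W, 3 * ((NV.offDiag.filter fun q => c (i,q.1) = c (i,q.2)).card + k) := by
    have := Finset.sum_le_sum hrow
    rwa [Finset.sum_const, smul_eq_mul] at this
  have hrhs : ∑ i ∈ W, 3 * ((NV.offDiag.filter fun q => c (i,q.1) = c (i,q.2)).card + k)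
      = 3 * TT + W.card * (3*k) := by
    calc ∑ i ∈ W, 3 * ((NV.offDiag.filter fun q => c (i,q.1) = c (i,q.2)).card + k)
        = ∑ i ∈ W, (3 * (NV.offDiag.filter fun q => c (i,q.1) = c (i,q.2)).card + 3*k) :=
          Finset.sum_congr rfl (fun i _ => by ring)
      _ = (∑ i ∈ W, 3 * (NV.offDiag.filter fun q => c (i,q.1) = c (i,q.2)).card)
          + ∑ _i ∈ W, 3*k := Finset.sum_add_distrib
      _ = 3 * (∑ i ∈ W, (NV.offDiag.filter fun q => c (i,q.1) = c (i,q.2)).card)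
          + W.card * (3*k) := by rw [← Finset.mul_sum, Finset.sum_const, smul_eq_mul]
      _ = 3 * TT + W.card * (3*k) := by rw [hswap]
  set L := W.card with hL
  have hA : L * (k*k) ≤ 3 * TT + L * (3*k) := by
    have := hsumrow
    rw [hrhs] at this
    calc L * (k*k) = L * k^2 := by rw [sq]
      _ ≤ 3 * TT + L * (3*k) := this
  -- final arithmetic
  have hA2 : L*D + L*k ≤ 9*D + 3*(L*k) := by
    have e : L * (k*k) = L*D + L*k := by rw [← hD, Nat.mul_add]
    have h9 : 3 * TT ≤ 9 * D := by omega
    calc L*D + L*k = L * (k*k) := e.symm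
      _ ≤ 3 * TT + L * (3*k) := hA
      _ ≤ 9*D + 3*(L*k) := by
          have : L * (3*k) = 3*(L*k) := by ring
          omega
  have P1 : (r+8)*D ≤ L*D := Nat.mul_le_mul_right D hWcard1
  have P3 : L*k ≤ (2*r+5)*k := Nat.mul_le_mul_right k hWcard2
  have P4 : 8*r*k + k ≤ D + k := by
    have e1 : k*(8*r+1) ≤ k*k := Nat.mul_le_mul_left k hNVcard
    have e2 : k*(8*r+1) = 8*r*k + k := by ring
    omega
  have P6 : 3*D ≤ r*D := Nat.mul_le_mul_right D hr3
  have P7 : 3*k ≤ r*k := Nat.mul_le_mul_right k hr3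
  have e3 : (r+8)*D = r*D + 8*D := by ring
  have e4 : (2*r+5)*k = 2*(r*k) + 5*k := by ring
  have e5 : 8*r*k = 8*(r*k) := by ring
  rw [e3] at P1
  rw [e4] at P3
  rw [e5] at P4
  -- linear contradiction in the atoms r*D, L*D, L*k, r*k, D, k
  have hcontr : (26:ℕ)*k ≤ 0 := by linarith
  omega

end

end MonoRainbow

theorem grid_mono_or_rainbow_rectangle
    (r : ℕ) (hr : 0 < r)
    (c : Fin (2 * r + 5) × Fin (11 * r + 1) → Fin r) :
    ∃ (i i' : Fin (2 * r + 5)) (j j' : Fin (11 * r + 1)),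
      i ≠ i' ∧ j ≠ j' ∧
      ((c (i, j) = c (i', j) ∧ c (i', j) = c (i, j') ∧ c (i, j') = c (i', j')) ∨
       (c (i, j) ≠ c (i', j) ∧ c (i, j) ≠ c (i, j') ∧ c (i, j) ≠ c (i', j') ∧
        c (i', j) ≠ c (i, j') ∧ c (i', j) ≠ c (i', j') ∧ c (i, j') ≠ c (i', j'))) := by
  by_contra hcon
  push_neg at hcon
  have H : MonoRainbow.Hyp r c := by
    constructor
    · intro i i' j j' w hii hjj h1 h2 h3 h4
      exact ((hcon i i' j j' hii hjj).1 (h1.trans h2.symm) (h2.trans h3.symm))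
        (h3.trans h4.symm)
    · intro i i' j j' hii hjj
      by_contra hne
      push_neg at hne
      obtain ⟨n1, n2, n3, n4, n5, n6⟩ := hne
      exact n6 ((hcon i i' j j' hii hjj).2 n1 n2 n3 n4 n5)
  exact MonoRainbow.main H
end

section
/- Let r ≥ 4 be an integer and let c : Fin (2r+5) × Fin (11r+1) → Fin r be a coloring of the ((2r+5) × (11r+1))-grid containing no monochromatic grid rectangle and no rainbow grid rectangle. Let t be a color such that the set J = {j : c(0,j) = t} of columns on which row 0 has color t satisfies |J| ≥ 12. Then there are at least 5 row indices i ≠ 0 such that the set of colors {c(i,j) : j ∈ J} contains at least 3 colors different from t. -/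
/-!
Suppose fewer than five rows `i ≠ 0` see three colors other than `t` on `J`. Then at least `2r`
rows `i ≠ 0` see at most two such colors. Two rows cannot share a color on two columns (that
would be a monochromatic rectangle); applied against row `0` this says that each such row takes the
value `t` at most once on `J`, so one of its two other colors covers at least half of the rest of
`J`. By pigeonhole over the `r - 1` colors other than `t`, three of these rows have the same
dominant color `s`. Their three `s`-parts of `J` pairwise meet in at most one column, so
`3 (|J| - 1) / 2 ≤ |J| + 3`, i.e. `|J| ≤ 9`.
-/

open Finset

namespace Finset

variable {β γ : Type*} [DecidableEq γ]

theorem card_add_card_add_card_le [DecidableEq β] (A B C : Finset β) :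
    #A + #B + #C ≤ #(A ∪ B ∪ C) + #(A ∩ B) + #(A ∩ C) + #(B ∩ C) := by
  have hAB := card_union_add_card_inter A B
  have hABC := card_union_add_card_inter (A ∪ B) C
  have hdistrib : #((A ∪ B) ∩ C) ≤ #(A ∩ C) + #(B ∩ C) := by
    rw [union_inter_distrib_right]
    exact card_union_le _ _
  omega

theorem exists_card_le_mul_card_fiber {s : Finset β} (hs : s.Nonempty) (f : β → γ) {k : ℕ}
    (hk : #(s.image f) ≤ k) : ∃ y ∈ s.image f, #s ≤ k * #{x ∈ s | f x = y} := by
  have hk₀ : 0 < k := (card_pos.mpr (hs.image f)).trans_le hk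
  obtain ⟨y, hy, hfiber⟩ := exists_lt_card_fiber_of_mul_lt_card_of_maps_to
    (fun x hx => mem_image_of_mem f hx)
    (calc #(s.image f) * ((#s - 1) / k) ≤ k * ((#s - 1) / k) := Nat.mul_le_mul_right _ hk
      _ ≤ #s - 1 := Nat.mul_div_le _ _
      _ < #s := Nat.sub_lt hs.card_pos one_pos)
  refine ⟨y, hy, ?_⟩
  have := Nat.lt_mul_div_succ (#s - 1) hk₀
  have hfiber' : (#s - 1) / k + 1 ≤ #{x ∈ s | f x = y} := hfiber
  have := Nat.mul_le_mul_left k hfiber'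
  omega

theorem exists_ne_card_le_mul_card_fiber_add_one {J : Finset β} (f : β → γ) (t : γ) {k : ℕ}
    (hJ : 2 ≤ #J) (ht : #{j ∈ J | f j = t} ≤ 1) (hk : #{s ∈ J.image f | s ≠ t} ≤ k) :
    ∃ s ≠ t, #J ≤ k * #{j ∈ J | f j = s} + 1 := by
  set K := J.filter fun j => f j ≠ t
  have hsplit : #{j ∈ J | f j = t} + #K = #J := card_filter_add_card_filter_not _
  have hK : K.Nonempty := card_pos.mp (by omega)
  obtain ⟨s, hs, hfiber⟩ :=
    exists_card_le_mul_card_fiber hK f (k := k) (by rwa [filter_image] at hk)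
  have hst : s ≠ t := by
    obtain ⟨j, hj, rfl⟩ := mem_image.mp hs
    exact (mem_filter.mp hj).2
  have hKJ : #{j ∈ K | f j = s} ≤ #{j ∈ J | f j = s} :=
    card_le_card (filter_subset_filter _ (filter_subset _ _))
  have := Nat.mul_le_mul_left k hKJ
  exact ⟨s, hst, by omega⟩

end Finset

section GridColoring

variable {α β γ : Type*} [DecidableEq γ]

def NoMonoRect (c : α × β → γ) : Prop :=
  ¬ ∃ (i i' : α) (j j' : β), i ≠ i' ∧ j ≠ j' ∧
    c (i, j) = c (i', j) ∧ c (i', j) = c (i, j') ∧ c (i, j') = c (i', j')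

variable {c : α × β → γ}

theorem NoMonoRect.card_filter_eq_and_eq_le_one (hc : NoMonoRect c) {i i' : α} (hii' : i ≠ i')
    (s : γ) (J : Finset β) : #{j ∈ J | c (i, j) = s ∧ c (i', j) = s} ≤ 1 := by
  refine card_le_one.mpr fun j hj j' hj' => by_contra fun hjj' => hc ?_
  simp only [mem_filter] at hj hj'
  exact ⟨i, i', j, j', hii', hjj', hj.2.1.trans hj.2.2.symm, hj.2.2.trans hj'.2.1.symm,
    hj'.2.1.trans hj'.2.2.symm⟩

theorem NoMonoRect.card_filter_eq_le_one [Fintype β] (hc : NoMonoRect c) {i₀ i : α}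
    (hi : i ≠ i₀) (t : γ) :
    #{j ∈ ({j | c (i₀, j) = t} : Finset β) | c (i, j) = t} ≤ 1 := by
  have := hc.card_filter_eq_and_eq_le_one hi.symm t {j | c (i₀, j) = t}
  rwa [filter_congr fun j hj => and_iff_right (mem_filter.mp hj).2] at this

theorem NoMonoRect.card_le_nine_of_three_rows [DecidableEq β] (hc : NoMonoRect c) {a b d : α}
    (hab : a ≠ b) (had : a ≠ d) (hbd : b ≠ d) {J : Finset β} {s : γ}
    (ha : #J ≤ 2 * #{j ∈ J | c (a, j) = s} + 1) (hb : #J ≤ 2 * #{j ∈ J | c (b, j) = s} + 1)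
    (hd : #J ≤ 2 * #{j ∈ J | c (d, j) = s} + 1) : #J ≤ 9 := by
  have hunion :
      #({j ∈ J | c (a, j) = s} ∪ {j ∈ J | c (b, j) = s} ∪ {j ∈ J | c (d, j) = s}) ≤ #J :=
    card_le_card (union_subset (union_subset (filter_subset _ _) (filter_subset _ _))
      (filter_subset _ _))
  have hab' := hc.card_filter_eq_and_eq_le_one hab s J
  have had' := hc.card_filter_eq_and_eq_le_one had s J
  have hbd' := hc.card_filter_eq_and_eq_le_one hbd s J
  rw [filter_and] at hab' had' hbd'
  have := card_add_card_add_card_le {j ∈ J | c (a, j) = s} {j ∈ J | c (b, j) = s}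
    {j ∈ J | c (d, j) = s}
  omega

end GridColoring

theorem grid_claim3_general
    (r : ℕ)
    (c : Fin (2 * r + 5) × Fin (11 * r + 1) → Fin r)
    (hmono : ¬ ∃ (i i' : Fin (2 * r + 5)) (j j' : Fin (11 * r + 1)),
      i ≠ i' ∧ j ≠ j' ∧
      c (i, j) = c (i', j) ∧ c (i', j) = c (i, j') ∧ c (i, j') = c (i', j'))
    (t : Fin r)
    (hJ : 12 ≤ (Finset.univ.filter fun j : Fin (11 * r + 1) => c (0, j) = t).card) :
    5 ≤ (Finset.univ.filter fun i : Fin (2 * r + 5) =>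
          i ≠ 0 ∧
          3 ≤ (((Finset.univ.filter fun j : Fin (11 * r + 1) => c (0, j) = t).image
                  fun j => c (i, j)).filter fun s => s ≠ t).card).card := by
  set J : Finset (Fin (11 * r + 1)) := {j | c (0, j) = t}
  set P : Fin (2 * r + 5) → Prop := fun i => 3 ≤ #{s ∈ J.image fun j => c (i, j) | s ≠ t}
  have hc : NoMonoRect c := hmono
  by_contra! hfew
  change #{i | i ≠ 0 ∧ P i} < 5 at hfew
  set B := (univ.erase 0).filter fun i => ¬ P i
  have hB : 2 * r ≤ #B := by
    have hsplit : #((univ.erase 0).filter P) + #B = #(univ.erase (0 : Fin (2 * r + 5))) :=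
      card_filter_add_card_filter_not _
    have hgood : (univ.erase 0).filter P = ({i | i ≠ 0 ∧ P i} : Finset _) := by ext; simp
    rw [hgood, card_erase_of_mem (mem_univ _), card_univ, Fintype.card_fin] at hsplit
    omega
  have hdom : ∀ i ∈ B, ∃ s ≠ t, #J ≤ 2 * #{j ∈ J | c (i, j) = s} + 1 := fun i hi => by
    obtain ⟨hi0, hPi⟩ := mem_filter.mp hi
    exact exists_ne_card_le_mul_card_fiber_add_one _ t (by omega)
      (hc.card_filter_eq_le_one (ne_of_mem_erase hi0) t) (by simp only [P] at hPi; omega)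
  have : Nonempty (Fin r) := ⟨t⟩
  choose! g hgt hg using hdom
  obtain ⟨s, -, hs⟩ := exists_lt_card_fiber_of_mul_lt_card_of_maps_to (n := 2)
    (fun i hi => mem_erase.mpr ⟨hgt i hi, mem_univ _⟩)
    (by rw [card_erase_of_mem (mem_univ t), card_univ, Fintype.card_fin]; have := t.pos; omega)
  obtain ⟨a, b, d, has, hbs, hds, hab, had, hbd⟩ := two_lt_card_iff.mp hs
  obtain ⟨ha, rfl⟩ := mem_filter.mp has
  obtain ⟨hb, hgb⟩ := mem_filter.mp hbs
  obtain ⟨hd, hgd⟩ := mem_filter.mp hds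
  have := hc.card_le_nine_of_three_rows (J := J) hab had hbd (hg a ha) (hgb ▸ hg b hb)
    (hgd ▸ hg d hd)
  omega

theorem grid_claim3
    (r : ℕ) (hr : 4 ≤ r)
    (c : Fin (2 * r + 5) × Fin (11 * r + 1) → Fin r)
    (hmono : ¬ ∃ (i i' : Fin (2 * r + 5)) (j j' : Fin (11 * r + 1)),
      i ≠ i' ∧ j ≠ j' ∧
      c (i, j) = c (i', j) ∧ c (i', j) = c (i, j') ∧ c (i, j') = c (i', j'))
    (hrainbow : ¬ ∃ (i i' : Fin (2 * r + 5)) (j j' : Fin (11 * r + 1)),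
      i ≠ i' ∧ j ≠ j' ∧
      c (i, j) ≠ c (i', j) ∧ c (i, j) ≠ c (i, j') ∧ c (i, j) ≠ c (i', j') ∧
      c (i', j) ≠ c (i, j') ∧ c (i', j) ≠ c (i', j') ∧ c (i, j') ≠ c (i', j'))
    (t : Fin r)
    (hJ : 12 ≤ (Finset.univ.filter fun j : Fin (11 * r + 1) => c (0, j) = t).card) :
    5 ≤ (Finset.univ.filter fun i : Fin (2 * r + 5) =>
          i ≠ 0 ∧
          3 ≤ (((Finset.univ.filter fun j : Fin (11 * r + 1) => c (0, j) = t).image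
                  fun j => c (i, j)).filter fun s => s ≠ t).card).card :=
  grid_claim3_general r c hmono t hJ
end

section
/- Let r ≥ 4 be an integer and let c : Fin (2r+5) × Fin (11r+1) → Fin r be a coloring of the ((2r+5) × (11r+1))-grid containing no monochromatic grid rectangle and no rainbow grid rectangle. Then in row 0 there do not exist two distinct colors each appearing at least 3 times; that is, there do not exist colors t ≠ t' with |{j : c(0,j) = t}| ≥ 3 and |{j : c(0,j) = t'}| ≥ 3. (Equivalently, the second-largest color class of row 0 has size at most 2.) -/
/-!
Compare each row `i ≠ 0` with row `0`. The colour pairs `{c (0, x), c (i, x)}` at the columns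
where the two rows differ pairwise meet (no rainbow rectangle), so they form a star or lie in a
triangle. Since `t` and `t'` fill at least three cells of row `0` and two rows share a colour in at
most one column (no monochromatic rectangle), row `i` is a star at `t`, a star at `t'`, or is
attached to a third colour `w`: a star at `w` or the triangle `{t, t', w}`.

At most three rows are stars at `t`: each recolours all but one cell of the `t'`-class of row `0`
by `t`, and two such recolourings share at most one cell. At most `r` rows are attached to third
colours, because two rows attached to the same `w` agree on `w` in two columns unless one of them
is exceptional, and there are at most two exceptional rows: if a third colour `v` fills two cells
of row `0`, the triangle rows (they all use `v`, and three of them would leave four rows coloured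
from `{t, t', v}` on almost all columns); otherwise the rows interchanging `t` and `t'` in at least
`5r - 1` cells. Hence `2r + 4 ≤ 3 + 3 + r`, which fails for `r ≥ 4`.
-/

open Finset

theorem sum_card_le_card_biUnion_add_mul_choose {ι β : Type*} [DecidableEq β]
    (s : Finset ι) (A : ι → Finset β) {k : ℕ}
    (h : ∀ i ∈ s, ∀ j ∈ s, i ≠ j → #(A i ∩ A j) ≤ k) :
    ∑ i ∈ s, #(A i) ≤ #(s.biUnion A) + k * (#s).choose 2 := by
  classical
  induction s using Finset.induction_on with
  | empty => simp
  | insert a s ha ih =>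
    have hinter : #(A a ∩ s.biUnion A) ≤ k * #s := by
      rw [inter_biUnion, mul_comm, ← smul_eq_mul]
      exact card_biUnion_le.trans <| sum_le_card_nsmul _ _ _ fun i hi =>
        h a (mem_insert_self a s) i (mem_insert_of_mem hi) (ne_of_mem_of_not_mem hi ha).symm
    have ih := ih fun i hi j hj => h i (mem_insert_of_mem hi) j (mem_insert_of_mem hj)
    have := card_union_add_card_inter (A a) (s.biUnion A)
    rw [sum_insert ha, biUnion_insert, card_insert_of_notMem ha, Nat.choose_succ_succ',
      Nat.choose_one_right]
    nlinarith

theorem card_le_three_of_card_inter_le_one {ι β : Type*} [DecidableEq β] {U : Finset β}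
    (hU : 3 ≤ #U) {s : Finset ι} {A : ι → Finset β} (hAU : ∀ i ∈ s, A i ⊆ U)
    (hA : ∀ i ∈ s, #U ≤ #(A i) + 1) (h : ∀ i ∈ s, ∀ j ∈ s, i ≠ j → #(A i ∩ A j) ≤ 1) :
    #s ≤ 3 := by
  rcases le_or_gt #s 1 with hs | hs
  · omega
  have hpair : ∀ i ∈ s, ∀ j ∈ s, i ≠ j → #(A i) + #(A j) ≤ #U + 1 := fun i hi j hj hij => by
    have := card_union_add_card_inter (A i) (A j)
    have := card_le_card (union_subset (hAU i hi) (hAU j hj))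
    have := h i hi j hj hij
    omega
  obtain ⟨i₀, hi₀⟩ := card_pos.1 (by omega : 0 < #s)
  obtain ⟨j₀, hj₀, hji₀⟩ := exists_mem_ne hs i₀
  have hU3 : #U = 3 := by
    have := hpair i₀ hi₀ j₀ hj₀ hji₀.symm
    have := hA i₀ hi₀
    have := hA j₀ hj₀
    omega
  have hA2 : ∀ i ∈ s, A i ∈ U.powersetCard 2 := fun i hi => by
    obtain ⟨j, hj, hji⟩ := exists_mem_ne hs i
    have := hpair i hi j hj hji.symm
    have := hA i hi
    have := hA j hj
    exact mem_powersetCard.2 ⟨hAU i hi, by omega⟩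
  calc #s ≤ #(U.powersetCard 2) := card_le_card_of_injOn A (fun i hi => hA2 i hi)
        fun i hi j hj hAij => by
          by_contra hij
          have := h i hi j hj hij
          rw [hAij, inter_self, (mem_powersetCard.1 (hA2 j hj)).2] at this
          omega
    _ = 3 := by rw [card_powersetCard, hU3]; rfl

theorem card_filter_notMem_le {κ α : Type*} [Fintype κ] [Fintype α] [DecidableEq α] (f : κ → α)
    (S : Finset α) (h : ∀ u ∉ S, #{x | f x = u} ≤ 1) :
    #{x | f x ∉ S} ≤ Fintype.card α - #S := by
  rw [← card_compl]
  refine card_le_card_of_injOn f (fun x hx => by simpa using hx) fun x hx y _ hxy => ?_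
  have hx : f x ∉ S := by simpa using hx
  exact card_le_one.1 (h _ hx) x (by simp) y (by simp [hxy])

theorem card_le_add_of_injOn {ι α : Type*} [Fintype α] {s : Finset ι}
    (p : ι → Prop) [DecidablePred p] {k : ℕ} (hp : #{i ∈ s | p i} ≤ k) {T : Finset α}
    (g : ι → α) (hg : ∀ i ∈ s, g i ∉ T)
    (hinj : ∀ i ∈ s, ∀ j ∈ s, ¬ p i → ¬ p j → g i = g j → i = j) :
    #s ≤ k + (Fintype.card α - #T) := by
  classical
  have := card_le_card_of_injOn (s := {i ∈ s | ¬ p i}) (t := Tᶜ) g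
    (fun i hi => by simpa using hg i (mem_filter.1 hi).1) fun i hi j hj =>
      hinj i (mem_filter.1 hi).1 j (mem_filter.1 hj).1 (mem_filter.1 hi).2 (mem_filter.1 hj).2
  rw [card_compl] at this
  have := card_filter_add_card_filter_not (s := s) (fun i => p i)
  omega

section Rows

variable {κ α : Type*}

/-- Applied to two rows of a colouring, this says that they span no rainbow rectangle. -/
def DiffIntersecting (f g : κ → α) : Prop :=
  ∀ x y, f x ≠ g x → f y ≠ g y → f x = f y ∨ f x = g y ∨ g x = f y ∨ g x = g y

theorem diffIntersecting_of_not_exists {ι : Type*} {c : ι × κ → α}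
    (h : ¬ ∃ (i i' : ι) (j j' : κ), i ≠ i' ∧ j ≠ j' ∧
      c (i, j) ≠ c (i', j) ∧ c (i, j) ≠ c (i, j') ∧ c (i, j) ≠ c (i', j') ∧
      c (i', j) ≠ c (i, j') ∧ c (i', j) ≠ c (i', j') ∧ c (i, j') ≠ c (i', j'))
    (i i' : ι) : DiffIntersecting (fun x => c (i, x)) (fun x => c (i', x)) :=
  fun j j' hj hj' => by
    by_contra! H
    have hii' : i ≠ i' := by rintro rfl; exact hj rfl
    have hjj' : j ≠ j' := by rintro rfl; exact H.1 rfl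
    exact h ⟨i, i', j, j', hii', hjj', hj, H.1, H.2.1, H.2.2.1, H.2.2.2, hj'⟩

def DiffStar (f g : κ → α) (z : α) : Prop := ∀ x, f x ≠ g x → f x = z ∨ g x = z

def DiffWithin (f g : κ → α) (S : Finset α) : Prop :=
  ∀ x, f x ≠ g x → f x ∈ S ∧ g x ∈ S

variable [DecidableEq α] {f g : κ → α}

def StarOrTriangle (f g : κ → α) (t t' w : α) : Prop :=
  w ≠ t ∧ w ≠ t' ∧ (DiffStar f g w ∨ DiffWithin f g {t, t', w})

theorem StarOrTriangle.notMem_pair {t t' w : α} (h : StarOrTriangle f g t t' w) :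
    w ∉ ({t, t'} : Finset α) := by
  simp [h.1, h.2.1]

theorem DiffIntersecting.diffStar_or_diffWithin (h : DiffIntersecting f g) {x₀ : κ}
    (hx₀ : f x₀ ≠ g x₀) : (∃ z, DiffStar f g z) ∨ ∃ w, DiffWithin f g {f x₀, g x₀, w} := by
  by_cases hp : DiffStar f g (f x₀)
  · exact .inl ⟨_, hp⟩
  by_cases hq : DiffStar f g (g x₀)
  · exact .inl ⟨_, hq⟩
  simp only [DiffStar, not_forall, not_or] at hp hq
  obtain ⟨x₁, hx₁, hx₁f, hx₁g⟩ := hp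
  obtain ⟨x₂, hx₂, hx₂f, hx₂g⟩ := hq
  have h01 := h x₀ x₁ hx₀ hx₁
  have h02 := h x₀ x₂ hx₀ hx₂
  have h12 := h x₁ x₂ hx₁ hx₂
  -- The edges at `x₁` and `x₂` meet the edge at `x₀` in different ends and each other in a third
  -- colour `w`; an edge meeting all three lies in `{f x₀, g x₀, w}`.
  refine .inr ⟨if f x₁ = g x₀ then g x₁ else f x₁, fun y hy => ?_⟩
  have := h y x₀ hy hx₀
  have := h y x₁ hy hx₁
  have := h y x₂ hy hx₂
  simp only [mem_insert, mem_singleton]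
  split_ifs <;> grind

theorem DiffWithin.diffStar_of_mem {a b w : α} (h : DiffWithin f g {a, b, w})
    (hw : w = a ∨ w = b) : DiffStar f g a := by
  intro x hx
  have := h x hx
  simp only [mem_insert, mem_singleton] at this
  grind

variable [Fintype κ]

theorem exists_apply_ne_of_card_agree_le_one {v : α} (hagree : #{x | f x = v ∧ g x = v} ≤ 1)
    (hv : 2 ≤ #{x | f x = v}) : ∃ x, f x = v ∧ g x ≠ v := by
  by_contra! H
  have : #{x | f x = v} ≤ #{x | f x = v ∧ g x = v} :=
    card_le_card fun x hx => by simp_all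
  omega

theorem DiffIntersecting.exists_starOrTriangle (h : DiffIntersecting f g)
    (hagree : ∀ v, #{x | f x = v ∧ g x = v} ≤ 1) {t t' : α} (htt' : t ≠ t')
    (ht : 2 ≤ #{x | f x = t}) (ht' : 2 ≤ #{x | f x = t'})
    (hnt : ¬ DiffStar f g t) (hnt' : ¬ DiffStar f g t') : ∃ w, StarOrTriangle f g t t' w := by
  obtain ⟨x, hx, hgx⟩ := exists_apply_ne_of_card_agree_le_one (hagree t) ht
  obtain ⟨y, hy, hgy⟩ := exists_apply_ne_of_card_agree_le_one (hagree t') ht'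
  rcases h.diffStar_or_diffWithin (x₀ := x) (by rw [hx]; exact hgx.symm) with ⟨z, hz⟩ | ⟨w, hw⟩
  · exact ⟨z, fun hzt => hnt (hzt ▸ hz), fun hzt => hnt' (hzt ▸ hz), .inl hz⟩
  rw [hx] at hw
  have hw' : DiffWithin f g {t, t', w} ∨ DiffWithin f g {t, t', g x} := by
    have := (hw y (by rw [hy]; exact hgy.symm)).1
    simp only [hy, mem_insert, mem_singleton] at this
    rcases this with h' | rfl | rfl
    · exact absurd h'.symm htt'
    · exact .inl hw
    · refine .inr fun z hz => ?_
      have := hw z hz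
      simp only [mem_insert, mem_singleton] at this ⊢
      tauto
  rcases hw' with hw' | hw' <;> exact ⟨_, fun h' => hnt (hw'.diffStar_of_mem (.inl h')),
    fun h' => hnt (hw'.diffStar_of_mem (.inr h')), .inr hw'⟩

theorem card_le_card_filter_add_one_of_diffStar {z z' : α}
    (hagree : #{x | f x = z' ∧ g x = z'} ≤ 1) (hz : DiffStar f g z) (hzz' : z ≠ z') :
    #{x | f x = z'} ≤ #{x ∈ {x | f x = z'} | g x = z} + 1 := by
  classical
  have hsub : ({x | f x = z'} : Finset κ) ⊆
      ({x ∈ {x | f x = z'} | g x = z} : Finset κ) ∪ ({x | f x = z' ∧ g x = z'} : Finset κ) :=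
    fun x hx => by
      simp only [mem_union, mem_filter, mem_univ, true_and] at hx ⊢
      have := hz x
      grind
  exact (card_le_card hsub).trans ((card_union_le _ _).trans (by omega))

theorem DiffWithin.card_filter_le_one {S : Finset α} (h : DiffWithin f g S)
    (hagree : ∀ v, #{x | f x = v ∧ g x = v} ≤ 1) {u : α} (hu : u ∉ S) : #{x | f x = u} ≤ 1 :=
  (card_le_card fun x hx => by
    simp only [mem_filter, mem_univ, true_and] at hx ⊢
    by_contra hne
    exact hu (hx ▸ (h x fun h' => hne ⟨hx, h' ▸ hx⟩).1)).trans (hagree u)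

theorem card_filter_mem_pair (f : κ → α) {t t' : α} (htt' : t ≠ t') :
    #{x | f x ∈ ({t, t'} : Finset α)} = #{x | f x = t} + #{x | f x = t'} := by
  classical
  rw [← card_union_of_disjoint (disjoint_filter.2 fun _ _ h h' => htt' (h.symm.trans h')),
    ← filter_or]
  simp only [mem_insert, mem_singleton]

def swapCols (f g : κ → α) (t t' : α) : Finset κ :=
  {x | f x = t ∧ g x = t' ∨ f x = t' ∧ g x = t}

theorem DiffStar.swapCols_eq_empty {t t' w : α} (h : DiffStar f g w) (htt' : t ≠ t')
    (hwt : w ≠ t) (hwt' : w ≠ t') : swapCols f g t t' = ∅ :=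
  filter_eq_empty_iff.2 fun x _ hx => by
    have := h x (by grind)
    grind

theorem card_le_card_swapCols_add_card_filter_add_two {t t' w : α}
    (hagree : ∀ v, #{x | f x = v ∧ g x = v} ≤ 1) (h : StarOrTriangle f g t t' w) :
    #{x | f x ∈ ({t, t'} : Finset α)} ≤
      #(swapCols f g t t') + #{x ∈ {x | f x ∈ ({t, t'} : Finset α)} | g x = w} + 2 := by
  classical
  obtain ⟨hwt, hwt', h⟩ := h
  set U : Finset κ := {x | f x ∈ ({t, t'} : Finset α)}
  set A : Finset κ := {x | f x = t ∧ g x = t}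
  set A' : Finset κ := {x | f x = t' ∧ g x = t'}
  have hA : #A ≤ 1 := hagree t
  have hA' : #A' ≤ 1 := hagree t'
  -- A cell of `f` coloured `t` or `t'` is kept by `g`, swapped, or recoloured `w`.
  have hsub : U ⊆ ((A ∪ A') ∪ swapCols f g t t') ∪ {x ∈ U | g x = w} := fun x hx => by
    simp only [U, A, A', swapCols, mem_union, mem_filter, mem_univ, true_and, mem_insert,
      mem_singleton] at hx ⊢
    by_cases hfg : f x = g x
    · grind
    rcases h with h | h
    · have := h x hfg; grind
    · have := h x hfg; simp only [mem_insert, mem_singleton] at this; grind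
  have := card_le_card hsub
  have := card_union_le ((A ∪ A') ∪ swapCols f g t t') {x ∈ U | g x = w}
  have := card_union_le (A ∪ A') (swapCols f g t t')
  have := card_union_le A A'
  omega

end Rows

section Grid

variable {ι κ α : Type*} [Fintype κ] [DecidableEq α] {c : ι → κ → α}

def RowsAgreeAtMostOnce (c : ι → κ → α) : Prop :=
  ∀ i j, i ≠ j → ∀ v, #{x | c i x = v ∧ c j x = v} ≤ 1

theorem rowsAgreeAtMostOnce_of_not_exists {c : ι × κ → α}
    (h : ¬ ∃ (i i' : ι) (j j' : κ), i ≠ i' ∧ j ≠ j' ∧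
      c (i, j) = c (i', j) ∧ c (i', j) = c (i, j') ∧ c (i, j') = c (i', j')) :
    RowsAgreeAtMostOnce fun i x => c (i, x) := fun i i' hii' v =>
  card_le_one.2 fun j hj j' hj' => by
    by_contra hjj'
    simp only [mem_filter, mem_univ, true_and] at hj hj'
    exact h ⟨i, i', j, j', hii', hjj', hj.1.trans hj.2.symm, hj.2.trans hj'.1.symm,
      hj'.1.trans hj'.2.symm⟩

namespace RowsAgreeAtMostOnce

variable (hc : RowsAgreeAtMostOnce c)
include hc

theorem card_filter_add_card_filter_le {i j : ι} (hij : i ≠ j) (U : Finset κ) (w : α) :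
    #{x ∈ U | c i x = w} + #{x ∈ U | c j x = w} ≤ #U + 1 := by
  classical
  rw [← card_union_add_card_inter]
  have := card_le_card (union_subset (filter_subset (c i · = w) U) (filter_subset (c j · = w) U))
  have : #({x ∈ U | c i x = w} ∩ {x ∈ U | c j x = w}) ≤ 1 :=
    (card_le_card fun x hx => by simp_all).trans (hc i j hij w)
  omega

theorem card_filter_forall_mem_le [DecidableEq ι] (s : Finset ι) (S : Finset α) (hS : #S < #s) :
    #{x | ∀ i ∈ s, c i x ∈ S} ≤ #s.offDiag * #S := by
  have hpair : ∀ x ∈ ({x | ∀ i ∈ s, c i x ∈ S} : Finset κ), ∃ p ∈ s.offDiag, c p.1 x = c p.2 x :=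
    fun x hx => by
      obtain ⟨i, hi, j, hj, hij, hcij⟩ :=
        exists_ne_map_eq_of_card_lt_of_maps_to hS fun i hi => (mem_filter.1 hx).2 i hi
      exact ⟨(i, j), mem_offDiag.2 ⟨hi, hj, hij⟩, hcij⟩
  have : Nonempty ι := ⟨(card_pos.1 (by omega : 0 < #s)).choose⟩
  choose! p hp hpc using hpair
  rw [← card_product]
  refine card_le_card_of_injOn (fun x => (p x, c (p x).1 x))
    (fun x hx => mem_product.2 ⟨hp x hx, (mem_filter.1 hx).2 _ (mem_offDiag.1 (hp x hx)).1⟩)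
    fun x hx y hy hxy => ?_
  obtain ⟨hpxy, hcxy⟩ := Prod.mk.inj hxy
  obtain ⟨-, -, hij⟩ := mem_offDiag.1 (hp y hy)
  have hpcx := hpc x hx
  rw [hpxy] at hcxy hpcx
  refine card_le_one.1 (hc _ _ hij (c (p y).1 y)) x ?_ y (by simp [← hpc y hy])
  simp only [mem_filter, mem_univ, true_and]
  exact ⟨hcxy, hpcx.symm.trans hcxy⟩

variable {i₀ : ι} {t t' : α}

theorem card_le_three_of_diffStar (htt' : t ≠ t') (ht' : 3 ≤ #{x | c i₀ x = t'})
    {s : Finset ι} (hs : ∀ i ∈ s, i ≠ i₀ ∧ DiffStar (c i₀) (c i) t) : #s ≤ 3 := by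
  classical
  exact card_le_three_of_card_inter_le_one ht' (A := fun i => {x ∈ {x | c i₀ x = t'} | c i x = t})
    (fun _ _ => filter_subset _ _)
    (fun i hi => card_le_card_filter_add_one_of_diffStar (hc i₀ i (hs i hi).1.symm t')
      (hs i hi).2 htt')
    fun i _ j _ hij => (card_le_card fun x hx => by simp_all).trans (hc i j hij t)

theorem sum_card_swapCols_le (s : Finset ι) (i₀ : ι) (t t' : α) :
    ∑ i ∈ s, #(swapCols (c i₀) (c i) t t') ≤ Fintype.card κ + 2 * (#s).choose 2 := by
  classical
  refine (sum_card_le_card_biUnion_add_mul_choose s _ fun i _ j _ hij => ?_).trans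
    (by gcongr; exact card_le_univ _)
  calc #(swapCols (c i₀) (c i) t t' ∩ swapCols (c i₀) (c j) t t')
      ≤ #(({x | c i x = t' ∧ c j x = t'} : Finset κ) ∪ ({x | c i x = t ∧ c j x = t} : Finset κ)) :=
        card_le_card fun x hx => by
          simp only [swapCols, mem_inter, mem_filter, mem_univ, true_and, mem_union] at hx ⊢
          grind
    _ ≤ 2 := (card_union_le _ _).trans (add_le_add (hc i j hij t') (hc i j hij t))

theorem card_le_card_swapCols_add_card_swapCols_add_five {i j : ι} (hij : i ≠ j) (hi : i ≠ i₀)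
    (hj : j ≠ i₀) {w : α} (hwi : StarOrTriangle (c i₀) (c i) t t' w)
    (hwj : StarOrTriangle (c i₀) (c j) t t' w) :
    #{x | c i₀ x ∈ ({t, t'} : Finset α)} ≤
      #(swapCols (c i₀) (c i) t t') + #(swapCols (c i₀) (c j) t t') + 5 := by
  have := card_le_card_swapCols_add_card_filter_add_two (hc i₀ i hi.symm) hwi
  have := card_le_card_swapCols_add_card_filter_add_two (hc i₀ j hj.symm) hwj
  have := hc.card_filter_add_card_filter_le hij {x | c i₀ x ∈ ({t, t'} : Finset α)} w
  omega

theorem card_le_of_diffWithin [Fintype α] {s : Finset ι} (hi₀ : i₀ ∉ s)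
    (hs : s.Nonempty) {S : Finset α} (hS : #S ≤ #s) (hW : ∀ i ∈ s, DiffWithin (c i₀) (c i) S) :
    Fintype.card κ ≤ Fintype.card α - #S + (#s + 1) * #s * #S := by
  classical
  obtain ⟨i, hi⟩ := hs
  have hout := card_filter_notMem_le (c i₀) S fun u hu =>
    (hW i hi).card_filter_le_one (hc i₀ i (ne_of_mem_of_not_mem hi hi₀).symm) hu
  have hin : #{x | c i₀ x ∈ S} ≤ #(insert i₀ s).offDiag * #S := by
    refine (card_le_card fun x hx => ?_).trans
      (hc.card_filter_forall_mem_le _ S (by rw [card_insert_of_notMem hi₀]; omega))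
    simp only [mem_filter, mem_univ, true_and, mem_insert, forall_eq_or_imp] at hx ⊢
    refine ⟨hx, fun j hj => ?_⟩
    by_cases hx' : c i₀ x = c j x
    · exact hx' ▸ hx
    · exact (hW j hj x hx').2
  rw [offDiag_card, card_insert_of_notMem hi₀, ← Nat.mul_sub_one, Nat.add_sub_cancel] at hin
  have := card_filter_add_card_filter_not (s := univ) fun x => c i₀ x ∈ S
  rw [card_univ] at this
  omega

variable [Fintype α] (htt' : t ≠ t') (hκ : Fintype.card κ = 11 * Fintype.card α + 1)
  (hα : 4 ≤ Fintype.card α) {s : Finset ι} (hs : ∀ i ∈ s, i ≠ i₀) (g : ι → α)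
  (hg : ∀ i ∈ s, StarOrTriangle (c i₀) (c i) t t' (g i))
include htt' hκ hα hs hg

theorem card_le_of_two_le_card (ht : 3 ≤ #{x | c i₀ x = t}) (ht' : 3 ≤ #{x | c i₀ x = t'})
    {v : α} (hvt : v ≠ t) (hvt' : v ≠ t') (hv : 2 ≤ #{x | c i₀ x = v}) :
    #s ≤ Fintype.card α := by
  classical
  set S : Finset α := {t, t', v}
  have hW : #{i ∈ s | DiffWithin (c i₀) (c i) S} ≤ 2 := by
    by_contra! H
    obtain ⟨s₃, hs₃, hcard⟩ := exists_subset_card_eq H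
    have hi₀ : i₀ ∉ s₃ := fun h => hs i₀ (mem_filter.1 (hs₃ h)).1 rfl
    have hS : #S ≤ 3 := card_le_three
    have := hc.card_le_of_diffWithin hi₀ (card_pos.1 (by omega)) (hS.trans hcard.ge)
      fun i hi => (mem_filter.1 (hs₃ hi)).2
    rw [hcard] at this
    omega
  have hstar : ∀ i ∈ s, ¬ DiffWithin (c i₀) (c i) S → DiffStar (c i₀) (c i) (g i) := by
    intro i hi hiS
    obtain ⟨-, -, hstar | hwithin⟩ := hg i hi
    · exact hstar
    · have hgv : g i = v := by
        by_contra hne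
        have := hwithin.card_filter_le_one (hc i₀ i (hs i hi).symm) (u := v)
          (by simp [hvt, hvt', Ne.symm hne])
        omega
      rw [hgv] at hwithin
      exact absurd hwithin hiS
  have := card_le_add_of_injOn _ hW g (T := {t, t'}) (fun i hi => (hg i hi).notMem_pair)
    fun i hi j hj hiS hjS hgij => by
      by_contra hij
      have := hc.card_le_card_swapCols_add_card_swapCols_add_five hij (hs i hi) (hs j hj) (hg i hi)
        (hgij ▸ hg j hj)
      rw [(hstar i hi hiS).swapCols_eq_empty htt' (hg i hi).1 (hg i hi).2.1,
        (hstar j hj hjS).swapCols_eq_empty htt' (hg j hj).1 (hg j hj).2.1,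
        card_empty, card_filter_mem_pair _ htt'] at this
      omega
  rw [card_pair htt'] at this
  omega

theorem card_le_of_card_le_one (hv : ∀ v, v ≠ t → v ≠ t' → #{x | c i₀ x = v} ≤ 1) :
    #s ≤ Fintype.card α := by
  classical
  set r := Fintype.card α
  have hY : 10 * r + 3 ≤ #{x | c i₀ x ∈ ({t, t'} : Finset α)} := by
    have := card_filter_notMem_le (c i₀) {t, t'} fun u hu => by
      simp only [mem_insert, mem_singleton, not_or] at hu
      exact hv u hu.1 hu.2
    have := card_filter_add_card_filter_not (s := univ) fun x => c i₀ x ∈ ({t, t'} : Finset α)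
    rw [card_pair htt', card_univ] at *
    omega
  have hH : #{i ∈ s | 5 * r ≤ #(swapCols (c i₀) (c i) t t') + 1} ≤ 2 := by
    by_contra! H
    obtain ⟨s₃, hs₃, hcard⟩ := exists_subset_card_eq H
    have hsum := hc.sum_card_swapCols_le s₃ i₀ t t'
    have := card_nsmul_le_sum s₃ (fun i => #(swapCols (c i₀) (c i) t t')) (5 * r - 1)
      fun i hi => by
        have := (mem_filter.1 (hs₃ hi)).2
        omega
    rw [hcard, smul_eq_mul] at this
    rw [hcard, hκ, show (3 : ℕ).choose 2 = 3 from rfl] at hsum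
    omega
  have := card_le_add_of_injOn _ hH g (T := {t, t'}) (fun i hi => (hg i hi).notMem_pair)
    fun i hi j hj hi' hj' hgij => by
      by_contra hij
      have := hc.card_le_card_swapCols_add_card_swapCols_add_five hij (hs i hi) (hs j hj) (hg i hi)
        (hgij ▸ hg j hj)
      omega
  rw [card_pair htt'] at this
  omega

theorem card_le_of_starOrTriangle (ht : 3 ≤ #{x | c i₀ x = t}) (ht' : 3 ≤ #{x | c i₀ x = t'}) :
    #s ≤ Fintype.card α := by
  by_cases hbig : ∃ v, v ≠ t ∧ v ≠ t' ∧ 2 ≤ #{x | c i₀ x = v}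
  · obtain ⟨v, hvt, hvt', hv⟩ := hbig
    exact hc.card_le_of_two_le_card htt' hκ hα hs g hg ht ht' hvt hvt' hv
  · push Not at hbig
    exact hc.card_le_of_card_le_one htt' hκ hα hs g hg fun v hvt hvt' => by
      have := hbig v hvt hvt'
      omega

end RowsAgreeAtMostOnce

theorem card_le_card_add_seven [Fintype ι] [Fintype α]
    (hc : RowsAgreeAtMostOnce c) (hrain : ∀ i j, DiffIntersecting (c i) (c j)) {i₀ : ι}
    {t t' : α} (htt' : t ≠ t') (ht : 3 ≤ #{x | c i₀ x = t}) (ht' : 3 ≤ #{x | c i₀ x = t'})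
    (hκ : Fintype.card κ = 11 * Fintype.card α + 1) (hα : 4 ≤ Fintype.card α) :
    Fintype.card ι ≤ Fintype.card α + 7 := by
  classical
  set R₁ : Finset ι := {i | i ≠ i₀ ∧ DiffStar (c i₀) (c i) t}
  set R₂ : Finset ι := {i | i ≠ i₀ ∧ DiffStar (c i₀) (c i) t'}
  set R : Finset ι := {i | i ≠ i₀ ∧ ∃ w, StarOrTriangle (c i₀) (c i) t t' w}
  have h₁ : #R₁ ≤ 3 := hc.card_le_three_of_diffStar htt' ht' fun i hi => (mem_filter.1 hi).2
  have h₂ : #R₂ ≤ 3 := hc.card_le_three_of_diffStar htt'.symm ht fun i hi => (mem_filter.1 hi).2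
  have : Nonempty α := ⟨t⟩
  choose! g hg using fun i (hi : i ∈ R) => (mem_filter.1 hi).2.2
  have hR : #R ≤ Fintype.card α :=
    hc.card_le_of_starOrTriangle htt' hκ hα (fun i hi => (mem_filter.1 hi).2.1) g hg ht ht'
  have hcover : univ.erase i₀ ⊆ R₁ ∪ R₂ ∪ R := fun i hi => by
    have hi := ne_of_mem_erase hi
    simp only [R₁, R₂, R, mem_union, mem_filter, mem_univ, true_and]
    by_cases h₁ : DiffStar (c i₀) (c i) t
    · tauto
    by_cases h₂ : DiffStar (c i₀) (c i) t'
    · tauto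
    exact .inr ⟨hi, (hrain i₀ i).exists_starOrTriangle (hc i₀ i hi.symm) htt' (by omega)
      (by omega) h₁ h₂⟩
  have := card_le_card hcover
  have := card_union_le (R₁ ∪ R₂) R
  have := card_union_le R₁ R₂
  rw [card_erase_of_mem (mem_univ _), card_univ] at *
  omega

end Grid

theorem grid_claim4
    (r : ℕ) (hr : 4 ≤ r)
    (c : Fin (2 * r + 5) × Fin (11 * r + 1) → Fin r)
    (hmono : ¬ ∃ (i i' : Fin (2 * r + 5)) (j j' : Fin (11 * r + 1)),
      i ≠ i' ∧ j ≠ j' ∧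
      c (i, j) = c (i', j) ∧ c (i', j) = c (i, j') ∧ c (i, j') = c (i', j'))
    (hrainbow : ¬ ∃ (i i' : Fin (2 * r + 5)) (j j' : Fin (11 * r + 1)),
      i ≠ i' ∧ j ≠ j' ∧
      c (i, j) ≠ c (i', j) ∧ c (i, j) ≠ c (i, j') ∧ c (i, j) ≠ c (i', j') ∧
      c (i', j) ≠ c (i, j') ∧ c (i', j) ≠ c (i', j') ∧ c (i, j') ≠ c (i', j')) :
    ¬ ∃ t t' : Fin r, t ≠ t' ∧
      3 ≤ (Finset.univ.filter fun j : Fin (11 * r + 1) => c (0, j) = t).card ∧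
      3 ≤ (Finset.univ.filter fun j : Fin (11 * r + 1) => c (0, j) = t').card := by
  rintro ⟨t, t', htt', ht, ht'⟩
  have := card_le_card_add_seven (c := fun i x => c (i, x))
    (rowsAgreeAtMostOnce_of_not_exists hmono) (diffIntersecting_of_not_exists hrainbow) htt' ht ht'
    (by simp) (by simpa using hr)
  simp only [Fintype.card_fin] at this
  omega
end

section
/- Let r ≥ 4 be an integer and let c : Fin (2r+5) × Fin (11r+1) → Fin r be a coloring of the ((2r+5) × (11r+1))-grid containing no monochromatic grid rectangle and no rainbow grid rectangle. Then in row 0 there do not exist three pairwise distinct colors each appearing at least 2 times; that is, there do not exist pairwise distinct colors t, t', t'' with |{j : c(0,j) = t}| ≥ 2, |{j : c(0,j) = t'}| ≥ 2 and |{j : c(0,j) = t''}| ≥ 2. (Equivalently, the third-largest color class of row 0 has size at most 1.) -/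
/-!
Pigeonhole gives a colour `p` on a set `s` of 12 columns of row 0; let `q ≠ q'`, both `≠ p`,
each occur twice in row 0. Without monochromatic rectangles every other row uses `p` at most once
on `s`, and a colour used at least 7 times on `s` is so used by at most one row: at most `r - 1`
rows are heavy. A row showing only `p` or row 0's colour at the four `q`/`q'` columns shows `p` at
a `q`-column and at a `q'`-column, and two rows cannot share such a pair: at most 4 rows.
Any other row has a column `v` where its colour `b` differs from `p` and from row 0's colour `a`
there; excluding rainbow rectangles confines the row to `{p, a, b}` on the 12 columns, so unless it
is heavy, `a` and `b` both occur at least 5 times. These pairs of frequent colours pairwise meet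
(again by rainbow-freeness) and no colour is frequent in four rows (four 5-sets of a 12-set meeting
pairwise in at most one point cover 14 points), which leaves at most 4 such rows.
Hence `2r + 4 ≤ (r - 1) + 4 + 4`, contradicting `r ≥ 4`.
-/

open Finset

namespace Finset

variable {ι α : Type*} [DecidableEq α]

theorem mem_of_not_disjoint_of_card_eq_two {s t : Finset α} {b z : α} (ht : #t = 2) (hb : b ∈ t)
    (hz : z ∈ t) (hbz : b ≠ z) (hst : ¬Disjoint s t) (hbs : b ∉ s) : z ∈ s := by
  obtain ⟨y, hys, hyt⟩ := not_disjoint_iff.1 hst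
  have htbz : {b, z} = t := eq_of_subset_of_card_le (by simp [insert_subset_iff, hb, hz])
    (by rw [ht, card_pair hbz])
  rw [← htbz, mem_insert, mem_singleton] at hyt
  rcases hyt with rfl | rfl
  exacts [absurd hys hbs, hys]

theorem card_mul_le_card_biUnion_add_choose [DecidableEq ι] {T : Finset ι} {A : ι → Finset α}
    {a : ℕ} (hA : ∀ i ∈ T, a ≤ #(A i)) (hAA : ∀ i ∈ T, ∀ j ∈ T, i ≠ j → #(A i ∩ A j) ≤ 1) :
    #T * a ≤ #(T.biUnion A) + (#T).choose 2 := by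
  induction T using Finset.induction_on with
  | empty => simp
  | insert t T ht ih =>
    have hinter : #(A t ∩ T.biUnion A) ≤ #T := by
      rw [inter_biUnion]
      simpa using card_biUnion_le_card_mul T _ 1 fun j hj =>
        hAA t (mem_insert_self t T) j (mem_insert_of_mem hj) (by rintro rfl; exact ht hj)
    have hunion := card_union_add_card_inter (A t) (T.biUnion A)
    have ih' := ih (fun i hi => hA i (mem_insert_of_mem hi))
      (fun i hi j hj => hAA i (mem_insert_of_mem hi) j (mem_insert_of_mem hj))
    have ht' := hA t (mem_insert_self t T)
    have hchoose : (#T + 1).choose 2 = (#T).choose 2 + #T := by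
      rw [Nat.choose_succ_succ', Nat.choose_one_right, add_comm]
    rw [card_insert_of_notMem ht, biUnion_insert, hchoose, Nat.succ_mul]
    omega

theorem two_mul_card_le_of_pairwise_not_disjoint {T : Finset ι} {S : ι → Finset α} {d : ℕ}
    (hcard : ∀ i ∈ T, #(S i) = 2) (hinter : ∀ i ∈ T, ∀ j ∈ T, i ≠ j → ¬Disjoint (S i) (S j))
    (hdeg : ∀ x, #{i ∈ T | x ∈ S i} ≤ d) : 2 * #T ≤ 3 * d := by
  rcases T.eq_empty_or_nonempty with rfl | ⟨i₀, hi₀⟩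
  · simp
  obtain ⟨a, b, hab, hS₀⟩ := card_eq_two.1 (hcard i₀ hi₀)
  have hab_mem : ∀ i ∈ T, a ∈ S i ∨ b ∈ S i := by
    intro i hi
    by_cases h : i = i₀
    · simp [h, hS₀]
    exact or_iff_not_imp_left.2 <| mem_of_not_disjoint_of_card_eq_two (hcard i₀ hi₀)
      (by simp [hS₀]) (by simp [hS₀]) hab (hinter i hi i₀ hi₀ h)
  have card_le_of_forall_mem {x : α} (hx : ∀ i ∈ T, x ∈ S i) : #T ≤ d := by
    simpa [filter_true_of_mem hx] using hdeg x
  by_cases hA : ∃ j ∈ T, a ∈ S j ∧ b ∉ S j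
  swap
  · push Not at hA
    have := card_le_of_forall_mem fun i hi => (hab_mem i hi).elim (hA i hi) id
    omega
  by_cases hB : ∃ k ∈ T, b ∈ S k ∧ a ∉ S k
  swap
  · push Not at hB
    have := card_le_of_forall_mem fun i hi => (hab_mem i hi).elim id (hB i hi)
    omega
  obtain ⟨j, hj, haj, hbj⟩ := hA
  obtain ⟨k, hk, hbk, hak⟩ := hB
  obtain ⟨z, hzj, hzk⟩ := not_disjoint_iff.1 (hinter j hj k hk (by rintro rfl; exact hbj hbk))
  have hza : z ≠ a := by rintro rfl; exact hak hzk
  have hzb : z ≠ b := by rintro rfl; exact hbj hzj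
  have key : ∀ i ∈ T, (a ∈ S i ∧ b ∈ S i) ∨ z ∈ S i := by
    intro i hi
    by_cases ha : a ∈ S i <;> by_cases hb : b ∈ S i
    · exact Or.inl ⟨ha, hb⟩
    · exact Or.inr <| mem_of_not_disjoint_of_card_eq_two (hcard k hk) hbk hzk hzb.symm
        (hinter i hi k hk (by rintro rfl; exact hb hbk)) hb
    · exact Or.inr <| mem_of_not_disjoint_of_card_eq_two (hcard j hj) haj hzj hza.symm
        (hinter i hi j hj (by rintro rfl; exact ha haj)) ha
    · exact ((hab_mem i hi).elim ha hb).elim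
  have hsum : ∑ i ∈ T, 2 ≤ ∑ i ∈ T, ((if a ∈ S i then 1 else 0) + (if b ∈ S i then 1 else 0)
      + (if z ∈ S i then 1 else 0)) := by
    refine sum_le_sum fun i hi => ?_
    have := key i hi
    have := hab_mem i hi
    split_ifs <;> simp_all
  simp only [sum_add_distrib, ← card_filter, sum_const, smul_eq_mul] at hsum
  have := hdeg a
  have := hdeg b
  have := hdeg z
  omega

theorem exists_crossing_of_card_eq_two {β : Type*} {X : Finset α} {Y : Finset β}
    (R : α → β → Prop) (hX : #X = 2) (hY : #Y = 2)
    (hXY : ∀ x ∈ X, ∃ y ∈ Y, R x y) (hYX : ∀ y ∈ Y, ∃ x ∈ X, R x y) :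
    ∃ x ∈ X, ∃ x' ∈ X, ∃ y ∈ Y, ∃ y' ∈ Y, x ≠ x' ∧ y ≠ y' ∧ R x y ∧ R x' y' := by
  obtain ⟨a, b, hab, rfl⟩ := card_eq_two.1 hX
  obtain ⟨ya, hya, hRa⟩ := hXY a (by simp)
  obtain ⟨yb, hyb, hRb⟩ := hXY b (by simp)
  by_cases hy : ya = yb
  · subst hy
    classical
    obtain ⟨y', hy', hyy'⟩ := exists_mem_ne (by omega : 1 < #Y) ya
    obtain ⟨x, hx, hRx⟩ := hYX y' hy'
    rw [mem_insert, mem_singleton] at hx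
    rcases hx with rfl | rfl
    · exact ⟨x, by simp, b, by simp, y', hy', ya, hya, hab, hyy', hRx, hRb⟩
    · exact ⟨a, by simp, x, by simp, ya, hya, y', hy', hab, hyy'.symm, hRa, hRx⟩
  · exact ⟨a, by simp, b, by simp, ya, hya, yb, hyb, hab, hy, hRa, hRb⟩

end Finset

section Grid

variable {ι κ γ : Type*}

def HasMonoRect (c : ι × κ → γ) : Prop :=
  ∃ (i i' : ι) (j j' : κ), i ≠ i' ∧ j ≠ j' ∧
    c (i, j) = c (i', j) ∧ c (i', j) = c (i, j') ∧ c (i, j') = c (i', j')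

def HasRainbowRect (c : ι × κ → γ) : Prop :=
  ∃ (i i' : ι) (j j' : κ), i ≠ i' ∧ j ≠ j' ∧
    c (i, j) ≠ c (i', j) ∧ c (i, j) ≠ c (i, j') ∧ c (i, j) ≠ c (i', j') ∧
    c (i', j) ≠ c (i, j') ∧ c (i', j) ≠ c (i', j') ∧ c (i, j') ≠ c (i', j')

def frequentColors [Fintype γ] [DecidableEq γ] (c : ι × κ → γ) (s : Finset κ) (k : ℕ) (i : ι) :
    Finset γ :=
  {x | k ≤ #{u ∈ s | c (i, u) = x}}

def IsSplitRow [Fintype γ] [DecidableEq γ] (c : ι × κ → γ) (s : Finset κ) (p : γ) (i : ι) : Prop :=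
  #(frequentColors c s 5 i) = 2 ∧ ∀ u ∈ s, c (i, u) = p ∨ c (i, u) ∈ frequentColors c s 5 i

variable {c : ι × κ → γ}

theorem eq_or_eq_or_eq_of_not_hasRainbowRect (hR : ¬HasRainbowRect c) {i i' : ι} {j j' : κ}
    (hi : i ≠ i') (h₁ : c (i, j) ≠ c (i, j')) (h₂ : c (i, j) ≠ c (i', j'))
    (h₃ : c (i, j') ≠ c (i', j')) :
    c (i', j) = c (i, j) ∨ c (i', j) = c (i, j') ∨ c (i', j) = c (i', j') := by
  by_contra h
  push Not at h
  exact hR ⟨i, i', j, j', hi, by rintro rfl; exact h₁ rfl, h.1.symm, h₁, h₂, h.2.1, h.2.2, h₃⟩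

theorem subsingleton_setOf_eq_and_eq (hM : ¬HasMonoRect c) {j j' : κ} (hj : j ≠ j') (x : γ) :
    {i | c (i, j) = x ∧ c (i, j') = x}.Subsingleton := by
  rintro i ⟨hij, hij'⟩ i' ⟨hi'j, hi'j'⟩
  by_contra hi
  exact hM ⟨i, i', j, j', hi, hj, hij.trans hi'j.symm, hi'j.trans hij'.symm, hij'.trans hi'j'.symm⟩

theorem eq_or_eq_of_not_hasMonoRect (hM : ¬HasMonoRect c) {i₀ i : ι} {v₁ v₂ : κ} {p q : γ}
    (hi : i ≠ i₀) (hv : v₁ ≠ v₂) (h₁ : c (i₀, v₁) = q) (h₂ : c (i₀, v₂) = q)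
    (hv₁ : c (i, v₁) = p ∨ c (i, v₁) = q) (hv₂ : c (i, v₂) = p ∨ c (i, v₂) = q) :
    c (i, v₁) = p ∨ c (i, v₂) = p := by
  refine hv₁.imp_right fun hq₁ => hv₂.resolve_right fun hq₂ => hi ?_
  exact subsingleton_setOf_eq_and_eq hM hv q ⟨hq₁, hq₂⟩ ⟨h₁, h₂⟩

theorem card_le_mul_of_forall_exists_eq (hM : ¬HasMonoRect c) {T : Finset ι}
    {W W' : Finset κ} {x : γ} (hWW' : Disjoint W W')
    (hT : ∀ i ∈ T, (∃ w ∈ W, c (i, w) = x) ∧ ∃ w ∈ W', c (i, w) = x) :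
    #T ≤ #W * #W' := by
  rw [← card_product]
  refine card_le_card_of_forall_subsingleton (fun i w => c (i, w.1) = x ∧ c (i, w.2) = x)
    (fun i hi => ?_) fun w hw => ?_
  · obtain ⟨⟨w, hw, hiw⟩, w', hw', hiw'⟩ := hT i hi
    exact ⟨(w, w'), mem_product.2 ⟨hw, hw'⟩, hiw, hiw'⟩
  · obtain ⟨hw₁, hw₂⟩ := mem_product.1 hw
    have hne : w.1 ≠ w.2 := by
      rintro h
      exact disjoint_left.1 hWW' hw₁ (h ▸ hw₂)
    exact (subsingleton_setOf_eq_and_eq hM hne x).anti fun i hi => hi.2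

variable [DecidableEq γ]

theorem card_filter_inter_filter_le_one [DecidableEq κ] (hM : ¬HasMonoRect c) {i i' : ι}
    (hi : i ≠ i') (s : Finset κ) (x : γ) :
    #({u ∈ s | c (i, u) = x} ∩ {u ∈ s | c (i', u) = x}) ≤ 1 := by
  refine card_le_one.2 fun u hu u' hu' => ?_
  simp only [mem_inter, mem_filter] at hu hu'
  by_contra hu''
  exact hM ⟨i, i', u, u', hi, hu'', hu.1.2.trans hu.2.2.symm, hu.2.2.trans hu'.1.2.symm,
    hu'.1.2.trans hu'.2.2.symm⟩

theorem card_filter_le_one_of_forall_eq [DecidableEq κ] (hM : ¬HasMonoRect c) {i₀ i : ι}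
    (hi : i ≠ i₀) {s : Finset κ} {x : γ} (h₀ : ∀ u ∈ s, c (i₀, u) = x) :
    #{u ∈ s | c (i, u) = x} ≤ 1 := by
  simpa [filter_true_of_mem h₀, inter_eq_left.2 (filter_subset _ s)] using
    card_filter_inter_filter_le_one hM hi s x

theorem card_mul_le_of_le_card_filter [DecidableEq ι] [DecidableEq κ] (hM : ¬HasMonoRect c)
    {T : Finset ι} {s : Finset κ} {x : γ} {a : ℕ} (hT : ∀ i ∈ T, a ≤ #{u ∈ s | c (i, u) = x}) :
    #T * a ≤ #s + (#T).choose 2 := by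
  have hsub : T.biUnion (fun i => {u ∈ s | c (i, u) = x}) ⊆ s :=
    biUnion_subset.2 fun _ _ => filter_subset _ _
  have := card_mul_le_card_biUnion_add_choose hT
    fun i _ j _ hij => card_filter_inter_filter_le_one hM hij s x
  have := card_le_card hsub
  omega

theorem card_le_card_of_forall_exists_le_card_filter [DecidableEq κ] (hM : ¬HasMonoRect c)
    {T : Finset ι} {C : Finset γ} {s : Finset κ} {k : ℕ} (hk : #s + 1 < 2 * k)
    (hT : ∀ i ∈ T, ∃ x ∈ C, k ≤ #{u ∈ s | c (i, u) = x}) : #T ≤ #C := by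
  refine card_le_card_of_forall_subsingleton _ hT fun x _ i hi i' hi' => ?_
  by_contra hii'
  have := card_filter_inter_filter_le_one hM hii' s x
  have := card_union_add_card_inter {u ∈ s | c (i, u) = x} {u ∈ s | c (i', u) = x}
  have := card_le_card (union_subset (filter_subset (fun u => c (i, u) = x) s)
    (filter_subset (fun u => c (i', u) = x) s))
  have := hi.2
  have := hi'.2
  omega

theorem exists_eq_and_mem_of_card_filter_le_one {s : Finset κ} {i i' : ι} {p x : γ}
    {Y : Finset γ} (hsY : ∀ u ∈ s, c (i', u) = p ∨ c (i', u) ∈ Y)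
    (hp : #{u ∈ s | c (i', u) = p} ≤ 1) (hx : 2 ≤ #{u ∈ s | c (i, u) = x}) :
    ∃ u ∈ s, c (i, u) = x ∧ c (i', u) ∈ Y := by
  obtain ⟨u, hux, hup⟩ := exists_mem_notMem_of_card_lt_card (hp.trans_lt hx)
  simp only [mem_filter] at hux hup
  exact ⟨u, hux.1, hux.2, (hsY u hux.1).resolve_left fun h => hup ⟨hux.1, h⟩⟩

theorem not_disjoint_of_not_hasRainbowRect (hR : ¬HasRainbowRect c) {i i' : ι} (hii' : i ≠ i')
    {s : Finset κ} {p : γ} {X Y : Finset γ} (hX : #X = 2) (hY : #Y = 2)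
    (hsX : ∀ u ∈ s, c (i, u) = p ∨ c (i, u) ∈ X) (hsY : ∀ u ∈ s, c (i', u) = p ∨ c (i', u) ∈ Y)
    (hpX : #{u ∈ s | c (i, u) = p} ≤ 1) (hpY : #{u ∈ s | c (i', u) = p} ≤ 1)
    (hXs : ∀ x ∈ X, 2 ≤ #{u ∈ s | c (i, u) = x}) (hYs : ∀ y ∈ Y, 2 ≤ #{u ∈ s | c (i', u) = y}) :
    ¬Disjoint X Y := by
  intro hXY
  -- two colour pairs `(x, y)`, `(x', y')` crossing between `X` and `Y` span a rainbow rectangle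
  obtain ⟨x, hx, x', hx', y, hy, y', hy', hxx', hyy', ⟨u, -, hux, huy⟩, ⟨u', -, hux', huy'⟩⟩ :=
    exists_crossing_of_card_eq_two (fun x y => ∃ u ∈ s, c (i, u) = x ∧ c (i', u) = y) hX hY
      (fun x hx => by
        obtain ⟨u, hu, hux, huy⟩ := exists_eq_and_mem_of_card_filter_le_one hsY hpY (hXs x hx)
        exact ⟨_, huy, u, hu, hux, rfl⟩)
      (fun y hy => by
        obtain ⟨u, hu, huy, hux⟩ := exists_eq_and_mem_of_card_filter_le_one hsX hpX (hYs y hy)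
        exact ⟨_, hux, u, hu, rfl, huy⟩)
  have hXY' {a b : γ} (ha : a ∈ X) (hb : b ∈ Y) : a ≠ b := ne_of_mem_of_not_mem hb
    (disjoint_left.1 hXY ha) |>.symm
  rcases eq_or_eq_or_eq_of_not_hasRainbowRect hR hii' (j := u) (j' := u')
    (by rw [hux, hux']; exact hxx') (by rw [hux, huy']; exact hXY' hx hy')
    (by rw [hux', huy']; exact hXY' hx' hy') with h | h | h <;>
    simp only [huy, hux, hux', huy'] at h
  · exact hXY' hx hy h.symm
  · exact hXY' hx' hy h.symm
  · exact hyy' h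

theorem frequentColors_eq_pair [Fintype γ] [DecidableEq κ] {s : Finset κ} {i : ι} {p a b : γ}
    (hs : ∀ u ∈ s, c (i, u) = p ∨ c (i, u) = a ∨ c (i, u) = b) (hcard : #s = 12)
    (hp : #{u ∈ s | c (i, u) = p} ≤ 1) (hlight : ∀ x, #{u ∈ s | c (i, u) = x} ≤ 6) :
    frequentColors c s 5 i = {a, b} := by
  have hcover : s ⊆ {u ∈ s | c (i, u) = p} ∪ {u ∈ s | c (i, u) = a} ∪ {u ∈ s | c (i, u) = b} := by
    intro u hu
    rcases hs u hu with h | h | h <;> simp [hu, h]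
  have h₁ := card_le_card hcover
  have h₂ := card_union_le ({u ∈ s | c (i, u) = p} ∪ {u ∈ s | c (i, u) = a})
    {u ∈ s | c (i, u) = b}
  have h₃ := card_union_le {u ∈ s | c (i, u) = p} {u ∈ s | c (i, u) = a}
  have ha := hlight a
  have hb := hlight b
  ext x
  simp only [frequentColors, mem_filter, mem_univ, true_and, mem_insert, mem_singleton]
  refine ⟨fun hx => ?_, by rintro (rfl | rfl) <;> omega⟩
  by_contra hxab
  push Not at hxab
  have : {u ∈ s | c (i, u) = x} ⊆ {u ∈ s | c (i, u) = p} := by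
    intro u hu
    rw [mem_filter] at hu ⊢
    refine ⟨hu.1, (hs u hu.1).resolve_right ?_⟩
    rw [hu.2]
    tauto
  have := card_le_card this
  omega

theorem card_le_four_of_isSplitRow [Fintype γ] [DecidableEq ι] [DecidableEq κ]
    (hM : ¬HasMonoRect c) (hR : ¬HasRainbowRect c) {T : Finset ι} {s : Finset κ} {p : γ}
    (hs : #s = 12) (hp : ∀ i ∈ T, #{u ∈ s | c (i, u) = p} ≤ 1)
    (hT : ∀ i ∈ T, IsSplitRow c s p i) :
    #T ≤ 4 := by
  have hdeg (x : γ) : #{i ∈ T | x ∈ frequentColors c s 5 i} ≤ 3 := by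
    by_contra! h
    obtain ⟨T', hT', hT'card⟩ := exists_subset_card_eq h
    have := card_mul_le_of_le_card_filter hM (T := T') (s := s) (x := x) (a := 5) fun i hi => by
      simpa [frequentColors] using (mem_filter.1 (hT' hi)).2
    rw [hT'card, hs] at this
    simp [Nat.choose] at this
  have hfreq (i : ι) : ∀ x ∈ frequentColors c s 5 i, 2 ≤ #{u ∈ s | c (i, u) = x} := by
    intro x hx
    simp only [frequentColors, mem_filter, mem_univ, true_and] at hx
    omega
  have := two_mul_card_le_of_pairwise_not_disjoint (fun i hi => (hT i hi).1)
    (fun i hi j hj hij => not_disjoint_of_not_hasRainbowRect hR hij (hT i hi).1 (hT j hj).1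
      (hT i hi).2 (hT j hj).2 (hp i hi) (hp j hj) (hfreq i) (hfreq j)) hdeg
  omega

theorem isSplitRow_of_not_hasRainbowRect [Fintype γ] [DecidableEq κ] (hM : ¬HasMonoRect c)
    (hR : ¬HasRainbowRect c) {i₀ i : ι} (hi : i ≠ i₀) {s : Finset κ} {p : γ} (hs : #s = 12)
    (h₀ : ∀ u ∈ s, c (i₀, u) = p) (hlight : ∀ x, #{u ∈ s | c (i, u) = x} ≤ 6) {v : κ}
    (hv₀ : c (i₀, v) ≠ p) (hv : c (i, v) ≠ p) (hvv : c (i, v) ≠ c (i₀, v)) :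
    IsSplitRow c s p i := by
  have hrow : ∀ u ∈ s, c (i, u) = p ∨ c (i, u) = c (i₀, v) ∨ c (i, u) = c (i, v) := by
    intro u hu
    have := eq_or_eq_or_eq_of_not_hasRainbowRect hR hi.symm (j := u) (j' := v)
      (by rw [h₀ u hu]; exact hv₀.symm) (by rw [h₀ u hu]; exact hv.symm) hvv.symm
    rwa [h₀ u hu] at this
  rw [IsSplitRow, frequentColors_eq_pair hrow hs (card_filter_le_one_of_forall_eq hM hi h₀) hlight,
    card_pair hvv.symm]
  exact ⟨rfl, fun u hu => by simpa using hrow u hu⟩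

theorem heavy_or_pinned_or_isSplitRow [Fintype γ] [DecidableEq κ] (hM : ¬HasMonoRect c)
    (hR : ¬HasRainbowRect c) {i₀ i : ι} (hi : i ≠ i₀) {s : Finset κ} {p q : γ} (hs : #s = 12)
    (h₀ : ∀ u ∈ s, c (i₀, u) = p) {v₁ v₂ : κ} (hv : v₁ ≠ v₂) (hv₁ : c (i₀, v₁) = q)
    (hv₂ : c (i₀, v₂) = q) (hqp : q ≠ p) :
    (∃ x, 7 ≤ #{u ∈ s | c (i, u) = x}) ∨ (c (i, v₁) = p ∨ c (i, v₂) = p) ∨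
      IsSplitRow c s p i := by
  by_cases hheavy : ∃ x, 7 ≤ #{u ∈ s | c (i, u) = x}
  · exact Or.inl hheavy
  push Not at hheavy
  have hsplit {v : κ} (hvq : c (i₀, v) = q) (hvp : c (i, v) ≠ p) (hvv : c (i, v) ≠ q) :
      IsSplitRow c s p i :=
    isSplitRow_of_not_hasRainbowRect hM hR hi hs h₀ (fun x => Nat.le_of_lt_succ (hheavy x))
      (hvq ▸ hqp) hvp (hvq ▸ hvv)
  by_cases h₁ : c (i, v₁) = p ∨ c (i, v₁) = q
  · by_cases h₂ : c (i, v₂) = p ∨ c (i, v₂) = q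
    · exact Or.inr (Or.inl (eq_or_eq_of_not_hasMonoRect hM hi hv hv₁ hv₂ h₁ h₂))
    · push Not at h₂
      exact Or.inr (Or.inr (hsplit hv₂ h₂.1 h₂.2))
  · push Not at h₁
    exact Or.inr (Or.inr (hsplit hv₁ h₁.1 h₁.2))

theorem card_heavy_rows_le [Fintype ι] [DecidableEq ι] [Fintype γ] [DecidableEq κ]
    (hM : ¬HasMonoRect c) {i₀ : ι} {s : Finset κ} {p : γ} (hs : #s = 12)
    (h₀ : ∀ u ∈ s, c (i₀, u) = p) :
    #{i ∈ univ.erase i₀ | ∃ x, 7 ≤ #{u ∈ s | c (i, u) = x}} ≤ Fintype.card γ - 1 := by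
  rw [← card_univ, ← card_erase_of_mem (mem_univ p)]
  refine card_le_card_of_forall_exists_le_card_filter hM (s := s) (k := 7) (by omega)
    fun i hi => ?_
  obtain ⟨hi, x, hx⟩ := mem_filter.1 hi
  refine ⟨x, mem_erase.2 ⟨?_, mem_univ x⟩, hx⟩
  rintro rfl
  have := card_filter_le_one_of_forall_eq hM (ne_of_mem_erase hi) h₀
  omega

theorem card_le_card_add_eight [Fintype ι] [DecidableEq ι] [Fintype κ] [DecidableEq κ] [Fintype γ]
    (hM : ¬HasMonoRect c) (hR : ¬HasRainbowRect c) {i₀ : ι} {p q q' : γ}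
    (hp : 12 ≤ #{u | c (i₀, u) = p}) (hq : 2 ≤ #{u | c (i₀, u) = q})
    (hq' : 2 ≤ #{u | c (i₀, u) = q'}) (hqp : q ≠ p) (hq'p : q' ≠ p) (hqq' : q ≠ q') :
    Fintype.card ι ≤ Fintype.card γ + 8 := by
  classical
  obtain ⟨s, hs₀, hs⟩ := exists_subset_card_eq hp
  have h₀ : ∀ u ∈ s, c (i₀, u) = p := fun u hu => (mem_filter.1 (hs₀ hu)).2
  obtain ⟨v₁, hv₁, v₂, hv₂, hv⟩ := one_lt_card.1 hq
  obtain ⟨v₁', hv₁', v₂', hv₂', hv'⟩ := one_lt_card.1 hq'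
  simp only [mem_filter, mem_univ, true_and] at hv₁ hv₂ hv₁' hv₂'
  set H := {i ∈ univ.erase i₀ | ∃ x, 7 ≤ #{u ∈ s | c (i, u) = x}}
  set B := {i ∈ univ.erase i₀ |
    (c (i, v₁) = p ∨ c (i, v₂) = p) ∧ (c (i, v₁') = p ∨ c (i, v₂') = p)}
  set N := {i ∈ univ.erase i₀ | IsSplitRow c s p i}
  have hH : #H ≤ Fintype.card γ - 1 := card_heavy_rows_le hM hs h₀
  have hB : #B ≤ 4 := by
    have hW : Disjoint ({v₁, v₂} : Finset κ) {v₁', v₂'} := by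
      have hq₀ : ∀ w ∈ ({v₁, v₂} : Finset κ), c (i₀, w) = q := by simp [hv₁, hv₂]
      have hq₀' : ∀ w ∈ ({v₁', v₂'} : Finset κ), c (i₀, w) = q' := by simp [hv₁', hv₂']
      exact disjoint_left.2 fun w hw hw' => hqq' ((hq₀ w hw).symm.trans (hq₀' w hw'))
    refine (card_le_mul_of_forall_exists_eq hM (x := p) hW fun i hi => ?_).trans
      (Nat.mul_le_mul card_le_two card_le_two)
    simpa using (mem_filter.1 hi).2
  have hN : #N ≤ 4 := card_le_four_of_isSplitRow hM hR hs
    (fun i hi => card_filter_le_one_of_forall_eq hM (ne_of_mem_erase (mem_filter.1 hi).1) h₀)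
    fun i hi => (mem_filter.1 hi).2
  have hcover : univ.erase i₀ ⊆ H ∪ B ∪ N := by
    intro i hi
    have hi₀ := ne_of_mem_erase hi
    have := heavy_or_pinned_or_isSplitRow hM hR hi₀ hs h₀ hv hv₁ hv₂ hqp
    have := heavy_or_pinned_or_isSplitRow hM hR hi₀ hs h₀ hv' hv₁' hv₂' hq'p
    simp only [H, B, N, mem_union, mem_filter, mem_erase, mem_univ, and_true, ne_eq, hi₀,
      not_false_eq_true, true_and]
    tauto
  have hcard := card_le_card hcover
  rw [card_erase_of_mem (mem_univ _), card_univ] at hcard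
  have := card_union_le (H ∪ B) N
  have := card_union_le H B
  have : 0 < Fintype.card γ := Fintype.card_pos_iff.2 ⟨p⟩
  omega

end Grid

theorem grid_claim5
    (r : ℕ) (hr : 4 ≤ r)
    (c : Fin (2 * r + 5) × Fin (11 * r + 1) → Fin r)
    (hmono : ¬ ∃ (i i' : Fin (2 * r + 5)) (j j' : Fin (11 * r + 1)),
      i ≠ i' ∧ j ≠ j' ∧
      c (i, j) = c (i', j) ∧ c (i', j) = c (i, j') ∧ c (i, j') = c (i', j'))
    (hrainbow : ¬ ∃ (i i' : Fin (2 * r + 5)) (j j' : Fin (11 * r + 1)),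
      i ≠ i' ∧ j ≠ j' ∧
      c (i, j) ≠ c (i', j) ∧ c (i, j) ≠ c (i, j') ∧ c (i, j) ≠ c (i', j') ∧
      c (i', j) ≠ c (i, j') ∧ c (i', j) ≠ c (i', j') ∧ c (i, j') ≠ c (i', j')) :
    ¬ ∃ t t' t'' : Fin r, t ≠ t' ∧ t ≠ t'' ∧ t' ≠ t'' ∧
      2 ≤ (Finset.univ.filter fun j : Fin (11 * r + 1) => c (0, j) = t).card ∧
      2 ≤ (Finset.univ.filter fun j : Fin (11 * r + 1) => c (0, j) = t').card ∧
      2 ≤ (Finset.univ.filter fun j : Fin (11 * r + 1) => c (0, j) = t'').card := by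
  rintro ⟨t, t', t'', htt', htt'', ht't'', ht, ht', ht''⟩
  obtain ⟨p, -, hp⟩ := exists_lt_card_fiber_of_mul_lt_card_of_maps_to
    (f := fun j : Fin (11 * r + 1) => c (0, j)) (s := univ) (t := univ) (n := 11)
    (fun _ _ => mem_univ _) (by simp only [card_univ, Fintype.card_fin]; omega)
  obtain ⟨q, q', hqp, hq'p, hqq', hq, hq'⟩ : ∃ q q', q ≠ p ∧ q' ≠ p ∧ q ≠ q' ∧
      2 ≤ #{j | c (0, j) = q} ∧ 2 ≤ #{j | c (0, j) = q'} := by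
    by_cases htp : t = p
    · exact ⟨t', t'', htp ▸ htt'.symm, htp ▸ htt''.symm, ht't'', ht', ht''⟩
    by_cases ht'p : t' = p
    · exact ⟨t, t'', htp, ht'p ▸ ht't''.symm, htt'', ht, ht''⟩
    · exact ⟨t, t', htp, ht'p, htt', ht, ht'⟩
  have := card_le_card_add_eight hmono hrainbow hp hq hq' hqp hq'p hqq'
  simp only [Fintype.card_fin] at this
  omega
end

section
/- Let r ≥ 4 be an integer and let c : Fin (2r+5) × Fin (11r+1) → Fin r be a coloring of the ((2r+5) × (11r+1))-grid containing no monochromatic grid rectangle and no rainbow grid rectangle. Then for every row index i ∈ Fin (2r+5) there exists a color t ∈ Fin r such that |{j : c(i,j) = t}| ≥ 10r + 1; that is, every row contains at least 10r+1 points of the same color. -/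
open Finset

namespace GridLMR

variable {r : ℕ}

def supp (c : Fin (2 * r + 5) × Fin (11 * r + 1) → Fin r) (i : Fin (2 * r + 5)) (t : Fin r) :
    Finset (Fin (11 * r + 1)) :=
  Finset.univ.filter fun j => c (i, j) = t

def mixed (c : Fin (2 * r + 5) × Fin (11 * r + 1) → Fin r) (y z : Fin (2 * r + 5)) :
    Finset (Fin (11 * r + 1)) :=
  Finset.univ.filter fun j => ¬ c (y, j) = c (z, j)

def MonoFree (c : Fin (2 * r + 5) × Fin (11 * r + 1) → Fin r) : Prop :=
  ∀ (i i' : Fin (2 * r + 5)) (j j' : Fin (11 * r + 1)) (t : Fin r),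
    i ≠ i' → j ≠ j' → c (i, j) = t → c (i', j) = t → c (i, j') = t → c (i', j') = t → False

lemma inter_le_one (c : Fin (2 * r + 5) × Fin (11 * r + 1) → Fin r) (hm : MonoFree c)
    {i i' : Fin (2 * r + 5)} (h : i ≠ i') (t : Fin r) :
    (supp c i t ∩ supp c i' t).card ≤ 1 := by
  by_contra hlt
  push_neg at hlt
  obtain ⟨j, hj, j', hj', hne⟩ := Finset.one_lt_card.mp hlt
  simp only [supp, mem_inter, mem_filter, mem_univ, true_and] at hj hj'
  exact hm i i' j j' t h hne hj.1 hj.2 hj'.1 hj'.2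

lemma pair_bound (c : Fin (2 * r + 5) × Fin (11 * r + 1) → Fin r) (hm : MonoFree c)
    {i i' : Fin (2 * r + 5)} (h : i ≠ i') (t : Fin r) :
    (supp c i t).card + (supp c i' t).card ≤ 11 * r + 2 := by
  have h1 := Finset.card_union_add_card_inter (supp c i t) (supp c i' t)
  have h2 : (supp c i t ∪ supp c i' t).card ≤ 11 * r + 1 := by
    simpa using Finset.card_le_univ (supp c i t ∪ supp c i' t)
  have h3 := inter_le_one c hm h t
  omega

lemma equal_card_le (c : Fin (2 * r + 5) × Fin (11 * r + 1) → Fin r) (hm : MonoFree c)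
    {y z : Fin (2 * r + 5)} (h : y ≠ z) :
    ((univ : Finset (Fin (11 * r + 1))).filter fun j => c (y, j) = c (z, j)).card ≤ r := by
  have := Finset.card_le_card_of_injOn (f := fun j => c (y, j))
    (s := (univ : Finset (Fin (11 * r + 1))).filter fun j => c (y, j) = c (z, j))
    (t := (univ : Finset (Fin r))) (fun a _ => mem_univ _) ?_
  · simpa using this
  · intro j hj j' hj' hee
    by_contra hne
    simp only [coe_filter, Set.mem_setOf_eq, mem_univ, true_and] at hj hj'
    exact hm y z j j' (c (y, j)) h hne rfl hj.symm hee.symm (hj'.symm.trans hee.symm)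

lemma mixed_card_ge (c : Fin (2 * r + 5) × Fin (11 * r + 1) → Fin r) (hm : MonoFree c)
    {y z : Fin (2 * r + 5)} (h : y ≠ z) :
    10 * r + 1 ≤ (mixed c y z).card := by
  have h1 := Finset.card_filter_add_card_filter_not
    (s := (univ : Finset (Fin (11 * r + 1)))) (p := fun j => c (y, j) = c (z, j))
  have h2 := equal_card_le c hm h
  have h3 : (univ : Finset (Fin (11 * r + 1))).card = 11 * r + 1 := by simp
  have h4 : (mixed c y z).card = ((univ : Finset (Fin (11 * r + 1))).filter
      fun j => ¬ c (y, j) = c (z, j)).card := rfl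
  omega


lemma tri_step {α : Type*} {a b e u v : α} (hab : a ≠ b) (hae : a ≠ e) (hbe : b ≠ e)
    (huv : u ≠ v)
    (h0 : u = a ∨ u = b ∨ v = a ∨ v = b)
    (h1 : u = b ∨ u = e ∨ v = b ∨ v = e)
    (h2 : u = a ∨ u = e ∨ v = a ∨ v = e) :
    (u = a ∨ u = b ∨ u = e) ∧ (v = a ∨ v = b ∨ v = e) := by
  rcases h0 with h|h|h|h
  · subst h
    refine ⟨Or.inl rfl, ?_⟩
    rcases h1 with g|g|g|g
    exacts [absurd g hab, absurd g hae, Or.inr (Or.inl g), Or.inr (Or.inr g)]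
  · subst h
    refine ⟨Or.inr (Or.inl rfl), ?_⟩
    rcases h2 with g|g|g|g
    exacts [absurd g.symm hab, absurd g hbe, Or.inl g, Or.inr (Or.inr g)]
  · subst h
    refine ⟨?_, Or.inl rfl⟩
    rcases h1 with g|g|g|g
    exacts [Or.inr (Or.inl g), Or.inr (Or.inr g), absurd g hab, absurd g hae]
  · subst h
    refine ⟨?_, Or.inr (Or.inl rfl)⟩
    rcases h2 with g|g|g|g
    exacts [Or.inl g, Or.inr (Or.inr g), absurd g.symm hab, absurd g hbe]

lemma orPerm {p q s t : Prop} (h : q ∨ p ∨ t ∨ s) : p ∨ q ∨ s ∨ t := by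
  rcases h with h|h|h|h
  exacts [Or.inr (Or.inl h), Or.inl h, Or.inr (Or.inr (Or.inr h)), Or.inr (Or.inr (Or.inl h))]

lemma classify {β : Type*} {α : Type*} [DecidableEq α] (D : Finset β) (f g : β → α)
    (hfg : ∀ j ∈ D, f j ≠ g j)
    (hmeet : ∀ j ∈ D, ∀ j' ∈ D, j ≠ j' →
      f j = f j' ∨ f j = g j' ∨ g j = f j' ∨ g j = g j')
    (hne : D.Nonempty) :
    (∃ s, ∀ j ∈ D, f j = s ∨ g j = s) ∨
    (∃ T : Finset α, T.card = 3 ∧ ∀ j ∈ D, f j ∈ T ∧ g j ∈ T) := by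
  obtain ⟨j0, hj0⟩ := hne
  have hab : f j0 ≠ g j0 := hfg j0 hj0
  rcases Classical.em (∀ j ∈ D, f j = f j0 ∨ g j = f j0) with hA|hA
  · exact Or.inl ⟨f j0, hA⟩
  push_neg at hA
  obtain ⟨j1, hj1, hfa, hga⟩ := hA
  rcases Classical.em (∀ j ∈ D, f j = g j0 ∨ g j = g j0) with hB|hB
  · exact Or.inl ⟨g j0, hB⟩
  push_neg at hB
  obtain ⟨j2, hj2, hfb, hgb⟩ := hB
  have h01 : j0 ≠ j1 := by rintro rfl; exact hfa rfl
  have h02 : j0 ≠ j2 := by rintro rfl; exact hgb rfl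
  -- b = g j0 is a value of column j1
  have hb1 : f j1 = g j0 ∨ g j1 = g j0 := by
    rcases hmeet j0 hj0 j1 hj1 h01 with h|h|h|h
    · exact absurd h.symm hfa
    · exact absurd h.symm hga
    · exact Or.inl h.symm
    · exact Or.inr h.symm
  obtain ⟨e, hePair⟩ : ∃ e, (f j1 = g j0 ∧ g j1 = e) ∨ (f j1 = e ∧ g j1 = g j0) := by
    rcases hb1 with h|h
    · exact ⟨g j1, Or.inl ⟨h, rfl⟩⟩
    · exact ⟨f j1, Or.inr ⟨rfl, h⟩⟩
  have hea : e ≠ f j0 := by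
    rcases hePair with ⟨h1, h2⟩|⟨h1, h2⟩
    · exact h2 ▸ hga
    · exact h1 ▸ hfa
  have heb : e ≠ g j0 := by
    rcases hePair with ⟨h1, h2⟩|⟨h1, h2⟩
    · rw [← h2, ← h1]; exact (hfg j1 hj1).symm
    · rw [← h1, ← h2]; exact hfg j1 hj1
  have h12 : j1 ≠ j2 := by
    rintro rfl
    rcases hmeet j0 hj0 j1 hj1 h01 with h|h|h|h
    · exact hfa h.symm
    · exact hga h.symm
    · exact hfb h.symm
    · exact hgb h.symm
  -- a = f j0 is a value of column j2
  have ha2 : f j2 = f j0 ∨ g j2 = f j0 := by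
    rcases hmeet j0 hj0 j2 hj2 h02 with h|h|h|h
    · exact Or.inl h.symm
    · exact Or.inr h.symm
    · exact absurd h.symm hfb
    · exact absurd h.symm hgb
  -- e is a value of column j2
  have he2 : f j2 = e ∨ g j2 = e := by
    rcases hePair with ⟨h1, h2⟩|⟨h1, h2⟩ <;>
      rcases hmeet j1 hj1 j2 hj2 h12 with h|h|h|h
    · exact absurd (h1 ▸ h).symm hfb
    · exact absurd (h1 ▸ h).symm hgb
    · exact Or.inl (h2 ▸ h).symm
    · exact Or.inr (h2 ▸ h).symm
    · exact Or.inl (h1 ▸ h).symm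
    · exact Or.inr (h1 ▸ h).symm
    · exact absurd (h2 ▸ h).symm hfb
    · exact absurd (h2 ▸ h).symm hgb
  have hj2pair : (f j2 = f j0 ∧ g j2 = e) ∨ (f j2 = e ∧ g j2 = f j0) := by
    rcases ha2 with h|h <;> rcases he2 with h'|h'
    · exact absurd (h'.symm.trans h) hea
    · exact Or.inl ⟨h, h'⟩
    · exact Or.inr ⟨h', h⟩
    · exact absurd (h'.symm.trans h) hea
  refine Or.inr ⟨{f j0, g j0, e}, ?_, ?_⟩
  · exact Finset.card_eq_three.mpr ⟨f j0, g j0, e, hab, fun h => hea h.symm, fun h => heb h.symm, rfl⟩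
  intro j hj
  simp only [mem_insert, mem_singleton]
  by_cases hjj0 : j = j0
  · subst hjj0; exact ⟨Or.inl rfl, Or.inr (Or.inl rfl)⟩
  by_cases hjj1 : j = j1
  · subst hjj1
    rcases hePair with ⟨h1, h2⟩|⟨h1, h2⟩ <;> simp [h1, h2]
  by_cases hjj2 : j = j2
  · subst hjj2
    rcases hj2pair with ⟨h1, h2⟩|⟨h1, h2⟩ <;> simp [h1, h2]
  have m0 := hmeet j hj j0 hj0 hjj0
  have m1' := hmeet j hj j1 hj1 hjj1
  have m2' := hmeet j hj j2 hj2 hjj2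
  have m1 : f j = g j0 ∨ f j = e ∨ g j = g j0 ∨ g j = e := by
    rcases hePair with ⟨h1, h2⟩|⟨h1, h2⟩ <;> rw [h1, h2] at m1'
    · exact m1'
    · exact orPerm m1'
  have m2 : f j = f j0 ∨ f j = e ∨ g j = f j0 ∨ g j = e := by
    rcases hj2pair with ⟨h1, h2⟩|⟨h1, h2⟩ <;> rw [h1, h2] at m2'
    · exact m2'
    · exact orPerm m2'
  exact tri_step hab (fun h => hea h.symm) (fun h => heb h.symm) (hfg j hj) m0 m1 m2


lemma sum_bound (c : Fin (2 * r + 5) × Fin (11 * r + 1) → Fin r) (hm : MonoFree c)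
    (t : Fin r) (S : Finset (Fin (2 * r + 5))) :
    2 * (∑ i ∈ S, (supp c i t).card) + S.card ≤
      2 * ((S.biUnion fun i => supp c i t).card) + S.card * S.card := by
  classical
  induction S using Finset.induction_on with
  | empty => simp
  | @insert a S ha ih =>
    have h1 : (supp c a t ∩ S.biUnion fun i => supp c i t).card ≤ S.card := by
      have hsub : supp c a t ∩ S.biUnion (fun i => supp c i t) ⊆
          S.biUnion (fun i => supp c a t ∩ supp c i t) := by
        intro x hx
        simp only [mem_inter, mem_biUnion] at hx ⊢
        obtain ⟨hx1, i, hi, hx2⟩ := hx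
        exact ⟨i, hi, hx1, hx2⟩
      refine le_trans (card_le_card hsub) (le_trans card_biUnion_le ?_)
      calc ∑ i ∈ S, (supp c a t ∩ supp c i t).card ≤ ∑ i ∈ S, 1 := by
            refine Finset.sum_le_sum fun i hi => inter_le_one c hm (by rintro rfl; exact ha hi) t
        _ = S.card := by simp
    have h2 := Finset.card_union_add_card_inter (supp c a t) (S.biUnion fun i => supp c i t)
    have hU : ((insert a S).biUnion fun i => supp c i t)
        = supp c a t ∪ S.biUnion fun i => supp c i t := Finset.biUnion_insert ..
    rw [Finset.sum_insert ha, Finset.card_insert_of_notMem ha, hU]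
    have expand : (S.card + 1) * (S.card + 1) = S.card * S.card + 2 * S.card + 1 := by ring
    rw [expand]
    generalize S.card * S.card = kk at ih ⊢
    omega

lemma filter_mem_card_le (c : Fin (2 * r + 5) × Fin (11 * r + 1) → Fin r)
    (y : Fin (2 * r + 5)) (T : Finset (Fin r)) :
    ((univ : Finset (Fin (11 * r + 1))).filter fun j => c (y, j) ∈ T).card
      ≤ ∑ t ∈ T, (supp c y t).card := by
  classical
  have : ((univ : Finset (Fin (11 * r + 1))).filter fun j => c (y, j) ∈ T)
      = T.biUnion fun t => supp c y t := by
    ext j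
    simp [supp]
  rw [this]
  exact card_biUnion_le


def RainbowFree (c : Fin (2 * r + 5) × Fin (11 * r + 1) → Fin r) : Prop :=
  ∀ (y z : Fin (2 * r + 5)) (j j' : Fin (11 * r + 1)),
    y ≠ z → j ≠ j' → ¬ c (y, j) = c (z, j) → ¬ c (y, j') = c (z, j') →
    (c (y, j) = c (y, j') ∨ c (y, j) = c (z, j') ∨ c (z, j) = c (y, j') ∨ c (z, j) = c (z, j'))

-- Branch 1: every row has a (4r+1)-heavy colour → contradiction
lemma branch1 (hr : 4 ≤ r) (c : Fin (2 * r + 5) × Fin (11 * r + 1) → Fin r) (hm : MonoFree c)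
    (hall : ∀ i : Fin (2 * r + 5), ∃ t : Fin r, 4 * r + 1 ≤ (supp c i t).card) : False := by
  classical
  choose F hF using hall
  have hfib : ∀ t : Fin r, ((univ : Finset (Fin (2 * r + 5))).filter fun i => F i = t).card ≤ 2 := by
    intro t
    by_contra hgt
    push_neg at hgt
    obtain ⟨i1, i2, i3, h1, h2, h3, n12, n13, n23⟩ := Finset.two_lt_card_iff.mp hgt
    simp only [mem_filter, mem_univ, true_and] at h1 h2 h3
    have c1 : 4 * r + 1 ≤ (supp c i1 t).card := h1 ▸ hF i1
    have c2 : 4 * r + 1 ≤ (supp c i2 t).card := h2 ▸ hF i2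
    have c3 : 4 * r + 1 ≤ (supp c i3 t).card := h3 ▸ hF i3
    have u12 := Finset.card_union_add_card_inter (supp c i1 t) (supp c i2 t)
    have u3 := Finset.card_union_add_card_inter (supp c i1 t ∪ supp c i2 t) (supp c i3 t)
    have hd : ((supp c i1 t ∪ supp c i2 t) ∩ supp c i3 t).card
        ≤ (supp c i1 t ∩ supp c i3 t).card + (supp c i2 t ∩ supp c i3 t).card := by
      rw [Finset.union_inter_distrib_right]
      exact card_union_le _ _
    have b12 := inter_le_one c hm n12 t
    have b13 := inter_le_one c hm n13 t
    have b23 := inter_le_one c hm n23 t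
    have htot : (supp c i1 t ∪ supp c i2 t ∪ supp c i3 t).card ≤ 11 * r + 1 := by
      simpa using Finset.card_le_univ (supp c i1 t ∪ supp c i2 t ∪ supp c i3 t)
    omega
  have hcard := Finset.card_eq_sum_card_fiberwise
    (s := (univ : Finset (Fin (2 * r + 5)))) (t := (univ : Finset (Fin r))) (f := F)
    (fun i _ => mem_univ (F i))
  have hsum : ∑ t ∈ (univ : Finset (Fin r)),
      ((univ : Finset (Fin (2 * r + 5))).filter fun i => F i = t).card
      ≤ (univ : Finset (Fin r)).card * 2 := by
    simpa using Finset.sum_le_card_nsmul (univ : Finset (Fin r)) _ 2 (fun t _ => hfib t)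
  have e1 : (univ : Finset (Fin (2 * r + 5))).card = 2 * r + 5 := by simp
  have e2 : (univ : Finset (Fin r)).card = r := by simp
  omega

-- Branch 2: some row has all colour counts ≤ 4r → contradiction
lemma branch2 (hr : 4 ≤ r) (c : Fin (2 * r + 5) × Fin (11 * r + 1) → Fin r)
    (hm : MonoFree c) (hrb : RainbowFree c)
    (y : Fin (2 * r + 5)) (hy : ∀ t : Fin r, (supp c y t).card ≤ 4 * r) : False := by
  classical
  -- star/triangle dichotomy for each other row
  have hdich : ∀ z : Fin (2 * r + 5), z ≠ y →
      (∃ s, ∀ j ∈ mixed c y z, c (y, j) = s ∨ c (z, j) = s) ∨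
      (∃ T : Finset (Fin r), T.card = 3 ∧ ∀ j ∈ mixed c y z, c (y, j) ∈ T ∧ c (z, j) ∈ T) := by
    intro z hz
    refine classify (mixed c y z) (fun j => c (y, j)) (fun j => c (z, j)) ?_ ?_ ?_
    · intro j hj
      exact (mem_filter.mp hj).2
    · intro j hj j' hj' hjj
      exact hrb y z j j' (Ne.symm hz) hjj (mem_filter.mp hj).2 (mem_filter.mp hj').2
    · have := mixed_card_ge c hm (Ne.symm hz)
      exact Finset.card_pos.mp (by omega)
  -- star rows have unique centers
  have hstar_count : ∀ (z : Fin (2 * r + 5)) (s : Fin r), z ≠ y →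
      (∀ j ∈ mixed c y z, c (y, j) = s ∨ c (z, j) = s) → 6 * r + 1 ≤ (supp c z s).card := by
    intro z s hz hstar
    have hsub : mixed c y z ⊆ supp c y s ∪ supp c z s := by
      intro j hj
      rcases hstar j hj with h | h
      · exact mem_union_left _ (mem_filter.mpr ⟨mem_univ _, h⟩)
      · exact mem_union_right _ (mem_filter.mpr ⟨mem_univ _, h⟩)
    have h1 := mixed_card_ge c hm (Ne.symm hz)
    have h2 := card_le_card hsub
    have h3 := Finset.card_union_le (supp c y s) (supp c z s)
    have h4 := hy s
    omega
  -- the star predicate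
  set IsStar : Fin (2 * r + 5) → Prop :=
    fun z => ∃ s, ∀ j ∈ mixed c y z, c (y, j) = s ∨ c (z, j) = s with hIsStar
  set SP := (univ.erase y).filter IsStar with hSP
  set TP := (univ.erase y).filter (fun z => ¬ IsStar z) with hTP
  have hzero : (0 : ℕ) < r := by omega
  have hSPcard : SP.card ≤ r := by
    set F : Fin (2 * r + 5) → Fin r :=
      fun z => if h : IsStar z then h.choose else ⟨0, hzero⟩ with hFdef
    have hFspec : ∀ z, IsStar z → ∀ j ∈ mixed c y z, c (y, j) = F z ∨ c (z, j) = F z := by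
      intro z hz
      simp only [hFdef, dif_pos hz]
      exact hz.choose_spec
    have : SP.card ≤ (univ : Finset (Fin r)).card := by
      refine Finset.card_le_card_of_injOn F (fun a _ => mem_univ _) ?_
      intro z hz z' hz' hFe
      by_contra hne
      simp only [hSP, coe_filter, Set.mem_setOf_eq, mem_erase, mem_univ, and_true] at hz hz'
      have hc1 := hstar_count z (F z) hz.1 (hFspec z hz.2)
      have hc2 := hstar_count z' (F z') hz'.1 (hFspec z' hz'.2)
      rw [hFe] at hc1
      have := pair_bound c hm hne (F z')
      omega
    simpa using this
  have hTPcard : r + 4 ≤ TP.card := by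
    have hsplit := Finset.card_filter_add_card_filter_not
      (s := univ.erase y) (p := IsStar)
    have herase : (univ.erase y).card = 2 * r + 4 := by
      rw [Finset.card_erase_of_mem (mem_univ y)]
      simp
    rw [← hSP] at hsplit
    rw [← hTP] at hsplit
    omega
  -- triangle data
  have htri : ∀ z ∈ TP, ∃ T : Finset (Fin r), T.card = 3 ∧
      ∀ j ∈ mixed c y z, c (y, j) ∈ T ∧ c (z, j) ∈ T := by
    intro z hz
    simp only [hTP, mem_filter, mem_erase, mem_univ, and_true] at hz
    rcases hdich z hz.1 with h | h
    · exact absurd h hz.2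
    · exact h
  set G : Fin (2 * r + 5) → Finset (Fin r) :=
    fun z => if h : ∃ T : Finset (Fin r), T.card = 3 ∧
        ∀ j ∈ mixed c y z, c (y, j) ∈ T ∧ c (z, j) ∈ T then h.choose else ∅ with hGdef
  have hGspec : ∀ z ∈ TP, (G z).card = 3 ∧
      ∀ j ∈ mixed c y z, c (y, j) ∈ G z ∧ c (z, j) ∈ G z := by
    intro z hz
    have h := htri z hz
    simp only [hGdef, dif_pos h]
    exact h.choose_spec
  have hTPne : TP.Nonempty := Finset.card_pos.mp (by omega)
  obtain ⟨z0, hz0⟩ := hTPne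
  have hney : ∀ z ∈ TP, z ≠ y := by
    intro z hz
    simp only [hTP, mem_filter, mem_erase] at hz
    exact hz.1.1
  -- the filtered sets are big
  have hAz : ∀ w ∈ TP, 10 * r + 1 ≤
      ((univ : Finset (Fin (11 * r + 1))).filter fun j => c (y, j) ∈ G w).card := by
    intro w hw
    refine le_trans (mixed_card_ge c hm (Ne.symm (hney w hw))) (card_le_card ?_)
    intro j hj
    exact mem_filter.mpr ⟨mem_univ _, ((hGspec w hw).2 j hj).1⟩
  -- all triangles equal
  have hGeq : ∀ z ∈ TP, G z = G z0 := by
    intro z hz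
    by_contra hne
    have hintT : (G z ∩ G z0).card ≤ 2 := by
      by_contra hgt
      push_neg at hgt
      have hsub : G z ∩ G z0 ⊆ G z := inter_subset_left
      have h3 : (G z).card = 3 := (hGspec z hz).1
      have heq1 : G z ∩ G z0 = G z :=
        Finset.eq_of_subset_of_card_le hsub (by omega)
      have hsub2 : G z ⊆ G z0 := by rw [← heq1]; exact inter_subset_right
      have heq2 : G z = G z0 :=
        Finset.eq_of_subset_of_card_le hsub2
          (le_of_eq ((hGspec z0 hz0).1.trans (hGspec z hz).1.symm))
      exact hne heq2
    have h1 := Finset.card_union_add_card_inter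
      ((univ : Finset (Fin (11 * r + 1))).filter fun j => c (y, j) ∈ G z)
      ((univ : Finset (Fin (11 * r + 1))).filter fun j => c (y, j) ∈ G z0)
    have h2 : (((univ : Finset (Fin (11 * r + 1))).filter fun j => c (y, j) ∈ G z)
        ∪ ((univ : Finset (Fin (11 * r + 1))).filter fun j => c (y, j) ∈ G z0)).card
        ≤ 11 * r + 1 := by
      have := Finset.card_le_univ (((univ : Finset (Fin (11 * r + 1))).filter fun j => c (y, j) ∈ G z)
        ∪ ((univ : Finset (Fin (11 * r + 1))).filter fun j => c (y, j) ∈ G z0))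
      simpa using this
    have hinter : (((univ : Finset (Fin (11 * r + 1))).filter fun j => c (y, j) ∈ G z)
        ∩ ((univ : Finset (Fin (11 * r + 1))).filter fun j => c (y, j) ∈ G z0))
        = (univ : Finset (Fin (11 * r + 1))).filter fun j => c (y, j) ∈ G z ∩ G z0 := by
      ext j
      simp only [mem_inter, mem_filter, mem_univ, true_and, Finset.mem_inter]
    have hsmall : ((univ : Finset (Fin (11 * r + 1))).filter
        fun j => c (y, j) ∈ G z ∩ G z0).card ≤ 8 * r := by
      refine le_trans (filter_mem_card_le c y (G z ∩ G z0)) ?_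
      have := Finset.sum_le_card_nsmul (G z ∩ G z0) (fun t => (supp c y t).card) (4 * r)
        (fun t _ => hy t)
      have hle : (G z ∩ G z0).card • (4 * r) ≤ 2 * (4 * r) := by
        have : (G z ∩ G z0).card • (4 * r) = (G z ∩ G z0).card * (4 * r) := rfl
        rw [this]
        exact Nat.mul_le_mul_right _ hintT
      omega
    have hb1 := hAz z hz
    have hb2 := hAz z0 hz0
    rw [hinter] at h1
    omega
  -- final count
  set T := G z0 with hTdef
  set S : Finset (Fin (2 * r + 5)) := insert y TP with hSdef
  have hyTP : y ∉ TP := by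
    intro h
    exact (hney y h) rfl
  have hScard : S.card = TP.card + 1 := Finset.card_insert_of_notMem hyTP
  have hSle : S.card ≤ 2 * r + 5 := by
    simpa using Finset.card_le_univ S
  have hrow : ∀ i ∈ S, 10 * r + 1 ≤ ∑ t ∈ T, (supp c i t).card := by
    intro i hi
    rcases Finset.mem_insert.mp hi with h | h
    · subst h
      exact le_trans (hAz z0 hz0) (filter_mem_card_le c i T)
    · -- i ∈ TP : row i values on mixed are in G i = T
      have hGi := (hGspec i h).2
      have hsub : mixed c y i ⊆ (univ : Finset (Fin (11 * r + 1))).filter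
          fun j => c (i, j) ∈ T := by
        intro j hj
        refine mem_filter.mpr ⟨mem_univ _, ?_⟩
        have := (hGi j hj).2
        rwa [hGeq i h] at this
      refine le_trans (mixed_card_ge c hm (Ne.symm (hney i h))) ?_
      exact le_trans (card_le_card hsub) (filter_mem_card_le c i T)
  have hlow : S.card * (10 * r + 1) ≤ ∑ i ∈ S, ∑ t ∈ T, (supp c i t).card := by
    simpa using Finset.card_nsmul_le_sum S (fun i => ∑ t ∈ T, (supp c i t).card)
      (10 * r + 1) hrow
  have hswap : ∑ i ∈ S, ∑ t ∈ T, (supp c i t).card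
      = ∑ t ∈ T, ∑ i ∈ S, (supp c i t).card := Finset.sum_comm
  have hup : ∀ t ∈ T, 2 * (∑ i ∈ S, (supp c i t).card) + S.card
      ≤ 2 * (11 * r + 1) + S.card * S.card := by
    intro t _
    have h1 := sum_bound c hm t S
    have h2 : ((S.biUnion fun i => supp c i t)).card ≤ 11 * r + 1 := by
      have := Finset.card_le_univ (S.biUnion fun i => supp c i t)
      simpa using this
    omega
  have hfin : ∑ t ∈ T, (2 * (∑ i ∈ S, (supp c i t).card) + S.card)
      ≤ ∑ t ∈ T, (2 * (11 * r + 1) + S.card * S.card) := Finset.sum_le_sum hup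
  rw [Finset.sum_add_distrib, Finset.sum_const, ← Finset.mul_sum] at hfin
  rw [Finset.sum_const] at hfin
  have hT3 : T.card = 3 := (hGspec z0 hz0).1
  rw [hT3] at hfin
  simp only [smul_eq_mul] at hfin
  rw [← hswap] at hfin
  -- hfin : 2 * ΣΣ + 3 * S.card ≤ 3 * (2*(11r+1) + S.card*S.card)
  have hK1 : r + 5 ≤ S.card := by omega
  set K := S.card with hK
  have h2low : 2 * (K * (10 * r + 1)) ≤ 2 * ∑ i ∈ S, ∑ t ∈ T, (supp c i t).card :=
    Nat.mul_le_mul_left _ hlow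
  nlinarith [h2low, hfin, hK1, hSle, hr]


end GridLMR

theorem grid_large_mono_row
    (r : ℕ) (hr : 4 ≤ r)
    (c : Fin (2 * r + 5) × Fin (11 * r + 1) → Fin r)
    (hmono : ¬ ∃ (i i' : Fin (2 * r + 5)) (j j' : Fin (11 * r + 1)),
      i ≠ i' ∧ j ≠ j' ∧
      c (i, j) = c (i', j) ∧ c (i', j) = c (i, j') ∧ c (i, j') = c (i', j'))
    (hrainbow : ¬ ∃ (i i' : Fin (2 * r + 5)) (j j' : Fin (11 * r + 1)),
      i ≠ i' ∧ j ≠ j' ∧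
      c (i, j) ≠ c (i', j) ∧ c (i, j) ≠ c (i, j') ∧ c (i, j) ≠ c (i', j') ∧
      c (i', j) ≠ c (i, j') ∧ c (i', j) ≠ c (i', j') ∧ c (i, j') ≠ c (i', j')) :
    ∀ i : Fin (2 * r + 5), ∃ t : Fin r,
      10 * r + 1 ≤ (Finset.univ.filter fun j : Fin (11 * r + 1) => c (i, j) = t).card := by
  classical
  have hm : GridLMR.MonoFree c := by
    intro i i' j j' t hii hjj h1 h2 h3 h4
    exact hmono ⟨i, i', j, j', hii, hjj, h1.trans h2.symm, h2.trans h3.symm, h3.trans h4.symm⟩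
  have hrb : GridLMR.RainbowFree c := by
    intro y z j j' hyz hjj hd hd'
    by_contra h
    push_neg at h
    exact hrainbow ⟨y, z, j, j', hyz, hjj, hd, h.1, h.2.1, h.2.2.1, h.2.2.2, hd'⟩
  by_cases hall : ∀ i : Fin (2 * r + 5), ∃ t : Fin r, 4 * r + 1 ≤ (GridLMR.supp c i t).card
  · exact (GridLMR.branch1 hr c hm hall).elim
  · push_neg at hall
    obtain ⟨y, hy⟩ := hall
    exact (GridLMR.branch2 hr c hm hrb y (fun t => by have := hy t; omega)).elim
end

section
/- Let c : Fin 3 × Fin 12 → α be a coloring of the (3 × 12)-grid with colors in an arbitrary type α, and let t and t' be two colors such that every row has at most one point colored outside {t, t'}; that is, for every i ∈ Fin 3 the set {j : c(i,j) ≠ t ∧ c(i,j) ≠ t'} has at most one element. Then the grid contains a monochromatic grid rectangle: there exist i ≠ i' and j ≠ j' with c(i,j) = c(i',j) = c(i,j') = c(i',j'). -/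
theorem three_rows_two_colors_mono_rectangle
    {α : Type*} [DecidableEq α]
    (c : Fin 3 × Fin 12 → α) (t t' : α)
    (h : ∀ i : Fin 3,
      (Finset.univ.filter fun j : Fin 12 => c (i, j) ≠ t ∧ c (i, j) ≠ t').card ≤ 1) :
    ∃ (i i' : Fin 3) (j j' : Fin 12),
      i ≠ i' ∧ j ≠ j' ∧
      c (i, j) = c (i', j) ∧ c (i', j) = c (i, j') ∧ c (i, j') = c (i', j') := by
  classical
  set good : Finset (Fin 12) :=
    Finset.univ.filter (fun j => ∀ i : Fin 3, c (i, j) = t ∨ c (i, j) = t') with hgood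
  have hsub : goodᶜ ⊆ Finset.univ.biUnion
      (fun i : Fin 3 => Finset.univ.filter fun j : Fin 12 => c (i, j) ≠ t ∧ c (i, j) ≠ t') := by
    intro j hj
    simp only [hgood, Finset.mem_compl, Finset.mem_filter, Finset.mem_univ, true_and,
      not_forall] at hj
    obtain ⟨i, hi⟩ := hj
    push_neg at hi
    exact Finset.mem_biUnion.2 ⟨i, Finset.mem_univ i, by
      simp [Finset.mem_filter, hi.1, hi.2]⟩
  have hcompl : goodᶜ.card ≤ 3 := by
    calc goodᶜ.card ≤ _ := Finset.card_le_card hsub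
      _ ≤ ∑ i : Fin 3, (Finset.univ.filter fun j : Fin 12 =>
            c (i, j) ≠ t ∧ c (i, j) ≠ t').card := Finset.card_biUnion_le
      _ ≤ ∑ _i : Fin 3, 1 := Finset.sum_le_sum fun i _ => h i
      _ = 3 := by simp
  have hcard : 9 ≤ good.card := by
    have := Finset.card_compl_add_card good
    simp only [Fintype.card_fin] at this
    omega
  -- pigeonhole on column patterns
  have hlt : (Finset.univ : Finset (Fin 3 → Bool)).card * 1 < good.card := by
    simp only [mul_one, Finset.card_univ]
    have : Fintype.card (Fin 3 → Bool) = 8 := by simp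
    omega
  obtain ⟨p, -, hp⟩ := Finset.exists_lt_card_fiber_of_mul_lt_card_of_maps_to
    (f := fun j : Fin 12 => fun i : Fin 3 => decide (c (i, j) = t))
    (fun j _ => Finset.mem_univ _) hlt
  obtain ⟨j, hj, j', hj', hjj'⟩ := Finset.one_lt_card.1 hp
  simp only [Finset.mem_filter] at hj hj'
  have hpat : ∀ i : Fin 3, decide (c (i, j) = t) = decide (c (i, j') = t) := by
    intro i
    have := hj.2.trans hj'.2.symm
    exact congrFun this i
  -- pigeonhole on rows
  have : ¬ Function.Injective (fun i : Fin 3 => decide (c (i, j) = t)) := by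
    intro hinj
    have := Fintype.card_le_of_injective _ hinj
    simp at this
  rw [Function.not_injective_iff] at this
  obtain ⟨i, i', hii, hne⟩ := this
  have hgj : ∀ i : Fin 3, c (i, j) = t ∨ c (i, j) = t' := by
    have := hj.1; simp only [hgood, Finset.mem_filter] at this; exact this.2
  have hgj' : ∀ i : Fin 3, c (i, j') = t ∨ c (i, j') = t' := by
    have := hj'.1; simp only [hgood, Finset.mem_filter] at this; exact this.2
  have key : ∀ k : Fin 3, ∀ l : Fin 12, (∀ i, c (i, l) = t ∨ c (i, l) = t') →
      decide (c (k, l) = t) = decide (c (i, j) = t) → c (k, l) = c (i, j) := by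
    intro k l hgl hd
    by_cases hc : c (i, j) = t
    · have : decide (c (k, l) = t) = true := by rw [hd]; simpa using hc
      simp only [decide_eq_true_eq] at this
      rw [this, hc]
    · have : decide (c (k, l) = t) = false := by rw [hd]; simpa using hc
      simp only [decide_eq_false_iff_not] at this
      have h1 : c (k, l) = t' := (hgl k).resolve_left this
      have h2 : c (i, j) = t' := (hgj i).resolve_left hc
      rw [h1, h2]
  refine ⟨i, i', j, j', hne, hjj', ?_, ?_, ?_⟩
  · exact (key i' j hgj (by simpa using hii.symm)).symm
  · have e1 : c (i', j) = c (i, j) := key i' j hgj (by simpa using hii.symm)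
    have e2 : c (i, j') = c (i, j) := key i j' hgj' (hpat i).symm
    rw [e1, e2]
  · have e2 : c (i, j') = c (i, j) := key i j' hgj' (hpat i).symm
    have e3 : c (i', j') = c (i, j) := key i' j' hgj' (by rw [(hpat i').symm]; simpa using hii.symm)
    rw [e2, e3]
end
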